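/- arXiv:math/0006174 — 5 statements merged into one kernel-verified Lean document; each statement's English description precedes it below -/
import Mathlib

section
/- Fix a simple root α ∈ Δ and a positive integer k. If S(α,k) is nonempty, then S(α,k) has a lowest root and a highest root, and each is unique: there is a unique σ_k(α) ∈ S(α,k) such that β − σ_k(α) is a (possibly empty) nonnegative integer combination of simple roots for every β ∈ S(α,k), and a unique λ_k(α) ∈ S(α,k) such that λ_k(α) − β is a nonnegative integer combination of simple roots for every β ∈ S(α,k). -/
open scoped RealInnerProductSpace

attribute [local instance] Classical.propDecidable

noncomputable section

/-- The coroot `α∨ = (2/⟨α,α⟩) • α` of a vector `α` in a real inner product space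
(using the inner product to identify `V` with `V*`). -/
def coroot {V : Type*} [NormedAddCommGroup V] [InnerProductSpace ℝ V] (α : V) : V :=
  (2 / ⟪α, α⟫) • α

/-- A finite, reduced, irreducible, crystallographic root system in the real inner
product space `V`.  (The Weyl group automatically acts by isometries, since the
reflections are defined via the inner product.) -/
structure IsRootSystem {V : Type*} [NormedAddCommGroup V] [InnerProductSpace ℝ V]
    (R : Finset V) : Prop where
  nonempty : R.Nonempty
  zero_not_mem : (0 : V) ∉ R
  span_eq_top : Submodule.span ℝ (R : Set V) = ⊤
  reduced : ∀ α ∈ R, ∀ t : ℝ, t • α ∈ R → t = 1 ∨ t = -1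
  reflect_mem : ∀ α ∈ R, ∀ β ∈ R, β - ⟪β, coroot α⟫ • α ∈ R
  crystallographic : ∀ α ∈ R, ∀ β ∈ R, ∃ n : ℤ, ⟪β, coroot α⟫ = (n : ℝ)
  irreducible : ∀ S : Set V, (∀ α ∈ R, ∀ β ∈ R, α ∈ S → ⟪α, β⟫ ≠ 0 → β ∈ S) →
    (∃ α ∈ R, α ∈ S) → ∀ β ∈ R, β ∈ S

/-- `Δ` is a base of simple roots for the root system `R`: it is a linearly
independent subset of `R` and every root is a nonnegative or nonpositive integral
combination of elements of `Δ`. -/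
structure IsBase {V : Type*} [NormedAddCommGroup V] [InnerProductSpace ℝ V]
    (R Δ : Finset V) : Prop where
  subset : Δ ⊆ R
  indep : LinearIndependent ℝ (fun β : Δ => (β : V))
  expand : ∀ β ∈ R, (∃ c : V → ℕ, β = ∑ δ ∈ Δ, (c δ : ℝ) • δ) ∨
    (∃ c : V → ℕ, β = -(∑ δ ∈ Δ, (c δ : ℝ) • δ))
namespace Stmt3

variable {V : Type*} [NormedAddCommGroup V] [InnerProductSpace ℝ V]

lemma root_ne_zero {R : Finset V} (hR : IsRootSystem R) {β : V} (hβ : β ∈ R) : β ≠ 0 :=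
  fun h => hR.zero_not_mem (h ▸ hβ)

lemma inner_self_pos' {R : Finset V} (hR : IsRootSystem R) {β : V} (hβ : β ∈ R) :
    (0:ℝ) < ⟪β, β⟫ :=
  lt_of_le_of_ne real_inner_self_nonneg
    (Ne.symm ((@inner_self_ne_zero ℝ _ _ _ _ β).2 (root_ne_zero hR hβ)))

lemma inner_self_pos'' {x : V} (hx : x ≠ 0) : (0:ℝ) < ⟪x, x⟫ :=
  lt_of_le_of_ne real_inner_self_nonneg
    (Ne.symm ((@inner_self_ne_zero ℝ _ _ _ _ x).2 hx))

lemma inner_coroot_self {R : Finset V} (hR : IsRootSystem R) {β : V} (hβ : β ∈ R) :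
    ⟪β, coroot β⟫ = 2 := by
  have h := inner_self_pos' hR hβ
  rw [coroot, real_inner_smul_right]
  field_simp

lemma neg_mem {R : Finset V} (hR : IsRootSystem R) {β : V} (hβ : β ∈ R) : -β ∈ R := by
  have h := hR.reflect_mem β hβ β hβ
  rwa [inner_coroot_self hR hβ, two_smul, sub_add_eq_sub_sub, sub_sub_cancel_left] at h

/-- Lemma A : if two roots pair positively, they are equal or their difference is a root. -/
lemma sub_mem_of_inner_pos {R : Finset V} (hR : IsRootSystem R) {β γ : V}
    (hβ : β ∈ R) (hγ : γ ∈ R) (hpos : (0:ℝ) < ⟪β, γ⟫) : β = γ ∨ β - γ ∈ R := by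
  by_cases hpar : ∃ c : ℝ, γ = c • β
  · obtain ⟨c, rfl⟩ := hpar
    rcases hR.reduced β hβ c hγ with rfl | rfl
    · left; rw [one_smul]
    · exfalso
      rw [real_inner_smul_right] at hpos
      have := inner_self_pos' hR hβ
      nlinarith
  · -- strict Cauchy-Schwarz
    have hββ := inner_self_pos' hR hβ
    have hγγ := inner_self_pos' hR hγ
    have hcs : ⟪β, γ⟫ * ⟪β, γ⟫ < ⟪β, β⟫ * ⟪γ, γ⟫ := by
      have hne : ⟪β, β⟫ • γ - ⟪β, γ⟫ • β ≠ 0 := by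
        intro h
        apply hpar
        have h2 : ⟪β, β⟫ • γ = ⟪β, γ⟫ • β := by linear_combination (norm := module) h
        have h3 : γ = (⟪β, β⟫)⁻¹ • (⟪β, γ⟫ • β) := by rw [← h2, inv_smul_smul₀ hββ.ne']
        rw [smul_smul, ← div_eq_inv_mul] at h3
        exact ⟨⟪β, γ⟫ / ⟪β, β⟫, h3⟩
      have h2 : (0:ℝ) < ⟪⟪β, β⟫ • γ - ⟪β, γ⟫ • β, ⟪β, β⟫ • γ - ⟪β, γ⟫ • β⟫ :=
        inner_self_pos'' hne
      have hexp : ⟪⟪β, β⟫ • γ - ⟪β, γ⟫ • β, ⟪β, β⟫ • γ - ⟪β, γ⟫ • β⟫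
          = ⟪β, β⟫ * (⟪β, β⟫ * ⟪γ, γ⟫ - ⟪β, γ⟫ * ⟪β, γ⟫) := by
        rw [inner_sub_left, inner_sub_right, inner_sub_right, real_inner_smul_left,
          real_inner_smul_left, real_inner_smul_right, real_inner_smul_right,
          real_inner_smul_left, real_inner_smul_left, real_inner_smul_right,
          real_inner_smul_right, real_inner_comm γ β]
        ring
      rw [hexp] at h2
      nlinarith
    obtain ⟨m, hm⟩ := hR.crystallographic γ hγ β hβ
    obtain ⟨n, hn⟩ := hR.crystallographic β hβ γ hγ
    have hmval : ⟪β, coroot γ⟫ = 2 * ⟪β, γ⟫ / ⟪γ, γ⟫ := by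
      rw [coroot, real_inner_smul_right]; ring
    have hnval : ⟪γ, coroot β⟫ = 2 * ⟪β, γ⟫ / ⟪β, β⟫ := by
      rw [coroot, real_inner_smul_right, real_inner_comm γ β]; ring
    have hmpos : (0:ℝ) < (m:ℝ) := by
      rw [← hm, hmval]; positivity
    have hnpos : (0:ℝ) < (n:ℝ) := by
      rw [← hn, hnval]; positivity
    have hm1 : 1 ≤ m := by exact_mod_cast hmpos
    have hn1 : 1 ≤ n := by exact_mod_cast hnpos
    have hprod : ((m:ℝ)) * (n:ℝ) < 4 := by
      rw [← hm, ← hn, hmval, hnval]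
      rw [div_mul_div_comm]
      rw [div_lt_iff₀ (by positivity)]
      nlinarith
    have : m = 1 ∨ n = 1 := by
      by_contra h
      push_neg at h
      have hm2 : 2 ≤ m := by omega
      have hn2 : 2 ≤ n := by omega
      have : (4:ℝ) ≤ (m:ℝ) * n := by
        have : (2:ℝ) ≤ (m:ℝ) := by exact_mod_cast hm2
        have : (2:ℝ) ≤ (n:ℝ) := by exact_mod_cast hn2
        nlinarith
      linarith
    rcases this with rfl | rfl
    · right
      have h := hR.reflect_mem γ hγ β hβ
      rw [hm] at h
      push_cast at h
      rwa [one_smul] at h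
    · right
      have h := hR.reflect_mem β hβ γ hγ
      rw [hn] at h
      push_cast at h
      rw [one_smul] at h
      have := neg_mem hR h
      rwa [neg_sub] at this

end Stmt3
namespace Stmt3

variable {V : Type*} [NormedAddCommGroup V] [InnerProductSpace ℝ V] [FiniteDimensional ℝ V]

/-- Bundled context for the main argument. -/
structure Ctx (V : Type*) [NormedAddCommGroup V] [InnerProductSpace ℝ V]
    [FiniteDimensional ℝ V] where
  R : Finset V
  Δ : Finset V
  hR : IsRootSystem R
  hΔ : IsBase R Δ
  α : V
  hα : α ∈ Δ
  ϖv : V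
  hϖv : ∀ β ∈ Δ, ⟪β, ϖv⟫ = if β = α then 1 else 0
  t : ℝ
  ht : t ≠ 0

variable (C : Ctx V)

lemma Ctx.span_Δ : Submodule.span ℝ (↑C.Δ : Set V) = ⊤ := by
  rw [eq_top_iff, ← C.hR.span_eq_top]
  apply Submodule.span_le.2
  intro β hβ
  rcases C.hΔ.expand β hβ with ⟨c, hc⟩ | ⟨c, hc⟩
  · rw [hc]
    exact Submodule.sum_mem _ fun δ hδ => Submodule.smul_mem _ _ (Submodule.subset_span hδ)
  · rw [hc]
    exact Submodule.neg_mem _ <|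
      Submodule.sum_mem _ fun δ hδ => Submodule.smul_mem _ _ (Submodule.subset_span hδ)

/-- The simple roots as a basis. -/
noncomputable def Ctx.bas : Module.Basis C.Δ ℝ V :=
  Module.Basis.mk C.hΔ.indep (by
    show ⊤ ≤ Submodule.span ℝ (Set.range (Subtype.val : C.Δ → V))
    rw [Subtype.range_val]
    exact ge_of_eq C.span_Δ)

lemma Ctx.bas_apply (i : C.Δ) : C.bas i = ↑i := Module.Basis.mk_apply _ _ _

/-- Coordinates w.r.t. the simple roots. -/
noncomputable def Ctx.coord (v : V) (i : C.Δ) : ℝ := C.bas.repr v i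

lemma Ctx.coord_sum (f : V → ℝ) (i : C.Δ) : C.coord (∑ δ ∈ C.Δ, f δ • δ) i = f ↑i := by
  have h : (∑ δ ∈ C.Δ, f δ • δ) = ∑ j : C.Δ, (fun j : C.Δ => f ↑j) j • C.bas j := by
    rw [Finset.univ_eq_attach]
    rw [← Finset.sum_attach C.Δ (fun δ => f δ • δ)]
    exact Finset.sum_congr rfl fun j _ => by rw [C.bas_apply]
  rw [coord, h, C.bas.repr_sum_self]

lemma Ctx.sum_coord (v : V) : ∑ j : C.Δ, C.coord v j • (j : V) = v := by
  have := C.bas.sum_repr v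
  calc ∑ j : C.Δ, C.coord v j • (j : V) = ∑ j : C.Δ, C.bas.repr v j • C.bas j :=
        Finset.sum_congr rfl fun j _ => by rw [C.bas_apply]; rfl
    _ = v := C.bas.sum_repr v

lemma Ctx.coord_sub (x y : V) (i : C.Δ) : C.coord (x - y) i = C.coord x i - C.coord y i := by
  simp [coord]

lemma Ctx.coord_add (x y : V) (i : C.Δ) : C.coord (x + y) i = C.coord x i + C.coord y i := by
  simp [coord]

lemma Ctx.coord_neg (x : V) (i : C.Δ) : C.coord (-x) i = -C.coord x i := by
  simp [coord]

lemma Ctx.eq_of_coord_eq {x y : V} (h : ∀ i, C.coord x i = C.coord y i) : x = y := by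
  have : C.bas.repr x = C.bas.repr y := Finsupp.ext h
  exact C.bas.repr.injective this

/-- coordinates of a root are integers, all of one sign. -/
lemma Ctx.root_coord (hβ : β ∈ C.R) :
    (∀ i, ∃ n : ℕ, C.coord β i = (n:ℝ)) ∨ (∀ i, ∃ n : ℕ, C.coord β i = -(n:ℝ)) := by
  rcases C.hΔ.expand β hβ with ⟨c, hc⟩ | ⟨c, hc⟩
  · exact Or.inl fun i => ⟨c i, by rw [hc, C.coord_sum]⟩
  · refine Or.inr fun i => ⟨c i, ?_⟩
    have : β = -(∑ δ ∈ C.Δ, (fun δ => ((c δ : ℝ))) δ • δ) := hc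
    rw [this, C.coord_neg, C.coord_sum]

lemma Ctx.root_coord_int {β : V} (hβ : β ∈ C.R) (i : C.Δ) : ∃ n : ℤ, C.coord β i = (n:ℝ) := by
  rcases C.root_coord hβ with h | h
  · obtain ⟨n, hn⟩ := h i; exact ⟨n, by exact_mod_cast hn⟩
  · obtain ⟨n, hn⟩ := h i; exact ⟨-n, by rw [hn]; push_cast; ring⟩

/-- The inner product with the fundamental coweight computes the coordinate at `α`. -/
lemma Ctx.inner_ϖ (v : V) : ⟪v, C.ϖv⟫ = C.coord v ⟨C.α, C.hα⟩ := by
  conv_lhs => rw [← C.sum_coord v]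
  rw [sum_inner]
  have : ∀ j : C.Δ, j ∈ (Finset.univ : Finset C.Δ) →
      ⟪C.coord v j • (j:V), C.ϖv⟫ = C.coord v j * (if j = ⟨C.α, C.hα⟩ then 1 else 0) := by
    intro j _
    rw [real_inner_smul_left, C.hϖv _ j.2]
    congr 1
    by_cases h : (j:V) = C.α
    · rw [if_pos h, if_pos (Subtype.ext h)]
    · rw [if_neg h, if_neg (fun hh => h (by rw [hh]))]
  rw [Finset.sum_congr rfl this]
  simp

lemma Ctx.coord_simple {δ : V} (hδ : δ ∈ C.Δ) (i : C.Δ) :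
    C.coord δ i = if (i:V) = δ then 1 else 0 := by
  have hsum : (∑ x ∈ C.Δ, (fun x => if x = δ then (1:ℝ) else 0) x • x) = δ := by
    have : ∀ x ∈ C.Δ, (fun x => if x = δ then (1:ℝ) else 0) x • x
        = if x = δ then x else 0 := by
      intro x _
      by_cases h : x = δ <;> simp [h]
    rw [Finset.sum_congr rfl this, Finset.sum_ite_eq' C.Δ δ (fun x => x), if_pos hδ]
  conv_lhs => rw [← hsum]
  rw [C.coord_sum]

/-- distinct simple roots pair nonpositively. -/
lemma Ctx.simple_inner_nonpos {δ δ' : V} (hδ : δ ∈ C.Δ) (hδ' : δ' ∈ C.Δ) (hne : δ ≠ δ') :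
    ⟪δ, δ'⟫ ≤ 0 := by
  by_contra h
  push_neg at h
  rcases sub_mem_of_inner_pos C.hR (C.hΔ.subset hδ) (C.hΔ.subset hδ') h with heq | hmem
  · exact hne heq
  · have h1 : C.coord (δ - δ') ⟨δ, hδ⟩ = 1 := by
      rw [C.coord_sub, C.coord_simple hδ, C.coord_simple hδ']
      simp [hne]
    have h2 : C.coord (δ - δ') ⟨δ', hδ'⟩ = -1 := by
      rw [C.coord_sub, C.coord_simple hδ, C.coord_simple hδ']
      simp [Ne.symm hne]
    rcases C.root_coord hmem with hs | hs
    · obtain ⟨n, hn⟩ := hs ⟨δ', hδ'⟩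
      rw [h2] at hn
      have : (0:ℝ) ≤ n := Nat.cast_nonneg n
      linarith
    · obtain ⟨n, hn⟩ := hs ⟨δ, hδ⟩
      rw [h1] at hn
      have : (0:ℝ) ≤ n := Nat.cast_nonneg n
      linarith

end Stmt3
namespace Stmt3

variable {V : Type*} [NormedAddCommGroup V] [InnerProductSpace ℝ V] [FiniteDimensional ℝ V]
variable (C : Ctx V)

/-- The set `S(α,t)`. -/
noncomputable def Ctx.S : Finset V := C.R.filter (fun β => ⟪β, C.ϖv⟫ = C.t)

lemma Ctx.mem_S {β : V} : β ∈ C.S ↔ β ∈ C.R ∧ ⟪β, C.ϖv⟫ = C.t := Finset.mem_filter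

/-- The dominance order. -/
def Ctx.le' (x y : V) : Prop := ∃ c : V → ℕ, y - x = ∑ δ ∈ C.Δ, (c δ : ℝ) • δ

lemma Ctx.le'_refl (x : V) : C.le' x x :=
  ⟨fun _ => 0, by simp⟩

lemma Ctx.le'_trans {x y z : V} (h1 : C.le' x y) (h2 : C.le' y z) : C.le' x z := by
  obtain ⟨c, hc⟩ := h1
  obtain ⟨d, hd⟩ := h2
  refine ⟨c + d, ?_⟩
  have : z - x = (z - y) + (y - x) := by abel
  rw [this, hc, hd, ← Finset.sum_add_distrib]
  apply Finset.sum_congr rfl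
  intro δ _
  rw [Pi.add_apply, Nat.cast_add, add_smul, add_comm]

lemma Ctx.le'_coord {x y : V} (h : C.le' x y) (i : C.Δ) :
    ∃ n : ℕ, C.coord (y - x) i = (n:ℝ) := by
  obtain ⟨c, hc⟩ := h
  exact ⟨c ↑i, by rw [hc, C.coord_sum (fun δ => ((c δ : ℝ)))]⟩

lemma Ctx.coord_le' {x y : V} (h : ∀ i : C.Δ, ∃ n : ℕ, C.coord (y - x) i = (n:ℝ)) :
    C.le' x y := by
  classical
  refine ⟨fun v => if hv : v ∈ C.Δ then Classical.choose (h ⟨v, hv⟩) else 0, ?_⟩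
  conv_lhs => rw [← C.sum_coord (y - x)]
  rw [Finset.univ_eq_attach, ← Finset.sum_attach C.Δ
    (fun δ => ((if hv : δ ∈ C.Δ then (Classical.choose (h ⟨δ, hv⟩) : ℕ) else 0 : ℕ) : ℝ) • δ)]
  apply Finset.sum_congr rfl
  intro j _
  congr 1
  rw [dif_pos j.2]
  have := Classical.choose_spec (h ⟨(j:V), j.2⟩)
  exact this

lemma Ctx.le'_nonneg {x y : V} (h : C.le' x y) (i : C.Δ) : 0 ≤ C.coord (y - x) i := by
  obtain ⟨n, hn⟩ := C.le'_coord h i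
  rw [hn]; exact Nat.cast_nonneg n

lemma Ctx.le'_antisymm {x y : V} (h1 : C.le' x y) (h2 : C.le' y x) : x = y := by
  apply C.eq_of_coord_eq
  intro i
  have a1 := C.le'_nonneg h1 i
  have a2 := C.le'_nonneg h2 i
  rw [C.coord_sub] at a1 a2
  linarith

lemma Ctx.inner_simple_ϖ {δ : V} (hδ : δ ∈ C.Δ) (hne : δ ≠ C.α) : ⟪δ, C.ϖv⟫ = 0 := by
  rw [C.hϖv δ hδ, if_neg hne]

lemma Ctx.S_ne_simple {β δ : V} (hβ : β ∈ C.S) (hδ : δ ∈ C.Δ) (hne : δ ≠ C.α) :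
    β ≠ δ ∧ β ≠ -δ := by
  have hb := (C.mem_S.1 hβ).2
  have h0 := C.inner_simple_ϖ hδ hne
  constructor
  · rintro rfl
    rw [h0] at hb
    exact C.ht hb.symm
  · rintro rfl
    rw [inner_neg_left, h0, neg_zero] at hb
    exact C.ht hb.symm

lemma Ctx.add_simple_mem {β δ : V} (hβ : β ∈ C.S) (hδ : δ ∈ C.Δ) (hne : δ ≠ C.α)
    (hmem : β + δ ∈ C.R) : β + δ ∈ C.S := by
  rw [Ctx.mem_S]
  refine ⟨hmem, ?_⟩
  rw [inner_add_left, C.inner_simple_ϖ hδ hne, add_zero]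
  exact (C.mem_S.1 hβ).2

lemma Ctx.sub_simple_mem {β δ : V} (hβ : β ∈ C.S) (hδ : δ ∈ C.Δ) (hne : δ ≠ C.α)
    (hmem : β - δ ∈ C.R) : β - δ ∈ C.S := by
  rw [Ctx.mem_S]
  refine ⟨hmem, ?_⟩
  rw [inner_sub_left, C.inner_simple_ϖ hδ hne, sub_zero]
  exact (C.mem_S.1 hβ).2

/-- elements of S have coordinate `t` at `α`. -/
lemma Ctx.S_coord_α {β : V} (hβ : β ∈ C.S) : C.coord β ⟨C.α, C.hα⟩ = C.t := by
  rw [← C.inner_ϖ]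
  exact (C.mem_S.1 hβ).2

/-- no-up-move predicate. -/
def Ctx.NoUp (lam : V) : Prop := ∀ δ ∈ C.Δ, δ ≠ C.α → lam + δ ∉ C.R

lemma Ctx.noup_dominant {lam : V} (hlam : lam ∈ C.S) (h : C.NoUp lam) :
    ∀ δ ∈ C.Δ, δ ≠ C.α → 0 ≤ ⟪lam, δ⟫ := by
  intro δ hδ hne
  by_contra hneg
  push_neg at hneg
  have hpos : (0:ℝ) < ⟪lam, -δ⟫ := by rw [inner_neg_right]; linarith
  have hnδ : -δ ∈ C.R := neg_mem C.hR (C.hΔ.subset hδ)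
  rcases sub_mem_of_inner_pos C.hR (C.mem_S.1 hlam).1 hnδ hpos with heq | hmem
  · exact (C.S_ne_simple hlam hδ hne).2 heq
  · rw [sub_neg_eq_add] at hmem
    exact h δ hδ hne hmem

/-- climbing: every element of S is below some no-up-move element of S. -/
lemma Ctx.climb {β : V} (hβ : β ∈ C.S) :
    ∃ lam ∈ C.S, C.le' β lam ∧ C.NoUp lam := by
  classical
  suffices H : ∀ (n : ℕ) (β : V), β ∈ C.S →
      (C.S.filter (fun x => C.le' β x ∧ x ≠ β)).card = n →
      ∃ lam ∈ C.S, C.le' β lam ∧ C.NoUp lam by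
    exact H _ β hβ rfl
  clear hβ β
  intro n
  induction n using Nat.strong_induction_on with
  | _ n ih =>
    intro β hβ hn
    by_cases hup : C.NoUp β
    · exact ⟨β, hβ, C.le'_refl β, hup⟩
    · rw [Ctx.NoUp] at hup
      push_neg at hup
      obtain ⟨δ, hδ, hne, hmem⟩ := hup
      have hβδ : β + δ ∈ C.S := C.add_simple_mem hβ hδ hne hmem
      have hle : C.le' β (β + δ) := by
        refine ⟨fun v => if v = δ then 1 else 0, ?_⟩
        rw [add_sub_cancel_left]
        have : ∀ x ∈ C.Δ, (((if x = δ then 1 else 0 : ℕ)) : ℝ) • x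
            = if x = δ then x else 0 := by
          intro x _
          by_cases h : x = δ <;> simp [h]
        rw [Finset.sum_congr rfl this, Finset.sum_ite_eq' C.Δ δ (fun x => x), if_pos hδ]
      have hδne0 : δ ≠ 0 := root_ne_zero C.hR (C.hΔ.subset hδ)
      have hβne : β + δ ≠ β := by
        intro h
        exact hδne0 (by linear_combination (norm := module) h)
      -- measure decreases
      have hsub : (C.S.filter (fun x => C.le' (β + δ) x ∧ x ≠ (β + δ)))
          ⊂ (C.S.filter (fun x => C.le' β x ∧ x ≠ β)) := by
        constructor
        · intro x hx
          rw [Finset.mem_filter] at hx ⊢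
          obtain ⟨hx1, hx2, hx3⟩ := hx
          refine ⟨hx1, C.le'_trans hle hx2, ?_⟩
          intro hxβ
          rw [hxβ] at hx2
          -- le' (β+δ) β is impossible
          have h0 := C.le'_nonneg hx2 ⟨δ, hδ⟩
          have heq : β - (β + δ) = -δ := by abel
          rw [heq, C.coord_neg, C.coord_simple hδ] at h0
          norm_num at h0
        · intro hall
          have hin : β + δ ∈ C.S.filter (fun x => C.le' β x ∧ x ≠ β) := by
            rw [Finset.mem_filter]
            exact ⟨hβδ, hle, hβne⟩
          have := hall hin
          rw [Finset.mem_filter] at this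
          exact this.2.2 rfl
      obtain ⟨lam, hlam, hlle, hlup⟩ := ih _ (hn ▸ Finset.card_lt_card hsub) (β + δ) hβδ rfl
      exact ⟨lam, hlam, C.le'_trans hle hlle, hlup⟩

end Stmt3
namespace Stmt3

variable {V : Type*} [NormedAddCommGroup V] [InnerProductSpace ℝ V] [FiniteDimensional ℝ V]
variable (C : Ctx V)

lemma Ctx.le'_self_add {x δ : V} (hδ : δ ∈ C.Δ) : C.le' x (x + δ) := by
  refine ⟨fun v => if v = δ then 1 else 0, ?_⟩
  rw [add_sub_cancel_left]
  have : ∀ y ∈ C.Δ, (((if y = δ then 1 else 0 : ℕ)) : ℝ) • y = if y = δ then y else 0 := by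
    intro y _
    by_cases h : y = δ <;> simp [h]
  rw [Finset.sum_congr rfl this, Finset.sum_ite_eq' C.Δ δ (fun x => x), if_pos hδ]

/-- a no-up-move element has nothing strictly above it in S. -/
lemma Ctx.noup_top {lam : V} (hlam : lam ∈ C.S) (hup : C.NoUp lam) :
    ∀ γ ∈ C.S, C.le' lam γ → γ = lam := by
  classical
  suffices H : ∀ (n : ℕ) (γ : V), γ ∈ C.S → C.le' lam γ →
      (C.S.filter (fun x => C.le' lam x ∧ C.le' x γ)).card = n → γ = lam by
    intro γ hγ hle
    exact H _ γ hγ hle rfl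
  intro n
  induction n using Nat.strong_induction_on with
  | _ n ih =>
    intro γ hγ hle hn
    by_cases hγlam : γ = lam
    · exact hγlam
    exfalso
    obtain ⟨c, hc⟩ := hle
    -- c α = 0
    have hcα : c C.α = 0 := by
      have h1 : C.coord (γ - lam) ⟨C.α, C.hα⟩ = c C.α := by
        rw [hc]; exact C.coord_sum (fun δ => ((c δ : ℝ))) _
      have h2 : C.coord (γ - lam) ⟨C.α, C.hα⟩ = 0 := by
        rw [C.coord_sub, C.S_coord_α hγ, C.S_coord_α hlam, sub_self]
      rw [h2] at h1
      exact_mod_cast h1.symm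
    -- inner products
    have hM0 : γ - lam ≠ 0 := sub_ne_zero.2 hγlam
    have hMM : (0:ℝ) < ⟪γ - lam, γ - lam⟫ := inner_self_pos'' hM0
    have hlamM : (0:ℝ) ≤ ⟪lam, γ - lam⟫ := by
      rw [hc, inner_sum]
      apply Finset.sum_nonneg
      intro δ hδ
      rw [real_inner_smul_right]
      by_cases hδα : δ = C.α
      · rw [hδα, hcα]; simp
      · have := C.noup_dominant hlam hup δ hδ hδα
        positivity
    have hγM : (0:ℝ) < ⟪γ, γ - lam⟫ := by
      have : ⟪γ, γ - lam⟫ = ⟪γ - lam, γ - lam⟫ + ⟪lam, γ - lam⟫ := by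
        rw [← inner_add_left]; norm_num
      rw [this]; linarith
    -- find δ with c δ > 0 and ⟪γ, δ⟫ > 0
    have hsum : (0:ℝ) < ∑ δ ∈ C.Δ, (c δ : ℝ) * ⟪γ, δ⟫ := by
      have he : ⟪γ, γ - lam⟫ = ∑ δ ∈ C.Δ, (c δ : ℝ) * ⟪γ, δ⟫ := by
        rw [real_inner_comm, hc, sum_inner]
        apply Finset.sum_congr rfl
        intro δ _
        rw [real_inner_smul_left, real_inner_comm]
      linarith [he ▸ hγM]
    obtain ⟨δ, hδΔ, hδpos⟩ : ∃ δ ∈ C.Δ, (0:ℝ) < (c δ : ℝ) * ⟪γ, δ⟫ := by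
      by_contra hno
      push_neg at hno
      have : ∑ δ ∈ C.Δ, (c δ : ℝ) * ⟪γ, δ⟫ ≤ 0 := Finset.sum_nonpos hno
      linarith
    have hcδ : 0 < c δ := by
      rcases Nat.eq_zero_or_pos (c δ) with h | h
      · rw [h] at hδpos; norm_num at hδpos
      · exact h
    have hγδ : (0:ℝ) < ⟪γ, δ⟫ := by
      rcases lt_trichotomy (⟪γ, δ⟫ : ℝ) 0 with h | h | h
      · exfalso
        have hc0 : (0:ℝ) < (c δ : ℝ) := by exact_mod_cast hcδ
        nlinarith
      · rw [h] at hδpos; norm_num at hδpos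
      · exact h
    have hδα : δ ≠ C.α := by
      rintro rfl
      rw [hcα] at hcδ; exact Nat.lt_irrefl 0 hcδ
    -- γ - δ is a root in S
    have hγδR : γ - δ ∈ C.R := by
      rcases sub_mem_of_inner_pos C.hR (C.mem_S.1 hγ).1 (C.hΔ.subset hδΔ) hγδ with heq | h
      · exact absurd heq (C.S_ne_simple hγ hδΔ hδα).1
      · exact h
    have hγδS : γ - δ ∈ C.S := C.sub_simple_mem hγ hδΔ hδα hγδR
    -- lam ≤ γ - δ
    have hle1 : C.le' lam (γ - δ) := by
      refine ⟨fun v => if v = δ then c δ - 1 else c v, ?_⟩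
      have key : ∀ x ∈ C.Δ, (((if x = δ then c δ - 1 else c x : ℕ)) : ℝ) • x
          = (c x : ℝ) • x - (if x = δ then (1:ℝ) else 0) • x := by
        intro x _
        by_cases h : x = δ
        · subst h
          rw [if_pos rfl, if_pos rfl]
          have : ((c x - 1 : ℕ) : ℝ) = (c x : ℝ) - 1 := by
            have : 1 ≤ c x := hcδ
            push_cast [this]
            ring
          rw [this, sub_smul, one_smul]
        · rw [if_neg h, if_neg h, zero_smul, sub_zero]
      rw [Finset.sum_congr rfl key, Finset.sum_sub_distrib]
      have : ∑ x ∈ C.Δ, (if x = δ then (1:ℝ) else 0) • x = δ := by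
        have h2 : ∀ x ∈ C.Δ, (if x = δ then (1:ℝ) else 0) • x = if x = δ then x else 0 := by
          intro x _
          by_cases h : x = δ <;> simp [h]
        rw [Finset.sum_congr rfl h2, Finset.sum_ite_eq' C.Δ δ (fun x => x), if_pos hδΔ]
      rw [this, ← hc]
      abel
    have hle2 : C.le' (γ - δ) γ := by
      have := C.le'_self_add (x := γ - δ) hδΔ
      rwa [sub_add_cancel] at this
    -- measure decreases
    have hsubset : (C.S.filter (fun x => C.le' lam x ∧ C.le' x (γ - δ)))
        ⊂ (C.S.filter (fun x => C.le' lam x ∧ C.le' x γ)) := by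
      constructor
      · intro x hx
        rw [Finset.mem_filter] at hx ⊢
        exact ⟨hx.1, hx.2.1, C.le'_trans hx.2.2 hle2⟩
      · intro hall
        have hin : γ ∈ C.S.filter (fun x => C.le' lam x ∧ C.le' x γ) := by
          rw [Finset.mem_filter]
          exact ⟨hγ, ⟨c, hc⟩, C.le'_refl γ⟩
        have := hall hin
        rw [Finset.mem_filter] at this
        have hbad := this.2.2
        have h0 := C.le'_nonneg hbad ⟨δ, hδΔ⟩
        have heq : (γ - δ) - γ = -δ := by abel
        rw [heq, C.coord_neg, C.coord_simple hδΔ] at h0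
        norm_num at h0
    have hlast := ih _ (hn ▸ Finset.card_lt_card hsubset) (γ - δ) hγδS hle1 rfl
    -- then γ = lam + δ ∈ R contradicts NoUp
    have : lam + δ = γ := by rw [← hlast]; abel
    exact hup δ hδΔ hδα (this ▸ (C.mem_S.1 hγ).1)

end Stmt3
namespace Stmt3

variable {V : Type*} [NormedAddCommGroup V] [InnerProductSpace ℝ V] [FiniteDimensional ℝ V]
variable (C : Ctx V)

/-- a vector in the span of `Δ \ {α}` pairing nonnegatively with each of them is a
nonnegative combination. -/
lemma Ctx.dominant_combo {v : V}
    (hv : v ∈ Submodule.span ℝ (↑(C.Δ.erase C.α) : Set V))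
    (hdom : ∀ δ ∈ C.Δ.erase C.α, (0:ℝ) ≤ ⟪v, δ⟫) :
    ∃ c : V → ℝ, (∀ x, 0 ≤ c x) ∧ v = ∑ δ ∈ C.Δ.erase C.α, c δ • δ := by
  classical
  obtain ⟨f, -, hf⟩ := Submodule.mem_span_finset.1 hv
  set E := C.Δ.erase C.α with hE
  set Pos := E.filter (fun δ => 0 ≤ f δ) with hPos
  set Neg := E.filter (fun δ => ¬ 0 ≤ f δ) with hNeg
  set P : V := ∑ δ ∈ Pos, f δ • δ with hP
  set N : V := ∑ δ ∈ Neg, (-(f δ)) • δ with hN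
  have hvPN : v = P - N := by
    rw [← hf, ← Finset.sum_filter_add_sum_filter_not E (fun δ => 0 ≤ f δ), ← hPos, ← hNeg]
    have hNneg : ∑ δ ∈ Neg, f δ • δ = -N := by
      rw [hN, ← Finset.sum_neg_distrib]
      apply Finset.sum_congr rfl
      intro x _
      rw [neg_smul, neg_neg]
    rw [hNneg, ← hP, sub_eq_add_neg]
  have hvN : (0:ℝ) ≤ ⟪v, N⟫ := by
    rw [hN, inner_sum]
    apply Finset.sum_nonneg
    intro δ hδ
    rw [real_inner_smul_right]
    have h1 : δ ∈ E := Finset.mem_of_mem_filter δ hδ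
    have h2 : ¬ 0 ≤ f δ := (Finset.mem_filter.1 hδ).2
    have := hdom δ h1
    nlinarith [le_of_not_ge h2]
  have hPN : ⟪P, N⟫ ≤ 0 := by
    rw [hP, sum_inner]
    apply Finset.sum_nonpos
    intro δ hδ
    rw [real_inner_smul_left, hN, inner_sum]
    rw [Finset.mul_sum]
    apply Finset.sum_nonpos
    intro δ' hδ'
    rw [real_inner_smul_right]
    have h1 : 0 ≤ f δ := (Finset.mem_filter.1 hδ).2
    have h2 : ¬ 0 ≤ f δ' := (Finset.mem_filter.1 hδ').2
    have hne : δ ≠ δ' := by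
      rintro rfl; exact h2 h1
    have h3 : ⟪δ, δ'⟫ ≤ 0 :=
      C.simple_inner_nonpos (Finset.mem_of_mem_erase (Finset.mem_of_mem_filter δ hδ))
        (Finset.mem_of_mem_erase (Finset.mem_of_mem_filter δ' hδ')) hne
    have h4 : 0 ≤ f δ * (-f δ') := mul_nonneg h1 (by linarith [lt_of_not_ge h2])
    nlinarith
  have hNN : ⟪N, N⟫ ≤ (0:ℝ) := by
    have : ⟪v, N⟫ = ⟪P, N⟫ - ⟪N, N⟫ := by rw [hvPN, inner_sub_left]
    linarith
  have hN0 : N = 0 := real_inner_self_nonpos.1 hNN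
  refine ⟨fun x => max (f x) 0, fun x => le_max_right _ _, ?_⟩
  have : ∑ δ ∈ E, max (f δ) 0 • δ = P := by
    rw [hP, ← Finset.sum_filter_add_sum_filter_not E (fun δ => 0 ≤ f δ), ← hPos, ← hNeg]
    have e1 : ∑ δ ∈ Pos, max (f δ) 0 • δ = ∑ δ ∈ Pos, f δ • δ := by
      apply Finset.sum_congr rfl
      intro x hx
      rw [max_eq_left (Finset.mem_filter.1 hx).2]
    have e2 : ∑ δ ∈ Neg, max (f δ) 0 • δ = 0 := by
      apply Finset.sum_eq_zero
      intro x hx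
      rw [max_eq_right (le_of_lt (lt_of_not_ge (Finset.mem_filter.1 hx).2)), zero_smul]
    rw [e1, e2, add_zero]
  rw [this, hvPN, hN0, sub_zero]

/-- two no-up-move elements of S pair positively. -/
lemma Ctx.noup_inner_pos {lam lam' : V} (h1 : lam ∈ C.S) (h2 : lam' ∈ C.S)
    (hu1 : C.NoUp lam) (hu2 : C.NoUp lam') : (0:ℝ) < ⟪lam, lam'⟫ := by
  classical
  set K : Submodule ℝ V := Submodule.span ℝ (↑(C.Δ.erase C.α) : Set V) with hK
  -- the decomposition lam = proj + d with d = t • (α - proj α)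
  have hdec : ∀ μ : V, μ ∈ C.S →
      μ - (Submodule.orthogonalProjection K μ : V) = C.t • (C.α - (Submodule.orthogonalProjection K C.α : V)) := by
    intro μ hμ
    have hμK : μ - C.t • C.α ∈ K := by
      have hsum := C.sum_coord μ
      have hsplit : μ = C.coord μ ⟨C.α, C.hα⟩ • C.α
          + ∑ j ∈ (Finset.univ : Finset C.Δ).erase ⟨C.α, C.hα⟩, C.coord μ j • (j:V) := by
        rw [← Finset.add_sum_erase _ _ (Finset.mem_univ (⟨C.α, C.hα⟩ : C.Δ))] at hsum
        exact hsum.symm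
      rw [C.S_coord_α hμ] at hsplit
      have : μ - C.t • C.α
          = ∑ j ∈ (Finset.univ : Finset C.Δ).erase ⟨C.α, C.hα⟩, C.coord μ j • (j:V) := by
        exact sub_eq_of_eq_add' hsplit
      rw [this]
      apply Submodule.sum_mem
      intro j hj
      apply Submodule.smul_mem
      apply Submodule.subset_span
      rw [Finset.mem_coe, Finset.mem_erase]
      have hjne := (Finset.mem_erase.1 hj).1
      exact ⟨fun h => hjne (Subtype.ext h), j.2⟩
    have hproj : (Submodule.orthogonalProjection K μ : V)
        = (μ - C.t • C.α) + C.t • (Submodule.orthogonalProjection K C.α : V) := by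
      have : μ = (μ - C.t • C.α) + C.t • C.α := by abel
      conv_lhs => rw [this]
      rw [map_add, map_smul]
      push_cast
      congr 1
      rw [show ((Submodule.orthogonalProjection K (μ - C.t • C.α) : V)) = μ - C.t • C.α from
        Submodule.starProjection_eq_self_iff.2 hμK]
    rw [hproj, smul_sub]
    module
  -- α is not in K
  have hαK : C.α ∉ K := by
    intro hmem
    have hind := C.hΔ.indep
    have hni := hind.notMem_span_image (s := {j : C.Δ | (j : V) ≠ C.α})
      (x := ⟨C.α, C.hα⟩) (by simp)
    apply hni
    have hle : K ≤ Submodule.span ℝ ((fun β : C.Δ => (β : V)) '' {j : C.Δ | (j : V) ≠ C.α}) := by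
      apply Submodule.span_le.2
      intro x hx
      rw [Finset.mem_coe, Finset.mem_erase] at hx
      apply Submodule.subset_span
      exact ⟨⟨x, hx.2⟩, hx.1, rfl⟩
    exact hle hmem
  -- d ≠ 0
  have hd0 : C.t • (C.α - (Submodule.orthogonalProjection K C.α : V)) ≠ 0 := by
    intro h
    rcases smul_eq_zero.1 h with h | h
    · exact C.ht h
    · apply hαK
      rw [sub_eq_zero] at h
      rw [h]
      exact (Submodule.orthogonalProjection K C.α).2
  set d : V := C.t • (C.α - (Submodule.orthogonalProjection K C.α : V)) with hd
  have hdperp : d ∈ Kᗮ := by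
    have : lam - (Submodule.orthogonalProjection K lam : V) ∈ Kᗮ :=
      Submodule.sub_starProjection_mem_orthogonal (K := K) lam
    rw [hdec lam h1] at this
    exact this
  -- dominance of projections
  have hdomproj : ∀ μ : V, μ ∈ C.S → C.NoUp μ → ∀ δ ∈ C.Δ.erase C.α,
      (0:ℝ) ≤ ⟪(Submodule.orthogonalProjection K μ : V), δ⟫ := by
    intro μ hμ hμup δ hδ
    have hδK : δ ∈ K := Submodule.subset_span hδ
    have h0 : ⟪μ - (Submodule.orthogonalProjection K μ : V), δ⟫ = 0 :=
      Submodule.starProjection_inner_eq_zero μ δ hδK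
    have hδΔ := Finset.mem_of_mem_erase hδ
    have hδα := (Finset.mem_erase.1 hδ).1
    have := C.noup_dominant hμ hμup δ hδΔ hδα
    rw [inner_sub_left] at h0
    linarith
  -- projection of lam' is a nonneg combo
  obtain ⟨c, hc0, hcsum⟩ := C.dominant_combo (v := (Submodule.orthogonalProjection K lam' : V))
    (Submodule.orthogonalProjection K lam').2 (hdomproj lam' h2 hu2)
  -- ⟪proj lam, proj lam'⟫ ≥ 0
  have hprojs : (0:ℝ) ≤ ⟪(Submodule.orthogonalProjection K lam : V), (Submodule.orthogonalProjection K lam' : V)⟫ := by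
    rw [hcsum, inner_sum]
    apply Finset.sum_nonneg
    intro δ hδ
    rw [real_inner_smul_right]
    have := hdomproj lam h1 hu1 δ hδ
    nlinarith [hc0 δ]
  -- decompose the inner product
  have hlam : lam = (Submodule.orthogonalProjection K lam : V) + d := by
    rw [← hdec lam h1]; abel
  have hlam' : lam' = (Submodule.orthogonalProjection K lam' : V) + d := by
    rw [← hdec lam' h2]; abel
  have hdd : (0:ℝ) < ⟪d, d⟫ := inner_self_pos'' hd0
  have hcross1 : ⟪(Submodule.orthogonalProjection K lam : V), d⟫ = 0 :=
    hdperp _ (Submodule.orthogonalProjection K lam).2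
  have hcross2 : ⟪d, (Submodule.orthogonalProjection K lam' : V)⟫ = 0 := by
    rw [real_inner_comm]
    exact hdperp _ (Submodule.orthogonalProjection K lam').2
  rw [hlam, hlam', inner_add_left, inner_add_right, inner_add_right]
  rw [hcross1, hcross2]
  linarith

/-- uniqueness of no-up-move elements. -/
lemma Ctx.noup_unique {lam lam' : V} (h1 : lam ∈ C.S) (h2 : lam' ∈ C.S)
    (hu1 : C.NoUp lam) (hu2 : C.NoUp lam') : lam = lam' := by
  by_contra hne
  have hpos := C.noup_inner_pos h1 h2 hu1 hu2
  rcases sub_mem_of_inner_pos C.hR (C.mem_S.1 h1).1 (C.mem_S.1 h2).1 hpos with heq | hmem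
  · exact hne heq
  · rcases C.hΔ.expand _ hmem with ⟨c, hc⟩ | ⟨c, hc⟩
    · have hle : C.le' lam' lam := ⟨c, hc⟩
      exact hne (C.noup_top h2 hu2 lam h1 hle)
    · have hle : C.le' lam lam' := by
        refine ⟨c, ?_⟩
        have : lam' - lam = -(lam - lam') := by abel
        rw [this, hc, neg_neg]
      exact hne (C.noup_top h1 hu1 lam' h2 hle).symm

/-- Main lemma: S has a maximum. -/
lemma Ctx.exists_max (hS : C.S.Nonempty) :
    ∃ lam ∈ C.S, ∀ β ∈ C.S, C.le' β lam := by
  obtain ⟨β₀, hβ₀⟩ := hS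
  obtain ⟨lam, hlam, _, hup⟩ := C.climb hβ₀
  refine ⟨lam, hlam, ?_⟩
  intro β hβ
  obtain ⟨lamβ, hlamβ, hleβ, hupβ⟩ := C.climb hβ
  rwa [C.noup_unique hlamβ hlam hupβ hup] at hleβ

end Stmt3

/-- For a simple root `α` and positive integer `k`, if
`S(α,k) = {β ∈ R : ⟨β,ϖ_α∨⟩ = k}` is nonempty then it has a unique lowest root and
a unique highest root. -/
theorem statement_3 {V : Type*} [NormedAddCommGroup V] [InnerProductSpace ℝ V]
    [FiniteDimensional ℝ V]
    (R Δ : Finset V) (hR : IsRootSystem R) (hΔ : IsBase R Δ)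
    (α : V) (hα : α ∈ Δ) (k : ℕ) (hk : 1 ≤ k)
    -- the fundamental coweight `ϖ_α∨`
    (ϖv : V) (hϖv : ∀ β ∈ Δ, ⟪β, ϖv⟫ = if β = α then 1 else 0)
    (hS : (R.filter fun β => ⟪β, ϖv⟫ = (k : ℝ)).Nonempty) :
    (∃! σ₀, σ₀ ∈ R.filter (fun β => ⟪β, ϖv⟫ = (k : ℝ)) ∧
        ∀ β ∈ R.filter (fun β => ⟪β, ϖv⟫ = (k : ℝ)),
          ∃ c : V → ℕ, β - σ₀ = ∑ δ ∈ Δ, (c δ : ℝ) • δ) ∧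
    (∃! lam, lam ∈ R.filter (fun β => ⟪β, ϖv⟫ = (k : ℝ)) ∧
        ∀ β ∈ R.filter (fun β => ⟪β, ϖv⟫ = (k : ℝ)),
          ∃ c : V → ℕ, lam - β = ∑ δ ∈ Δ, (c δ : ℝ) • δ) := by
  have hk0 : ((k : ℝ)) ≠ 0 := by
    have : (0:ℝ) < (k:ℝ) := by exact_mod_cast hk
    linarith
  have hk0' : (-(k : ℝ)) ≠ 0 := by
    intro h
    exact hk0 (by linarith [neg_eq_zero.1 h])
  set C : Stmt3.Ctx V := ⟨R, Δ, hR, hΔ, α, hα, ϖv, hϖv, (k:ℝ), hk0⟩ with hC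
  set C' : Stmt3.Ctx V := ⟨R, Δ, hR, hΔ, α, hα, ϖv, hϖv, -(k:ℝ), hk0'⟩ with hC'
  have hCS : C.S = R.filter (fun β => ⟪β, ϖv⟫ = (k : ℝ)) := rfl
  have hCS' : C'.S = R.filter (fun β => ⟪β, ϖv⟫ = (-(k : ℝ))) := rfl
  constructor
  · -- minimum, via the maximum of the negated set
    have hS' : C'.S.Nonempty := by
      obtain ⟨β, hβ⟩ := hS
      rw [Finset.mem_filter] at hβ
      refine ⟨-β, ?_⟩
      rw [hCS', Finset.mem_filter]
      exact ⟨Stmt3.neg_mem hR hβ.1, by rw [inner_neg_left, hβ.2]⟩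
    obtain ⟨mu, hmu, hmax'⟩ := C'.exists_max hS'
    rw [hCS', Finset.mem_filter] at hmu
    refine ⟨-mu, ⟨?_, ?_⟩, ?_⟩
    · rw [Finset.mem_filter]
      refine ⟨Stmt3.neg_mem hR hmu.1, ?_⟩
      rw [inner_neg_left, hmu.2, neg_neg]
    · intro β hβ
      rw [Finset.mem_filter] at hβ
      have hβ' : -β ∈ C'.S := by
        rw [hCS', Finset.mem_filter]
        exact ⟨Stmt3.neg_mem hR hβ.1, by rw [inner_neg_left, hβ.2]⟩
      obtain ⟨c, hc⟩ := hmax' (-β) hβ'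
      refine ⟨c, ?_⟩
      rw [← hc]
      abel
    · rintro y ⟨hy1, hy2⟩
      -- y is also a minimum; antisymmetry
      have h1 : C.le' y (-mu) := by
        obtain ⟨c, hc⟩ := hy2 (-mu) (by
          rw [Finset.mem_filter]
          exact ⟨Stmt3.neg_mem hR hmu.1, by rw [inner_neg_left, hmu.2, neg_neg]⟩)
        exact ⟨c, hc⟩
      have h2 : C.le' (-mu) y := by
        obtain ⟨c, hc⟩ := hmax' (-y) (by
          rw [hCS', Finset.mem_filter]
          rw [Finset.mem_filter] at hy1
          exact ⟨Stmt3.neg_mem hR hy1.1, by rw [inner_neg_left, hy1.2]⟩)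
        refine ⟨c, ?_⟩
        rw [← hc]
        abel
      exact C.le'_antisymm h1 h2
  · -- maximum
    obtain ⟨lam, hlam, hmax⟩ := C.exists_max (by rw [hCS]; exact hS)
    refine ⟨lam, ⟨by rw [← hCS]; exact hlam, ?_⟩, ?_⟩
    · intro β hβ
      exact hmax β (by rw [hCS]; exact hβ)
    · rintro y ⟨hy1, hy2⟩
      have h1 : C.le' y lam := hmax y (by rw [hCS]; exact hy1)
      have h2 : C.le' lam y := hy2 lam (by rw [← hCS]; exact hlam)
      exact (C.le'_antisymm h2 h1).symm
end
end

section
/- For a simple root α ∈ Δ and a positive integer k, the set S(α,k) is nonempty if and only if 1 ≤ k ≤ h_α, where h_α is the coefficient of α in the highest root α̃. -/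
/-!
Let `ϖ` be the fundamental coweight of `α`, so that `⟪β, ϖ⟫` is the `α`-coefficient of `β`.
Since `α̃ - β` is a nonnegative combination of simple roots for every root `β`, no root has
`α`-coefficient larger than `h_α`. Conversely, a positive root `β` with `α`-coefficient at least
`2` has positive inner product with some simple root `δ`, so `β - δ` is again a root; its
`α`-coefficient drops by at most one and is still positive, so `β - δ` is a positive root of
smaller height. Descending from `α̃` in this way hits every value between `1` and `h_α`.
-/

open scoped RealInnerProductSpace

attribute [local instance] Classical.propDecidable

noncomputable section

section

variable {V : Type*} [NormedAddCommGroup V] [InnerProductSpace ℝ V]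

lemma inner_coroot (x y : V) : ⟪x, coroot y⟫ = 2 / ⟪y, y⟫ * ⟪x, y⟫ :=
  real_inner_smul_right _ _ _

lemma inner_sum_smul_eq_of_dual {Δ : Finset V} {α ϖ : V} (hα : α ∈ Δ)
    (hϖ : ∀ β ∈ Δ, ⟪β, ϖ⟫ = if β = α then 1 else 0) (c : V → ℝ) :
    ⟪∑ δ ∈ Δ, c δ • δ, ϖ⟫ = c α := by
  rw [sum_inner, Finset.sum_eq_single_of_mem α hα, real_inner_smul_left, hϖ α hα, if_pos rfl,
    mul_one]
  intro δ hδ hne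
  rw [real_inner_smul_left, hϖ δ hδ, if_neg hne, mul_zero]

lemma exists_mem_inner_pos_of_eq_sum {Δ : Finset V} {β : V} (hβ : β ≠ 0) (c : V → ℝ)
    (hc : ∀ δ ∈ Δ, 0 ≤ c δ) (hβc : β = ∑ δ ∈ Δ, c δ • δ) : ∃ δ ∈ Δ, 0 < ⟪β, δ⟫ := by
  by_contra! hneg
  have : ⟪β, β⟫ ≤ 0 := by
    nth_rw 2 [hβc]
    rw [inner_sum]
    refine Finset.sum_nonpos fun δ hδ => ?_
    rw [real_inner_smul_right]
    exact mul_nonpos_of_nonneg_of_nonpos (hc δ hδ) (hneg δ hδ)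
  exact hβ (real_inner_self_nonpos.mp this)

namespace IsRootSystem

variable {R : Finset V} (hR : IsRootSystem R)
include hR

lemma ne_zero {α : V} (hα : α ∈ R) : α ≠ 0 :=
  fun h => hR.zero_not_mem (h ▸ hα)

lemma neg_mem {α : V} (hα : α ∈ R) : -α ∈ R := by
  have h := hR.reflect_mem α hα α hα
  have hαα : ⟪α, α⟫ ≠ 0 := real_inner_self_pos.mpr (hR.ne_zero hα) |>.ne'
  rwa [inner_coroot, div_mul_cancel₀ _ hαα, two_smul, sub_add_cancel_left] at h

-- Strict Cauchy–Schwarz, as distinct roots are never positive multiples of each other.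
lemma inner_lt_norm_mul_norm {α β : V} (hα : α ∈ R) (hβ : β ∈ R) (hne : α ≠ β) :
    ⟪α, β⟫ < ‖α‖ * ‖β‖ := by
  refine (real_inner_le_norm α β).lt_of_ne fun heq => ?_
  have hnorm : ‖α‖ * ‖β‖ ≠ 0 :=
    mul_ne_zero (norm_ne_zero_iff.mpr (hR.ne_zero hα)) (norm_ne_zero_iff.mpr (hR.ne_zero hβ))
  obtain ⟨-, r, hr, rfl⟩ :=
    (real_inner_div_norm_mul_norm_eq_one_iff α β).mp (by rw [heq, div_self hnorm])
  rcases hR.reduced α hα r hβ with rfl | rfl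
  · exact hne (one_smul ℝ α).symm
  · norm_num at hr

lemma sub_mem_of_inner_pos {α β : V} (hα : α ∈ R) (hβ : β ∈ R) (hpos : 0 < ⟪α, β⟫)
    (hne : α ≠ β) : α - β ∈ R := by
  obtain ⟨a, ha⟩ := hR.crystallographic β hβ α hα
  obtain ⟨b, hb⟩ := hR.crystallographic α hα β hβ
  have hαα := real_inner_self_pos.mpr (hR.ne_zero hα)
  have hββ := real_inner_self_pos.mpr (hR.ne_zero hβ)
  rw [inner_coroot] at ha hb
  rw [real_inner_comm α β] at hb
  have ha1 : 1 ≤ a := by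
    have : (0 : ℝ) < a := by rw [← ha]; positivity
    exact_mod_cast this
  have hb1 : 1 ≤ b := by
    have : (0 : ℝ) < b := by rw [← hb]; positivity
    exact_mod_cast this
  -- `a * b = 4 cos² ∠(α, β) < 4`
  have hab : a * b < 4 := by
    have hCS : ⟪α, β⟫ * ⟪α, β⟫ < ⟪α, α⟫ * ⟪β, β⟫ := by
      rw [real_inner_self_eq_norm_mul_norm, real_inner_self_eq_norm_mul_norm]
      nlinarith [hR.inner_lt_norm_mul_norm hα hβ hne]
    have : (a : ℝ) * b < 4 := by
      rw [← ha, ← hb, show 2 / ⟪β, β⟫ * ⟪α, β⟫ * (2 / ⟪α, α⟫ * ⟪α, β⟫)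
        = 4 * (⟪α, β⟫ * ⟪α, β⟫) / (⟪α, α⟫ * ⟪β, β⟫) by field_simp; ring,
        div_lt_iff₀ (by positivity)]
      linarith
    exact_mod_cast this
  obtain rfl | rfl : a = 1 ∨ b = 1 := by
    by_contra! h
    nlinarith [lt_of_le_of_ne ha1 (Ne.symm h.1), lt_of_le_of_ne hb1 (Ne.symm h.2)]
  · have h := hR.reflect_mem β hβ α hα
    rwa [inner_coroot, ha, Int.cast_one, one_smul] at h
  · have h := hR.reflect_mem α hα β hβ
    rw [inner_coroot, real_inner_comm α β, hb, Int.cast_one, one_smul] at h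
    rw [← neg_sub]
    exact hR.neg_mem h

end IsRootSystem

lemma IsBase.coeff_eq_of_sum_eq {R Δ : Finset V} (hΔ : IsBase R Δ) {c c' : V → ℝ}
    (h : ∑ δ ∈ Δ, c δ • δ = ∑ δ ∈ Δ, c' δ • δ) {δ : V} (hδ : δ ∈ Δ) : c δ = c' δ := by
  have hzero : ∑ γ : Δ, (c γ - c' γ) • (γ : V) = 0 := by
    rw [Finset.sum_coe_sort Δ fun γ => (c γ - c' γ) • γ]
    simp only [sub_smul, Finset.sum_sub_distrib, h, sub_self]
  exact sub_eq_zero.mp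
    (linearIndependent_iff'.mp hΔ.indep _ _ hzero ⟨δ, hδ⟩ (Finset.mem_univ _))

variable {R Δ : Finset V} {α ϖ : V}

lemma exists_root_sub_simple (hR : IsRootSystem R) (hΔ : IsBase R Δ) (hα : α ∈ Δ)
    (hϖ : ∀ β ∈ Δ, ⟪β, ϖ⟫ = if β = α then 1 else 0) {β : V} (hβ : β ∈ R) {c : V → ℕ}
    (hc : β = ∑ δ ∈ Δ, (c δ : ℝ) • δ) (hcα : 2 ≤ c α) :
    ∃ β' ∈ R, ∃ c' : V → ℕ, β' = ∑ δ ∈ Δ, (c' δ : ℝ) • δ ∧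
      ∑ δ ∈ Δ, c' δ < ∑ δ ∈ Δ, c δ ∧ c α ≤ c' α + 1 := by
  obtain ⟨δ, hδ, hβδ⟩ :=
    exists_mem_inner_pos_of_eq_sum (hR.ne_zero hβ) _ (fun _ _ => Nat.cast_nonneg _) hc
  have hβϖ : ⟪β, ϖ⟫ = c α := by rw [hc, inner_sum_smul_eq_of_dual hα hϖ]
  have hδϖ : ⟪δ, ϖ⟫ ≤ 1 := by rw [hϖ δ hδ]; split_ifs <;> norm_num
  have hcα' : (2 : ℝ) ≤ c α := by exact_mod_cast hcα
  have hne : β ≠ δ := by rintro rfl; linarith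
  have hsub : β - δ ∈ R := hR.sub_mem_of_inner_pos hβ (hΔ.subset hδ) hβδ hne
  have hsubϖ : 1 ≤ ⟪β - δ, ϖ⟫ := by rw [inner_sub_left]; linarith
  rcases hΔ.expand _ hsub with ⟨c', hc'⟩ | ⟨c', hc'⟩
  swap
  · rw [hc', inner_neg_left, inner_sum_smul_eq_of_dual hα hϖ] at hsubϖ
    linarith [(c' α).cast_nonneg (α := ℝ)]
  refine ⟨β - δ, hsub, c', hc', ?_⟩
  have hcoeff : ∀ γ ∈ Δ, c γ = c' γ + (Pi.single δ 1 : V → ℕ) γ := by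
    intro γ hγ
    have hsum : ∑ γ ∈ Δ, (c γ : ℝ) • γ =
        ∑ γ ∈ Δ, ((c' γ + (Pi.single δ 1 : V → ℕ) γ : ℕ) : ℝ) • γ := by
      simp only [Nat.cast_add, add_smul, Finset.sum_add_distrib, ← hc, ← hc']
      simp [Pi.single_apply, hδ]
    exact_mod_cast hΔ.coeff_eq_of_sum_eq hsum hγ
  rw [Finset.sum_congr rfl hcoeff, Finset.sum_add_distrib, hcoeff α hα]
  simp only [Pi.single_apply, Finset.sum_ite_eq', if_pos hδ]
  split_ifs <;> omega

lemma exists_root_inner_eq_of_le (hR : IsRootSystem R) (hΔ : IsBase R Δ) (hα : α ∈ Δ)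
    (hϖ : ∀ β ∈ Δ, ⟪β, ϖ⟫ = if β = α then 1 else 0) {k : ℕ} (hk : 1 ≤ k) {β : V} (hβ : β ∈ R)
    {c : V → ℕ} (hc : β = ∑ δ ∈ Δ, (c δ : ℝ) • δ) (hkc : k ≤ c α) : ∃ γ ∈ R, ⟪γ, ϖ⟫ = k := by
  induction hn : ∑ δ ∈ Δ, c δ using Nat.strong_induction_on generalizing β c with
  | _ n ih =>
    rcases hkc.eq_or_lt with rfl | hlt
    · exact ⟨β, hβ, by rw [hc, inner_sum_smul_eq_of_dual hα hϖ]⟩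
    obtain ⟨β', hβ', c', hc', hsum, hcα⟩ := exists_root_sub_simple hR hΔ hα hϖ hβ hc (by omega)
    exact ih _ (hn ▸ hsum) hβ' hc' (by omega) rfl

lemma inner_le_of_sub_eq_sum (hα : α ∈ Δ)
    (hϖ : ∀ β ∈ Δ, ⟪β, ϖ⟫ = if β = α then 1 else 0) {θ β : V} {c : V → ℕ}
    (hc : θ - β = ∑ δ ∈ Δ, (c δ : ℝ) • δ) : ⟪β, ϖ⟫ ≤ ⟪θ, ϖ⟫ := by
  have h : ⟪θ - β, ϖ⟫ = c α := by rw [hc, inner_sum_smul_eq_of_dual hα hϖ]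
  rw [inner_sub_left] at h
  linarith [(c α).cast_nonneg (α := ℝ)]

end

theorem statement_4_general {V : Type*} [NormedAddCommGroup V] [InnerProductSpace ℝ V]
    (R Δ : Finset V) (hR : IsRootSystem R) (hΔ : IsBase R Δ)
    -- `θ = α̃` is the highest root, with coefficients `h_β`
    (θ : V) (hθR : θ ∈ R)
    (hθhigh : ∀ β ∈ R, ∃ c : V → ℕ, θ - β = ∑ δ ∈ Δ, (c δ : ℝ) • δ)
    (h : V → ℕ)
    (hh : θ = ∑ δ ∈ Δ, (h δ : ℝ) • δ)
    (α : V) (hα : α ∈ Δ) (k : ℕ) (hk : 1 ≤ k)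
    -- the fundamental coweight `ϖ_α∨`
    (ϖv : V) (hϖv : ∀ β ∈ Δ, ⟪β, ϖv⟫ = if β = α then 1 else 0) :
    (R.filter fun β => ⟪β, ϖv⟫ = (k : ℝ)).Nonempty ↔ k ≤ h α := by
  have hθϖ : ⟪θ, ϖv⟫ = h α := by rw [hh, inner_sum_smul_eq_of_dual hα hϖv]
  constructor
  · rintro ⟨β, hβ⟩
    obtain ⟨hβR, hβϖ⟩ := Finset.mem_filter.mp hβ
    obtain ⟨c, hc⟩ := hθhigh β hβR
    have hle := inner_le_of_sub_eq_sum hα hϖv hc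
    rw [hβϖ, hθϖ] at hle
    exact_mod_cast hle
  · intro hkh
    obtain ⟨γ, hγR, hγ⟩ := exists_root_inner_eq_of_le hR hΔ hα hϖv hk hθR hh hkh
    exact ⟨γ, Finset.mem_filter.mpr ⟨hγR, hγ⟩⟩

/-- For a simple root `α` and a positive integer `k`, the set
`S(α,k)` is nonempty if and only if `1 ≤ k ≤ h_α`. -/
theorem statement_4 {V : Type*} [NormedAddCommGroup V] [InnerProductSpace ℝ V]
    [FiniteDimensional ℝ V]
    (R Δ : Finset V) (hR : IsRootSystem R) (hΔ : IsBase R Δ)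
    -- `θ = α̃` is the highest root, with coefficients `h_β`
    (θ : V) (hθR : θ ∈ R)
    (hθhigh : ∀ β ∈ R, ∃ c : V → ℕ, θ - β = ∑ δ ∈ Δ, (c δ : ℝ) • δ)
    (h : V → ℕ)
    (hh : θ = ∑ δ ∈ Δ, (h δ : ℝ) • δ) (hhpos : ∀ δ ∈ Δ, 0 < h δ)
    (α : V) (hα : α ∈ Δ) (k : ℕ) (hk : 1 ≤ k)
    -- the fundamental coweight `ϖ_α∨`
    (ϖv : V) (hϖv : ∀ β ∈ Δ, ⟪β, ϖv⟫ = if β = α then 1 else 0) :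
    (R.filter fun β => ⟪β, ϖv⟫ = (k : ℝ)).Nonempty ↔ k ≤ h α :=
  statement_4_general R Δ hR hΔ θ hθR hθhigh h hh α hα k hk ϖv hϖv
end
end

section
/- Fix α ∈ Δ and suppose S(α,k) ≠ ∅. Let R' ⊆ R be the subroot system of roots lying in the real span of Δ∖{α}, let w₀' be the unique element of its Weyl group W(R') ⊆ W with w₀'(Δ∖{α}) = −(Δ∖{α}), and let τ be the linear map on V induced by the permutation of Δ fixing α and sending β ∈ Δ∖{α} to −w₀'(β). Then: (i) w₀'(σ_k(α)) = λ_k(α); (ii) λ_1(α∨) = (λ_1(α))∨, where λ_1(α∨) is the highest coroot with α∨-coefficient 1 in the dual root system R∨; (iii) σ_k(α) = k·λ_1(α) − τ(λ_k(α)) + k·α, and likewise σ_k(α)∨ = k'·λ_1(α∨) − τ(λ_k(α)∨) + k'·α∨, where k' is the coefficient of α∨ in λ_k(α)∨. -/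
open scoped RealInnerProductSpace

attribute [local instance] Classical.propDecidable

noncomputable section

namespace S5


variable {V : Type*} [NormedAddCommGroup V] [InnerProductSpace ℝ V]

/-- the reflection in `β` -/
def sref (β x : V) : V := x - ⟪x, coroot β⟫ • β

lemma inner_coroot (x β : V) : ⟪x, coroot β⟫ = 2 / ⟪β, β⟫ * ⟪x, β⟫ := by
  simp [coroot, real_inner_smul_right]

lemma inner_self_pos' {x : V} (hx : x ≠ 0) : (0:ℝ) < ⟪x, x⟫ :=
  lt_of_le_of_ne real_inner_self_nonneg (fun h => hx (inner_self_eq_zero.mp h.symm))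

lemma sref_add (β x y : V) : sref β (x + y) = sref β x + sref β y := by
  simp only [sref, inner_add_left, add_smul]; abel

lemma sref_smul (β : V) (a : ℝ) (x : V) : sref β (a • x) = a • sref β x := by
  simp only [sref, real_inner_smul_left, smul_sub, smul_smul]

lemma sref_inner (β x y : V) : ⟪sref β x, sref β y⟫ = ⟪x, y⟫ := by
  rcases eq_or_ne β 0 with h | h
  · simp [sref, h, coroot]
  · have hs : ⟪β, β⟫ ≠ (0:ℝ) := fun hh => h (inner_self_eq_zero.mp hh)
    simp only [sref, inner_sub_left, inner_sub_right, real_inner_smul_left,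
      real_inner_smul_right, inner_coroot]
    rw [real_inner_comm β x, real_inner_comm β y]
    field_simp
    ring

lemma sref_sref (β x : V) : sref β (sref β x) = x := by
  rcases eq_or_ne β 0 with h | h
  · simp [sref, h, coroot]
  · have hs : ⟪β, β⟫ ≠ (0:ℝ) := fun hh => h (inner_self_eq_zero.mp hh)
    simp only [sref, inner_sub_left, real_inner_smul_left, inner_coroot, sub_smul, smul_smul]
    have h2 : 2 / ⟪β, β⟫ * (2 / ⟪β, β⟫ * ⟪x, β⟫ * ⟪β, β⟫) = 2 * (2 / ⟪β, β⟫ * ⟪x, β⟫) := by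
      field_simp
    rw [h2]
    module

lemma sref_coroot (β x : V) : coroot (sref β x) = sref β (coroot x) := by
  have h1 : ⟪sref β x, sref β x⟫ = ⟪x, x⟫ := sref_inner β x x
  rw [coroot, h1, show coroot x = (2 / ⟪x, x⟫) • x from rfl, sref_smul]


/-! ### foldr of reflections -/

/-- apply a word of reflections -/
def F (l : List V) (v : V) : V := l.foldr (fun β x => x - ⟪x, coroot β⟫ • β) v

lemma F_eq (l : List V) (v : V) : F l v = l.foldr sref v := rfl

@[simp] lemma F_nil (v : V) : F ([] : List V) v = v := rfl

@[simp] lemma F_cons (β : V) (l : List V) (v : V) : F (β :: l) v = sref β (F l v) := rfl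

lemma F_append (l₁ l₂ : List V) (v : V) : F (l₁ ++ l₂) v = F l₁ (F l₂ v) :=
  List.foldr_append

lemma F_add (l : List V) (x y : V) : F l (x + y) = F l x + F l y := by
  induction l with
  | nil => rfl
  | cons β t ih => simp [ih, sref_add]

lemma F_smul (l : List V) (a : ℝ) (x : V) : F l (a • x) = a • F l x := by
  induction l with
  | nil => rfl
  | cons β t ih => simp [ih, sref_smul]

lemma F_inner (l : List V) (x y : V) : ⟪F l x, F l y⟫ = ⟪x, y⟫ := by
  induction l with
  | nil => rfl
  | cons β t ih => simp [sref_inner, ih]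

lemma F_coroot (l : List V) (x : V) : coroot (F l x) = F l (coroot x) := by
  induction l with
  | nil => rfl
  | cons β t ih => simp [sref_coroot, ih]

lemma F_rev (l : List V) (x : V) : F l.reverse (F l x) = x := by
  induction l generalizing x with
  | nil => rfl
  | cons β t ih =>
    rw [F_cons, List.reverse_cons, F_append]
    show F t.reverse (sref β (sref β (F t x))) = x
    rw [sref_sref, ih]

lemma F_mem_span (l : List V) (M : Submodule ℝ V) (hl : ∀ β ∈ l, β ∈ M) (x : V) :
    F l x - x ∈ M := by
  induction l with
  | nil => simpa using M.zero_mem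
  | cons β t ih =>
    have h1 : sref β (F t x) - x = (F t x - x) - ⟪F t x, coroot β⟫ • β := by
      simp [sref]; abel
    rw [F_cons, h1]
    exact sub_mem (ih (fun γ hγ => hl γ (List.mem_cons_of_mem _ hγ)))
      (M.smul_mem _ (hl β (List.mem_cons_self)))

lemma F_level (l : List V) (ϖv : V) (hl : ∀ β ∈ l, ⟪β, ϖv⟫ = 0) (x : V) :
    ⟪F l x, ϖv⟫ = ⟪x, ϖv⟫ := by
  induction l with
  | nil => rfl
  | cons β t ih =>
    rw [F_cons]
    show ⟪F t x - ⟪F t x, coroot β⟫ • β, ϖv⟫ = _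
    rw [inner_sub_left, real_inner_smul_left, hl β (List.mem_cons_self),
      ih (fun γ hγ => hl γ (List.mem_cons_of_mem _ hγ))]
    ring

lemma F_memR {R : Finset V} (hR : IsRootSystem R) (l : List V) (hl : ∀ β ∈ l, β ∈ R)
    {x : V} (hx : x ∈ R) : F l x ∈ R := by
  induction l with
  | nil => exact hx
  | cons β t ih =>
    exact hR.reflect_mem β (hl β (List.mem_cons_self)) (F t x)
      (ih fun γ hγ => hl γ (List.mem_cons_of_mem _ hγ))

/-! ### coordinate functionals -/

lemma exists_cf (Δ : Finset V) (hli : LinearIndependent ℝ (fun β : Δ => (β : V))) :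
    ∃ cf : V → (V →ₗ[ℝ] ℝ), ∀ δ ∈ Δ, ∀ ε ∈ Δ, cf δ ε = if ε = δ then 1 else 0 := by
  have hs : LinearIndepOn ℝ id (↑Δ : Set V) := hli
  refine ⟨fun δ => if h : δ ∈ (↑Δ : Set V) then
    (Module.Basis.extend hs).coord ⟨δ, hs.subset_extend _ h⟩ else 0, ?_⟩
  intro δ hδ ε hε
  have hδ' : δ ∈ (↑Δ : Set V) := hδ
  have hε' : ε ∈ hs.extend (Set.subset_univ _) := hs.subset_extend _ hε
  simp only [dif_pos hδ']
  have hB : (ε : V) = (Module.Basis.extend hs) ⟨ε, hε'⟩ := (Module.Basis.extend_apply_self hs ⟨ε, hε'⟩).symm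
  rw [hB, Module.Basis.coord_apply, Module.Basis.repr_self, Finsupp.single_apply]
  by_cases h : ε = δ <;> simp [h, Subtype.ext_iff]

section CF

variable {Δ : Finset V} (cf : V → V →ₗ[ℝ] ℝ)
  (hcf : ∀ δ ∈ Δ, ∀ ε ∈ Δ, cf δ ε = if ε = δ then 1 else 0)

include hcf in
lemma cf_sum (f : V → ℝ) {δ : V} (hδ : δ ∈ Δ) :
    cf δ (∑ ε ∈ Δ, f ε • ε) = f δ := by
  rw [map_sum]
  have h1 : ∀ ε ∈ Δ, cf δ (f ε • ε) = if ε = δ then f ε else 0 := by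
    intro ε hε
    rw [map_smul, smul_eq_mul, hcf δ hδ ε hε]
    by_cases h : ε = δ <;> simp [h]
  rw [Finset.sum_congr rfl h1, Finset.sum_ite_eq' Δ δ f, if_pos hδ]

include hcf in
lemma expand_unique (f g : V → ℝ)
    (h : ∑ δ ∈ Δ, f δ • δ = ∑ δ ∈ Δ, g δ • δ) : ∀ δ ∈ Δ, f δ = g δ := by
  intro δ hδ
  rw [← cf_sum cf hcf f hδ, h, cf_sum cf hcf g hδ]

include hcf in
lemma key0 (c : V → ℝ) (hc : ∀ δ ∈ Δ, 0 ≤ c δ)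
    (E : Finset V) (p : V → V) (hp : ∀ δ ∈ E, p δ ∈ Δ) (e : V → ℝ) (he : ∀ δ ∈ E, 0 ≤ e δ)
    (hsum : ∑ δ ∈ Δ, c δ • δ + ∑ δ ∈ E, e δ • p δ = 0) : ∀ δ ∈ Δ, c δ = 0 := by
  intro ε hε
  have h0 : cf ε (∑ δ ∈ Δ, c δ • δ) + cf ε (∑ δ ∈ E, e δ • p δ) = 0 := by
    rw [← map_add, hsum, map_zero]
  rw [cf_sum cf hcf c hε] at h0
  have h1 : 0 ≤ cf ε (∑ δ ∈ E, e δ • p δ) := by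
    rw [map_sum]
    apply Finset.sum_nonneg
    intro δ hδ
    rw [map_smul, smul_eq_mul, hcf ε hε (p δ) (hp δ hδ)]
    by_cases h : p δ = ε <;> simp [h, he δ hδ]
  have h2 := hc ε hε
  linarith

end CF

lemma sum_level {Δ : Finset V} {α ϖv : V} (hα : α ∈ Δ)
    (hϖv : ∀ β ∈ Δ, ⟪β, ϖv⟫ = if β = α then 1 else 0) (f : V → ℝ) :
    ⟪∑ δ ∈ Δ, f δ • δ, ϖv⟫ = f α := by
  rw [sum_inner]
  have h1 : ∀ δ ∈ Δ, ⟪f δ • δ, ϖv⟫ = if δ = α then f δ else 0 := by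
    intro δ hδ
    rw [real_inner_smul_left, hϖv δ hδ]
    by_cases h : δ = α <;> simp [h]
  rw [Finset.sum_congr rfl h1, Finset.sum_ite_eq' Δ α f, if_pos hα]

lemma pos_of_level_pos {R Δ : Finset V} (hΔ : IsBase R Δ) {α ϖv : V} (hα : α ∈ Δ)
    (hϖv : ∀ β ∈ Δ, ⟪β, ϖv⟫ = if β = α then 1 else 0) {β : V} (hβ : β ∈ R)
    (hlev : 0 < ⟪β, ϖv⟫) :
    ∃ c : V → ℕ, β = ∑ δ ∈ Δ, (c δ : ℝ) • δ := by
  rcases hΔ.expand β hβ with h | ⟨c, hc⟩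
  · exact h
  · exfalso
    have h1 : ⟪β, ϖv⟫ = -(c α : ℝ) := by
      rw [hc, inner_neg_left, sum_level hα hϖv]
    rw [h1] at hlev
    have h2 : (0:ℝ) ≤ (c α : ℝ) := Nat.cast_nonneg _
    linarith

/-! ### coroots of positive roots are nonnegative integer combinations of simple coroots -/

lemma coroot_nat {R Δ : Finset V} (hR : IsRootSystem R) (hΔ : IsBase R Δ)
    (cf : V → V →ₗ[ℝ] ℝ) (hcf : ∀ δ ∈ Δ, ∀ ε ∈ Δ, cf δ ε = if ε = δ then 1 else 0) :
    ∀ n : ℕ, ∀ γ ∈ R, ∀ c : V → ℕ, γ = ∑ δ ∈ Δ, (c δ : ℝ) • δ → (∑ δ ∈ Δ, c δ) ≤ n →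
    ∃ m : V → ℕ, coroot γ = ∑ δ ∈ Δ, (m δ : ℝ) • coroot δ := by
  intro n
  induction n with
  | zero =>
    intro γ hγ c hc hn
    exfalso
    have hz : ∀ δ ∈ Δ, c δ = 0 := Finset.sum_eq_zero_iff.mp (Nat.le_zero.mp hn)
    have h0 : γ = 0 := by
      rw [hc]
      apply Finset.sum_eq_zero
      intro δ hδ
      rw [hz δ hδ]; simp
    exact hR.zero_not_mem (h0 ▸ hγ)
  | succ n ih =>
    intro γ hγ c hc hn
    by_cases hγΔ : γ ∈ Δ
    · refine ⟨fun δ => if δ = γ then 1 else 0, ?_⟩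
      have h1 : ∀ δ ∈ Δ, (((if δ = γ then 1 else 0 : ℕ)) : ℝ) • coroot δ
          = if δ = γ then coroot δ else 0 := by
        intro δ hδ; by_cases h : δ = γ <;> simp [h]
      rw [Finset.sum_congr rfl h1, Finset.sum_ite_eq' Δ γ (fun δ => coroot δ), if_pos hγΔ]
    · have hγ0 : γ ≠ 0 := fun h => hR.zero_not_mem (h ▸ hγ)
      have hγγ : (0:ℝ) < ⟪γ, γ⟫ := inner_self_pos' hγ0
      have hsum : ⟪γ, γ⟫ = ∑ δ ∈ Δ, (c δ : ℝ) * ⟪δ, γ⟫ := by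
        calc ⟪γ, γ⟫ = ⟪∑ δ ∈ Δ, (c δ : ℝ) • δ, γ⟫ := by rw [← hc]
        _ = ∑ δ ∈ Δ, (c δ : ℝ) * ⟪δ, γ⟫ := by
            rw [sum_inner]; simp [real_inner_smul_left]
      obtain ⟨δ₀, hδ₀Δ, hip⟩ : ∃ δ₀ ∈ Δ, 0 < ⟪δ₀, γ⟫ := by
        by_contra hcon
        push_neg at hcon
        have h1 : ∑ δ ∈ Δ, (c δ : ℝ) * ⟪δ, γ⟫ ≤ 0 :=
          Finset.sum_nonpos fun δ hδ =>
            mul_nonpos_of_nonneg_of_nonpos (Nat.cast_nonneg _) (hcon δ hδ)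
        have h2 := hγγ
        rw [hsum] at h2
        linarith
      have hδ₀R : δ₀ ∈ R := hΔ.subset hδ₀Δ
      have hδ₀0 : δ₀ ≠ 0 := fun h => hR.zero_not_mem (h ▸ hδ₀R)
      have hδ₀δ₀ : (0:ℝ) < ⟪δ₀, δ₀⟫ := inner_self_pos' hδ₀0
      obtain ⟨z, hz⟩ := hR.crystallographic δ₀ hδ₀R γ hγ
      have hpz : (0:ℝ) < (z : ℝ) := by
        rw [← hz, inner_coroot, real_inner_comm δ₀ γ]
        positivity
      have hz1 : (1:ℝ) ≤ (z:ℝ) := by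
        have h1 : (0:ℤ) < z := by exact_mod_cast hpz
        exact_mod_cast h1
      set γ' := γ - ⟪γ, coroot δ₀⟫ • δ₀ with hγ'def
      have hγ'R : γ' ∈ R := hR.reflect_mem δ₀ hδ₀R γ hγ
      have hγ'exp : γ' = ∑ δ ∈ Δ, ((c δ : ℝ) - if δ = δ₀ then (z:ℝ) else 0) • δ := by
        have h1 : ∑ δ ∈ Δ, (if δ = δ₀ then (z:ℝ) else 0) • δ = (z:ℝ) • δ₀ := by
          have h2 : ∀ δ ∈ Δ, (if δ = δ₀ then (z:ℝ) else 0) • δ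
              = if δ = δ₀ then (z:ℝ) • δ else 0 := by
            intro δ hδ; by_cases h : δ = δ₀ <;> simp [h]
          rw [Finset.sum_congr rfl h2, Finset.sum_ite_eq' Δ δ₀ (fun δ => (z:ℝ) • δ),
            if_pos hδ₀Δ]
        rw [hγ'def, hz, hc,
          Finset.sum_congr rfl (fun δ _ => sub_smul ((c δ : ℝ)) _ δ),
          Finset.sum_sub_distrib, h1]
      rcases hΔ.expand γ' hγ'R with ⟨e, he⟩ | ⟨e, he⟩
      · -- γ' is a positive root of smaller height
        have hecoef : ∀ δ ∈ Δ, (e δ : ℝ) = (c δ : ℝ) - if δ = δ₀ then (z:ℝ) else 0 :=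
          expand_unique cf hcf _ _ (by rw [← he, ← hγ'exp])
        have hht : ∑ δ ∈ Δ, e δ ≤ n := by
          have hcn : ((∑ δ ∈ Δ, c δ : ℕ) : ℝ) ≤ (n:ℝ) + 1 := by exact_mod_cast hn
          have h1 : ((∑ δ ∈ Δ, e δ : ℕ) : ℝ) = ((∑ δ ∈ Δ, c δ : ℕ) : ℝ) - (z:ℝ) := by
            push_cast
            rw [Finset.sum_congr rfl hecoef, Finset.sum_sub_distrib]
            congr 1
            rw [Finset.sum_ite_eq' Δ δ₀ (fun _ => (z:ℝ)), if_pos hδ₀Δ]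
          have h2 : ((∑ δ ∈ Δ, e δ : ℕ) : ℝ) ≤ (n:ℝ) := by linarith
          exact_mod_cast h2
        obtain ⟨m, hm⟩ := ih γ' hγ'R e he hht
        obtain ⟨z', hz'⟩ := hR.crystallographic γ' hγ'R δ₀ hδ₀R
        have hback : γ = sref δ₀ γ' := by
          have h1 : γ' = sref δ₀ γ := hγ'def
          rw [h1, sref_sref]
        have hcor : coroot γ = coroot γ' - (z' : ℝ) • coroot δ₀ := by
          have h1 : coroot γ = sref δ₀ (coroot γ') := by rw [hback, sref_coroot]
          rw [h1]
          show coroot γ' - ⟪coroot γ', coroot δ₀⟫ • δ₀ = _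
          rw [inner_coroot, real_inner_comm δ₀ (coroot γ'), hz',
            show (z':ℝ) • coroot δ₀ = (2 / ⟪δ₀, δ₀⟫ * (z':ℝ)) • δ₀ by
              rw [coroot, smul_smul, mul_comm]]
        set w : V → ℝ := fun δ => (m δ : ℝ) - if δ = δ₀ then (z':ℝ) else 0 with hw
        have hwexp : coroot γ = ∑ δ ∈ Δ, w δ • coroot δ := by
          have h1 : ∑ δ ∈ Δ, (if δ = δ₀ then (z':ℝ) else 0) • coroot δ
              = (z':ℝ) • coroot δ₀ := by
            have h2 : ∀ δ ∈ Δ, (if δ = δ₀ then (z':ℝ) else 0) • coroot δ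
                = if δ = δ₀ then (z':ℝ) • coroot δ else 0 := by
              intro δ hδ; by_cases h : δ = δ₀ <;> simp [h]
            rw [Finset.sum_congr rfl h2,
              Finset.sum_ite_eq' Δ δ₀ (fun δ => (z':ℝ) • coroot δ), if_pos hδ₀Δ]
          rw [hcor, hm, ← h1, ← Finset.sum_sub_distrib]
          exact Finset.sum_congr rfl fun δ _ => (sub_smul _ _ _).symm
        -- nonnegativity of the coefficients
        have hΔpos : ∀ δ ∈ Δ, (0:ℝ) < ⟪δ, δ⟫ := fun δ hδ =>
          inner_self_pos' (fun h => hR.zero_not_mem (h ▸ hΔ.subset hδ))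
        have hwval : ∀ δ ∈ Δ, w δ * (2 / ⟪δ, δ⟫) = 2 / ⟪γ, γ⟫ * (c δ : ℝ) := by
          apply expand_unique cf hcf
          have h1 : ∑ δ ∈ Δ, (w δ * (2 / ⟪δ, δ⟫)) • δ = ∑ δ ∈ Δ, w δ • coroot δ := by
            apply Finset.sum_congr rfl
            intro δ _
            rw [coroot, smul_smul]
          have h2 : coroot γ = ∑ δ ∈ Δ, (2 / ⟪γ, γ⟫ * (c δ : ℝ)) • δ := by
            rw [coroot, hc, Finset.smul_sum]
            exact Finset.sum_congr rfl fun δ _ => smul_smul _ _ _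
          rw [h1, ← hwexp, h2]
        have hwnn : ∀ δ ∈ Δ, 0 ≤ w δ := by
          intro δ hδ
          have h1 := hwval δ hδ
          have h2 := hΔpos δ hδ
          have h3 : (0:ℝ) ≤ 2 / ⟪γ, γ⟫ * (c δ : ℝ) := by positivity
          have h4 : (0:ℝ) < 2 / ⟪δ, δ⟫ := by positivity
          have h5 : (0:ℝ) ≤ w δ * (2 / ⟪δ, δ⟫) := by rw [h1]; exact h3
          exact (mul_nonneg_iff_of_pos_right h4).mp h5
        refine ⟨fun δ => ((m δ : ℤ) - if δ = δ₀ then z' else 0).toNat, ?_⟩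
        rw [hwexp]
        apply Finset.sum_congr rfl
        intro δ hδ
        congr 1
        have hzc : ((((m δ : ℤ) - if δ = δ₀ then z' else 0) : ℤ) : ℝ) = w δ := by
          rw [hw]
          push_cast
          by_cases h : δ = δ₀ <;> simp [h]
        have hnn : (0:ℤ) ≤ (m δ : ℤ) - if δ = δ₀ then z' else 0 := by
          have h5 := hwnn δ hδ
          rw [← hzc] at h5
          exact_mod_cast h5
        have h6 : ((((m δ : ℤ) - if δ = δ₀ then z' else 0).toNat : ℤ) : ℝ) = w δ := by
          rw [Int.toNat_of_nonneg hnn]; exact hzc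
        exact_mod_cast h6.symm
      · -- γ' would be a negative root: then γ = δ₀ ∈ Δ, contradiction
        exfalso
        have h0 : ∀ δ ∈ Δ, ((c δ:ℝ) - (if δ = δ₀ then (z:ℝ) else 0)) + (e δ:ℝ) = 0 := by
          have h1 : ∑ δ ∈ Δ, (((c δ:ℝ) - (if δ = δ₀ then (z:ℝ) else 0)) + (e δ:ℝ)) • δ
              = γ' + ∑ δ ∈ Δ, (e δ:ℝ) • δ := by
            rw [Finset.sum_congr rfl (fun δ _ => add_smul _ _ δ), Finset.sum_add_distrib,
              ← hγ'exp]
          have hsum0 : ∑ δ ∈ Δ, (((c δ:ℝ) - (if δ = δ₀ then (z:ℝ) else 0)) + (e δ:ℝ)) • δ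
              = ∑ δ ∈ Δ, (0:ℝ) • δ := by
            rw [h1, he]
            simp
          exact expand_unique cf hcf _ _ hsum0
        have hc0 : ∀ δ ∈ Δ, δ ≠ δ₀ → c δ = 0 := by
          intro δ hδ hne
          have h1 := h0 δ hδ
          rw [if_neg hne] at h1
          have h2 : (0:ℝ) ≤ (c δ:ℝ) := Nat.cast_nonneg _
          have h3 : (0:ℝ) ≤ (e δ:ℝ) := Nat.cast_nonneg _
          have h4 : (c δ : ℝ) = 0 := by linarith
          exact_mod_cast h4
        have hγeq : γ = (c δ₀ : ℝ) • δ₀ := by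
          rw [hc]
          apply Finset.sum_eq_single_of_mem δ₀ hδ₀Δ
          intro δ hδ hne
          rw [hc0 δ hδ hne]; simp
        have hmem : ((c δ₀ : ℝ)) • δ₀ ∈ R := hγeq ▸ hγ
        rcases hR.reduced δ₀ hδ₀R _ hmem with h1 | h1
        · exact hγΔ (by rw [hγeq, h1, one_smul]; exact hδ₀Δ)
        · have h2 : (0:ℝ) ≤ (c δ₀:ℝ) := Nat.cast_nonneg _
          rw [h1] at h2
          linarith

lemma coroot_neg (x : V) : coroot (-x) = -(coroot x) := by
  simp [coroot]

lemma sum_ite_single {Δ : Finset V} {δ₀ : V} (hδ₀ : δ₀ ∈ Δ) (a : ℝ) (g : V → V) :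
    ∑ δ ∈ Δ, (if δ = δ₀ then a else 0) • g δ = a • g δ₀ := by
  have h : ∀ δ ∈ Δ, (if δ = δ₀ then a else 0) • g δ = if δ = δ₀ then a • g δ else 0 := by
    intro δ hδ; by_cases hh : δ = δ₀ <;> simp [hh]
  rw [Finset.sum_congr rfl h, Finset.sum_ite_eq' Δ δ₀ (fun δ => a • g δ), if_pos hδ₀]

lemma sum_level' {Δ : Finset V} {α ϖv : V} (hα : α ∈ Δ)
    (hϖv : ∀ β ∈ Δ, ⟪β, ϖv⟫ = if β = α then 1 else 0) (f : V → ℝ) :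
    ⟪∑ δ ∈ Δ, f δ • coroot δ, ϖv⟫ = f α * (2 / ⟪α, α⟫) := by
  rw [sum_inner]
  have h1 : ∀ δ ∈ Δ, ⟪f δ • coroot δ, ϖv⟫ = if δ = α then f δ * (2 / ⟪δ, δ⟫) else 0 := by
    intro δ hδ
    rw [real_inner_smul_left, coroot, real_inner_smul_left, hϖv δ hδ]
    by_cases h : δ = α <;> simp [h] <;> ring
  rw [Finset.sum_congr rfl h1, Finset.sum_ite_eq' Δ α (fun δ => f δ * (2 / ⟪δ, δ⟫)), if_pos hα]

lemma coroot_coeff {Δ : Finset V}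
    (cf : V → V →ₗ[ℝ] ℝ) (hcf : ∀ δ ∈ Δ, ∀ ε ∈ Δ, cf δ ε = if ε = δ then 1 else 0)
    {γ : V} (mm cc : V → ℝ) (hm : coroot γ = ∑ δ ∈ Δ, mm δ • coroot δ)
    (hc : γ = ∑ δ ∈ Δ, cc δ • δ) :
    ∀ δ ∈ Δ, mm δ * (2 / ⟪δ, δ⟫) = 2 / ⟪γ, γ⟫ * cc δ := by
  apply expand_unique cf hcf
  have h1 : ∑ δ ∈ Δ, (mm δ * (2 / ⟪δ, δ⟫)) • δ = ∑ δ ∈ Δ, mm δ • coroot δ :=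
    Finset.sum_congr rfl fun δ _ => by rw [coroot, smul_smul]
  have h2 : coroot γ = ∑ δ ∈ Δ, (2 / ⟪γ, γ⟫ * cc δ) • δ := by
    rw [coroot, hc, Finset.smul_sum]
    exact Finset.sum_congr rfl fun δ _ => smul_smul _ _ _
  rw [h1, ← hm, h2]

lemma key0' {R Δ : Finset V} (hR : IsRootSystem R) (hΔ : IsBase R Δ)
    (cf : V → V →ₗ[ℝ] ℝ) (hcf : ∀ δ ∈ Δ, ∀ ε ∈ Δ, cf δ ε = if ε = δ then 1 else 0)
    (c : V → ℝ) (hc : ∀ δ ∈ Δ, 0 ≤ c δ)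
    (E : Finset V) (p : V → V) (hp : ∀ δ ∈ E, p δ ∈ Δ) (e : V → ℝ) (he : ∀ δ ∈ E, 0 ≤ e δ)
    (hsum : ∑ δ ∈ Δ, c δ • coroot δ + ∑ δ ∈ E, e δ • coroot (p δ) = 0) :
    ∀ δ ∈ Δ, c δ = 0 := by
  have hpos : ∀ δ ∈ Δ, (0:ℝ) < ⟪δ, δ⟫ := fun δ hδ =>
    inner_self_pos' (fun h => hR.zero_not_mem (h ▸ hΔ.subset hδ))
  intro ε hε
  have h0 : cf ε (∑ δ ∈ Δ, c δ • coroot δ) + cf ε (∑ δ ∈ E, e δ • coroot (p δ)) = 0 := by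
    rw [← map_add, hsum, map_zero]
  have hval : ∀ δ ∈ Δ, cf ε (coroot δ) = if δ = ε then 2 / ⟪δ, δ⟫ else 0 := by
    intro δ hδ
    rw [coroot, map_smul, smul_eq_mul, hcf ε hε δ hδ]
    by_cases h : δ = ε <;> simp [h]
  have h1 : cf ε (∑ δ ∈ Δ, c δ • coroot δ) = c ε * (2 / ⟪ε, ε⟫) := by
    rw [map_sum]
    have h2 : ∀ δ ∈ Δ, cf ε (c δ • coroot δ) = if δ = ε then c δ * (2 / ⟪δ, δ⟫) else 0 := by
      intro δ hδ
      rw [map_smul, smul_eq_mul, hval δ hδ]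
      by_cases h : δ = ε <;> simp [h]
    rw [Finset.sum_congr rfl h2, Finset.sum_ite_eq' Δ ε (fun δ => c δ * (2 / ⟪δ, δ⟫)),
      if_pos hε]
  have h2 : 0 ≤ cf ε (∑ δ ∈ E, e δ • coroot (p δ)) := by
    rw [map_sum]
    apply Finset.sum_nonneg
    intro δ hδ
    rw [map_smul, smul_eq_mul, hval (p δ) (hp δ hδ)]
    by_cases h : p δ = ε
    · rw [if_pos h]
      have h3 := hpos (p δ) (hp δ hδ)
      exact mul_nonneg (he δ hδ) (by positivity)
    · rw [if_neg h]; simp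
  rw [h1] at h0
  have h3 : c ε * (2 / ⟪ε, ε⟫) ≤ 0 := by linarith
  have h4 : (0:ℝ) < 2 / ⟪ε, ε⟫ := by have := hpos ε hε; positivity
  have h5 := hc ε hε
  nlinarith

lemma extreme_map {R Δ : Finset V} {α ϖv : V} (hα : α ∈ Δ)
    (hϖv : ∀ β ∈ Δ, ⟪β, ϖv⟫ = if β = α then 1 else 0)
    (cf : V → V →ₗ[ℝ] ℝ) (hcf : ∀ δ ∈ Δ, ∀ ε ∈ Δ, cf δ ε = if ε = δ then 1 else 0)
    (G : V →ₗ[ℝ] V) (h : V → V)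
    (hgh : ∀ v, G (h v) = v)
    (hGR : ∀ β ∈ R, G β ∈ R) (hhR : ∀ β ∈ R, h β ∈ R)
    (hGlev : ∀ v, ⟪G v, ϖv⟫ = ⟪v, ϖv⟫) (hhlev : ∀ v, ⟪h v, ϖv⟫ = ⟪v, ϖv⟫)
    (hGΔ : ∀ δ ∈ Δ, δ ≠ α → -(G δ) ∈ Δ ∧ -(G δ) ≠ α)
    (mlev : ℝ) (s t : V)
    (hs : s ∈ R.filter fun β => ⟪β, ϖv⟫ = mlev)
    (ht : t ∈ R.filter fun β => ⟪β, ϖv⟫ = mlev)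
    (hslow : ∀ β ∈ R.filter (fun β => ⟪β, ϖv⟫ = mlev),
      ∃ c : V → ℕ, β - s = ∑ δ ∈ Δ, (c δ : ℝ) • δ)
    (hthigh : ∀ β ∈ R.filter (fun β => ⟪β, ϖv⟫ = mlev),
      ∃ c : V → ℕ, t - β = ∑ δ ∈ Δ, (c δ : ℝ) • δ) :
    G s = t := by
  rw [Finset.mem_filter] at hs ht
  have hgs : G s ∈ R.filter fun β => ⟪β, ϖv⟫ = mlev :=
    Finset.mem_filter.mpr ⟨hGR s hs.1, by rw [hGlev]; exact hs.2⟩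
  obtain ⟨d, hd⟩ := hthigh (G s) hgs
  have hht : h t ∈ R.filter fun β => ⟪β, ϖv⟫ = mlev :=
    Finset.mem_filter.mpr ⟨hhR t ht.1, by rw [hhlev]; exact ht.2⟩
  obtain ⟨c, hcc⟩ := hslow (h t) hht
  have hcα : (c α : ℝ) = 0 := by
    have h1 : ⟪h t - s, ϖv⟫ = 0 := by
      rw [inner_sub_left, hhlev, ht.2, hs.2, sub_self]
    rw [hcc, sum_level hα hϖv] at h1
    exact h1
  have hGt : t - G s = ∑ δ ∈ Δ.erase α, (c δ : ℝ) • G δ := by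
    have h1 : G (h t - s) = t - G s := by rw [map_sub, hgh]
    rw [hcc, map_sum] at h1
    have h2 : ∀ δ ∈ Δ, G ((c δ : ℝ) • δ) = (c δ : ℝ) • G δ := fun δ _ => G.map_smul _ δ
    rw [Finset.sum_congr rfl h2,
      ← Finset.add_sum_erase Δ (fun δ => (c δ : ℝ) • G δ) hα, hcα, zero_smul, zero_add] at h1
    exact h1.symm
  have h0 : ∑ δ ∈ Δ, (d δ : ℝ) • δ + ∑ δ ∈ Δ.erase α, (c δ : ℝ) • (-(G δ)) = 0 := by
    have h1 : ∑ δ ∈ Δ.erase α, (c δ : ℝ) • (-(G δ)) = -(t - G s) := by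
      rw [hGt]
      rw [Finset.sum_congr rfl (fun δ (_ : δ ∈ Δ.erase α) => smul_neg ((c δ : ℝ)) (G δ))]
      exact Finset.sum_neg_distrib _
    rw [h1, ← hd]
    simp
  have hd0 : ∀ δ ∈ Δ, (d δ : ℝ) = 0 :=
    key0 cf hcf _ (fun δ _ => Nat.cast_nonneg _) (Δ.erase α) (fun δ => -(G δ))
      (fun δ hδ =>
        (hGΔ δ (Finset.mem_of_mem_erase hδ) (Finset.ne_of_mem_erase hδ)).1)
      _ (fun δ _ => Nat.cast_nonneg _) h0
  have h2 : t - G s = 0 := by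
    rw [hd]
    apply Finset.sum_eq_zero
    intro δ hδ
    rw [hd0 δ hδ, zero_smul]
  exact (sub_eq_zero.mp h2).symm

end S5

/-- Properties of the lowest and highest roots `σ_k(α)`, `λ_k(α)`
of `S(α,k)` with respect to the longest element `w₀'` of the Weyl group of
`R' = R ∩ span(Δ∖{α})` and the induced diagram involution `τ`. -/
theorem statement_5 {V : Type*} [NormedAddCommGroup V] [InnerProductSpace ℝ V]
    [FiniteDimensional ℝ V]
    (R Δ : Finset V) (hR : IsRootSystem R) (hΔ : IsBase R Δ)
    (α : V) (hα : α ∈ Δ) (k : ℕ) (hk : 1 ≤ k)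
    -- the fundamental coweight `ϖ_α∨`
    (ϖv : V) (hϖv : ∀ β ∈ Δ, ⟪β, ϖv⟫ = if β = α then 1 else 0)
    (hS : (R.filter fun β => ⟪β, ϖv⟫ = (k : ℝ)).Nonempty)
    -- `σk = σ_k(α)` is the lowest root of `S(α,k)`
    (σk : V) (hσk : σk ∈ R.filter fun β => ⟪β, ϖv⟫ = (k : ℝ))
    (hσklow : ∀ β ∈ R.filter (fun β => ⟪β, ϖv⟫ = (k : ℝ)),
      ∃ c : V → ℕ, β - σk = ∑ δ ∈ Δ, (c δ : ℝ) • δ)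
    -- `lamk = λ_k(α)` is the highest root of `S(α,k)`
    (lamk : V) (hlamk : lamk ∈ R.filter fun β => ⟪β, ϖv⟫ = (k : ℝ))
    (hlamkhigh : ∀ β ∈ R.filter (fun β => ⟪β, ϖv⟫ = (k : ℝ)),
      ∃ c : V → ℕ, lamk - β = ∑ δ ∈ Δ, (c δ : ℝ) • δ)
    -- `lam1 = λ_1(α)` is the highest root of `S(α,1)`
    (lam1 : V) (hlam1 : lam1 ∈ R.filter fun β => ⟪β, ϖv⟫ = (1 : ℝ))
    (hlam1high : ∀ β ∈ R.filter (fun β => ⟪β, ϖv⟫ = (1 : ℝ)),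
      ∃ c : V → ℕ, lam1 - β = ∑ δ ∈ Δ, (c δ : ℝ) • δ)
    -- `w0 = w₀'` is an element of the Weyl group `W(R') ⊆ W`, i.e. a product of
    -- reflections in roots of `R' = {β ∈ R : ⟨β, ϖ_α∨⟩ = 0}` ...
    (w0 : V → V)
    (hw0W : ∃ l : List V, (∀ β ∈ l, β ∈ R ∧ ⟪β, ϖv⟫ = 0) ∧
      ∀ v : V, w0 v = l.foldr (fun β x => x - ⟪x, coroot β⟫ • β) v)
    -- ... which is the (unique) element satisfying `w₀'(Δ∖{α}) = −(Δ∖{α})`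
    (hw0Δ : ∀ β ∈ Δ, β ≠ α → -(w0 β) ∈ Δ ∧ -(w0 β) ≠ α)
    -- `τ` is the linear extension of the permutation of `Δ` fixing `α` and
    -- sending `β ∈ Δ∖{α}` to `−w₀'(β)`
    (τ : V →ₗ[ℝ] V) (hτα : τ α = α) (hτ : ∀ β ∈ Δ, β ≠ α → τ β = -(w0 β))
    -- `lam1v = λ_1(α∨)` is the highest coroot whose `α∨`-coefficient is `1`
    (lam1v : V) (hl1vmem : ∃ γ ∈ R, coroot γ = lam1v)
    (hl1vcoef : ∃ c : V → ℕ, lam1v = ∑ δ ∈ Δ, (c δ : ℝ) • coroot δ ∧ c α = 1)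
    (hl1vhigh : ∀ γ ∈ R, ∀ c : V → ℕ,
      coroot γ = ∑ δ ∈ Δ, (c δ : ℝ) • coroot δ → c α = 1 →
      ∃ d : V → ℕ, lam1v - coroot γ = ∑ δ ∈ Δ, (d δ : ℝ) • coroot δ)
    -- `k'` is the coefficient of `α∨` in `λ_k(α)∨`
    (k' : ℕ)
    (hk' : ∃ c : V → ℕ, coroot lamk = ∑ δ ∈ Δ, (c δ : ℝ) • coroot δ ∧ c α = k') :
    -- (i)
    w0 σk = lamk ∧
    -- (ii)
    lam1v = coroot lam1 ∧
    -- (iii)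
    σk = (k : ℝ) • lam1 - τ lamk + (k : ℝ) • α ∧
    coroot σk = (k' : ℝ) • lam1v - τ (coroot lamk) + (k' : ℝ) • coroot α := by
  obtain ⟨l, Hl, hfold⟩ := hw0W
  have HlR : ∀ β ∈ l, β ∈ R := fun β hβ => (Hl β hβ).1
  have Hllev : ∀ β ∈ l, ⟪β, ϖv⟫ = 0 := fun β hβ => (Hl β hβ).2
  have HlR' : ∀ β ∈ l.reverse, β ∈ R := fun β hβ => HlR β (List.mem_reverse.mp hβ)
  have Hllev' : ∀ β ∈ l.reverse, ⟪β, ϖv⟫ = 0 := fun β hβ => Hllev β (List.mem_reverse.mp hβ)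
  set w1 : V → V := fun v => S5.F l.reverse v with hw1def
  have hw0F : ∀ v, w0 v = S5.F l v := hfold
  have h10 : ∀ v, w1 (w0 v) = v := fun v => by rw [hw0F]; exact S5.F_rev l v
  have h01 : ∀ v, w0 (w1 v) = v := fun v => by
    have h := S5.F_rev l.reverse v
    rw [List.reverse_reverse] at h
    rw [hw0F]
    exact h
  have hw0R : ∀ β ∈ R, w0 β ∈ R := fun β hβ => by
    rw [hw0F]; exact S5.F_memR hR l HlR hβ
  have hw1R : ∀ β ∈ R, w1 β ∈ R := fun β hβ => S5.F_memR hR l.reverse HlR' hβ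
  have hw0lev : ∀ v, ⟪w0 v, ϖv⟫ = ⟪v, ϖv⟫ := fun v => by
    rw [hw0F]; exact S5.F_level l ϖv Hllev v
  have hw1lev : ∀ v, ⟪w1 v, ϖv⟫ = ⟪v, ϖv⟫ := fun v => S5.F_level l.reverse ϖv Hllev' v
  have hw0inner : ∀ x y, ⟪w0 x, w0 y⟫ = ⟪x, y⟫ := fun x y => by
    rw [hw0F, hw0F]; exact S5.F_inner l x y
  have hw1inner : ∀ x y, ⟪w1 x, w1 y⟫ = ⟪x, y⟫ := fun x y => S5.F_inner l.reverse x y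
  have hw0cor : ∀ x, coroot (w0 x) = w0 (coroot x) := fun x => by
    rw [hw0F, hw0F]; exact S5.F_coroot l x
  have hw1cor : ∀ x, coroot (w1 x) = w1 (coroot x) := fun x => S5.F_coroot l.reverse x
  set W0 : V →ₗ[ℝ] V :=
    { toFun := w0
      map_add' := fun x y => by
        show w0 (x + y) = w0 x + w0 y
        rw [hw0F, hw0F, hw0F]; exact S5.F_add l x y
      map_smul' := fun a x => by
        show w0 (a • x) = a • w0 x
        rw [hw0F, hw0F]; exact S5.F_smul l a x } with hW0
  set W1 : V →ₗ[ℝ] V :=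
    { toFun := w1
      map_add' := fun x y => S5.F_add l.reverse x y
      map_smul' := fun a x => S5.F_smul l.reverse a x } with hW1
  have hW0app : ∀ v, W0 v = w0 v := fun _ => rfl
  have hW1app : ∀ v, W1 v = w1 v := fun _ => rfl
  have hw1neg : ∀ x, w1 (-x) = -(w1 x) := fun x => by
    rw [← hW1app, ← hW1app, map_neg]
  have hw0sumid : ∀ (E : Finset V) (f : V → ℝ),
      w0 (∑ δ ∈ E, f δ • δ) = ∑ δ ∈ E, f δ • w0 δ := by
    intro E f
    show W0 (∑ δ ∈ E, f δ • δ) = ∑ δ ∈ E, f δ • W0 δ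
    rw [map_sum]
    exact Finset.sum_congr rfl fun δ _ => W0.map_smul _ _
  have hw0sumcor : ∀ (E : Finset V) (f : V → ℝ),
      w0 (∑ δ ∈ E, f δ • coroot δ) = ∑ δ ∈ E, f δ • w0 (coroot δ) := by
    intro E f
    show W0 (∑ δ ∈ E, f δ • coroot δ) = ∑ δ ∈ E, f δ • W0 (coroot δ)
    rw [map_sum]
    exact Finset.sum_congr rfl fun δ _ => W0.map_smul _ _
  have hτsumid : ∀ (E : Finset V) (f : V → ℝ),
      τ (∑ δ ∈ E, f δ • δ) = ∑ δ ∈ E, f δ • τ δ := by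
    intro E f
    rw [map_sum]
    exact Finset.sum_congr rfl fun δ _ => τ.map_smul _ _
  have hτsumcor : ∀ (E : Finset V) (f : V → ℝ),
      τ (∑ δ ∈ E, f δ • coroot δ) = ∑ δ ∈ E, f δ • τ (coroot δ) := by
    intro E f
    rw [map_sum]
    exact Finset.sum_congr rfl fun δ _ => τ.map_smul _ _
  obtain ⟨cf, hcf⟩ := S5.exists_cf Δ hΔ.indep
  -- w1 sends Δ∖{α} to -(Δ∖{α})
  have hw1Δ : ∀ δ ∈ Δ, δ ≠ α → -(w1 δ) ∈ Δ ∧ -(w1 δ) ≠ α := by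
    intro δ' hδ' hne
    have hmaps : ∀ a ∈ Δ.erase α, -(w0 a) ∈ Δ.erase α := fun a ha =>
      Finset.mem_erase.mpr
        ⟨(hw0Δ a (Finset.mem_of_mem_erase ha) (Finset.ne_of_mem_erase ha)).2,
         (hw0Δ a (Finset.mem_of_mem_erase ha) (Finset.ne_of_mem_erase ha)).1⟩
    have hinj : ∀ a₁ a₂ (_ : a₁ ∈ Δ.erase α) (_ : a₂ ∈ Δ.erase α),
        -(w0 a₁) = -(w0 a₂) → a₁ = a₂ := by
      intro a₁ a₂ _ _ hh
      have h1 : w0 a₁ = w0 a₂ := neg_injective hh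
      have h2 := congrArg w1 h1
      rwa [h10, h10] at h2
    obtain ⟨a, ha, haeq⟩ := Finset.surj_on_of_inj_on_of_card_le
      (fun a (_ : a ∈ Δ.erase α) => -(w0 a)) hmaps hinj le_rfl δ'
      (Finset.mem_erase.mpr ⟨hne, hδ'⟩)
    have h1 : w1 δ' = -a := by
      rw [haeq, hw1neg, h10]
    have h2 : -(w1 δ') = a := by rw [h1, neg_neg]
    rw [h2]
    exact ⟨Finset.mem_of_mem_erase ha, Finset.ne_of_mem_erase ha⟩
  -- α is the lowest root of S(α,1)
  have hαR : α ∈ R := hΔ.subset hα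
  have hα0 : α ≠ 0 := fun h => hR.zero_not_mem (h ▸ hαR)
  have hαα : (0:ℝ) < ⟪α, α⟫ := S5.inner_self_pos' hα0
  have hαlev : ⟪α, ϖv⟫ = 1 := by rw [hϖv α hα]; simp
  have hαS : α ∈ R.filter (fun β => ⟪β, ϖv⟫ = (1:ℝ)) := Finset.mem_filter.mpr ⟨hαR, hαlev⟩
  have hαlow : ∀ β ∈ R.filter (fun β => ⟪β, ϖv⟫ = (1:ℝ)),
      ∃ c : V → ℕ, β - α = ∑ δ ∈ Δ, (c δ : ℝ) • δ := by
    intro β hβ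
    rw [Finset.mem_filter] at hβ
    obtain ⟨e, he⟩ := S5.pos_of_level_pos hΔ hα hϖv hβ.1 (by rw [hβ.2]; norm_num)
    have h2 : ⟪β, ϖv⟫ = (e α : ℝ) := by rw [he]; exact S5.sum_level hα hϖv _
    have heα : (e α : ℝ) = 1 := h2.symm.trans hβ.2
    refine ⟨fun δ => if δ = α then 0 else e δ, ?_⟩
    have h4 : ∑ δ ∈ Δ, (if δ = α then (1:ℝ) else 0) • δ = α := by
      rw [S5.sum_ite_single hα 1 (fun δ => δ), one_smul]
    have h3 : ∑ δ ∈ Δ, (((if δ = α then 0 else e δ : ℕ)):ℝ) • δ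
        = ∑ δ ∈ Δ, ((e δ : ℝ) - if δ = α then 1 else 0) • δ := by
      apply Finset.sum_congr rfl
      intro δ hδ
      by_cases h : δ = α
      · subst h
        rw [if_pos rfl, if_pos rfl, heα]
        simp
      · simp [h]
    rw [h3, Finset.sum_congr rfl (fun δ (_ : δ ∈ Δ) => sub_smul ((e δ : ℝ)) _ δ),
      Finset.sum_sub_distrib, ← he, h4]
  -- the three applications of extreme_map
  have hi : w0 σk = lamk :=
    S5.extreme_map hα hϖv cf hcf W0 w1 h01 hw0R hw1R hw0lev hw1lev hw0Δ
      ((k:ℝ)) σk lamk hσk hlamk hσklow hlamkhigh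
  have hi' : w1 σk = lamk :=
    S5.extreme_map hα hϖv cf hcf W1 w0 h10 hw1R hw0R hw1lev hw0lev hw1Δ
      ((k:ℝ)) σk lamk hσk hlamk hσklow hlamkhigh
  have hσw : w0 lamk = σk := by rw [← hi']; exact h01 σk
  have hwα : w0 α = lam1 :=
    S5.extreme_map hα hϖv cf hcf W0 w1 h01 hw0R hw1R hw0lev hw1lev hw0Δ
      (1:ℝ) α lam1 hαS hlam1 hαlow hlam1high
  -- ===== part (ii) =====
  have hl1m := Finset.mem_filter.mp hlam1
  obtain ⟨c1, hc1⟩ := S5.pos_of_level_pos hΔ hα hϖv hl1m.1 (by rw [hl1m.2]; norm_num)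
  have hc1α : (c1 α : ℝ) = 1 := by
    have h2 : ⟪lam1, ϖv⟫ = (c1 α : ℝ) := by rw [hc1]; exact S5.sum_level hα hϖv _
    exact h2.symm.trans hl1m.2
  obtain ⟨m, hm⟩ := S5.coroot_nat hR hΔ cf hcf (∑ δ ∈ Δ, c1 δ) lam1 hl1m.1 c1 hc1 le_rfl
  have hlen : ⟪lam1, lam1⟫ = ⟪α, α⟫ := by rw [← hwα]; exact hw0inner α α
  have hmα : (m α : ℝ) = 1 := by
    have h1 := S5.coroot_coeff cf hcf (fun δ => (m δ : ℝ)) (fun δ => (c1 δ : ℝ)) hm hc1 α hα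
    rw [hlen, hc1α, mul_one] at h1
    have h4 : (0:ℝ) < 2 / ⟪α, α⟫ := by positivity
    exact mul_right_cancel₀ (ne_of_gt h4) (h1.trans (one_mul _).symm)
  have hmαn : m α = 1 := by exact_mod_cast hmα
  obtain ⟨d2, hd2⟩ := hl1vhigh lam1 hl1m.1 m hm hmαn
  obtain ⟨γ₀, hγ₀R, hγ₀cor⟩ := hl1vmem
  obtain ⟨c₀, hc₀, hc₀α⟩ := hl1vcoef
  have hγ₀0 : γ₀ ≠ 0 := fun h => hR.zero_not_mem (h ▸ hγ₀R)
  have hγ₀γ₀ : (0:ℝ) < ⟪γ₀, γ₀⟫ := S5.inner_self_pos' hγ₀0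
  have hγ₀lev : ⟪γ₀, ϖv⟫ = ⟪γ₀, γ₀⟫ / ⟪α, α⟫ := by
    have h1 : ⟪coroot γ₀, ϖv⟫ = 2 / ⟪α, α⟫ := by
      rw [hγ₀cor, hc₀, S5.sum_level' hα hϖv (fun δ => (c₀ δ : ℝ)), hc₀α]
      simp
    have h2 : ⟪coroot γ₀, ϖv⟫ = 2 / ⟪γ₀, γ₀⟫ * ⟪γ₀, ϖv⟫ := by
      rw [coroot, real_inner_smul_left]
    rw [h2] at h1
    field_simp at h1 ⊢
    linarith
  have hγ₀levpos : (0:ℝ) < ⟪γ₀, ϖv⟫ := by rw [hγ₀lev]; positivity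
  set γ₁ := w1 γ₀ with hγ₁def
  have hγ₁R : γ₁ ∈ R := hw1R γ₀ hγ₀R
  have hγ₁lev : ⟪γ₁, ϖv⟫ = ⟪γ₀, ϖv⟫ := hw1lev γ₀
  obtain ⟨cc₁, hcc₁⟩ := S5.pos_of_level_pos hΔ hα hϖv hγ₁R (by rw [hγ₁lev]; exact hγ₀levpos)
  have hcc₁α : (cc₁ α : ℝ) = ⟪γ₀, ϖv⟫ := by
    have h2 : ⟪γ₁, ϖv⟫ = (cc₁ α : ℝ) := by rw [hcc₁]; exact S5.sum_level hα hϖv _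
    exact h2.symm.trans hγ₁lev
  obtain ⟨m₁, hm₁⟩ := S5.coroot_nat hR hΔ cf hcf (∑ δ ∈ Δ, cc₁ δ) γ₁ hγ₁R cc₁ hcc₁ le_rfl
  have hγ₁γ₀ : ⟪γ₁, γ₁⟫ = ⟪γ₀, γ₀⟫ := hw1inner γ₀ γ₀
  have hm₁α : (m₁ α : ℝ) = 1 := by
    have h1 := S5.coroot_coeff cf hcf (fun δ => (m₁ δ : ℝ)) (fun δ => (cc₁ δ : ℝ)) hm₁ hcc₁ α hα
    rw [hγ₁γ₀, hcc₁α, hγ₀lev] at h1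
    have h2 : 2 / ⟪γ₀, γ₀⟫ * (⟪γ₀, γ₀⟫ / ⟪α, α⟫) = 2 / ⟪α, α⟫ := by field_simp
    rw [h2] at h1
    have h4 : (0:ℝ) < 2 / ⟪α, α⟫ := by positivity
    refine mul_right_cancel₀ (ne_of_gt h4) ?_
    rw [h1, one_mul]
  have hm₁αn : m₁ α = 1 := by exact_mod_cast hm₁α
  have hsplit : coroot γ₁ = coroot α + ∑ δ ∈ Δ.erase α, (m₁ δ : ℝ) • coroot δ := by
    rw [hm₁, ← Finset.add_sum_erase Δ (fun δ => (m₁ δ : ℝ) • coroot δ) hα, hm₁αn]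
    norm_num
  have hw0γ₁ : w0 γ₁ = γ₀ := h01 γ₀
  have happ : lam1v - coroot lam1 = -(∑ δ ∈ Δ.erase α, (m₁ δ : ℝ) • coroot (-(w0 δ))) := by
    have h1 : w0 (coroot γ₁) = lam1v := by
      rw [← hw0cor, hw0γ₁, hγ₀cor]
    have h2 : w0 (coroot α) = coroot lam1 := by rw [← hw0cor, hwα]
    have h3 : w0 (coroot γ₁)
        = w0 (coroot α) + ∑ δ ∈ Δ.erase α, (m₁ δ : ℝ) • w0 (coroot δ) := by
      rw [hsplit,
        show w0 (coroot α + ∑ δ ∈ Δ.erase α, (m₁ δ : ℝ) • coroot δ)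
          = w0 (coroot α) + w0 (∑ δ ∈ Δ.erase α, (m₁ δ : ℝ) • coroot δ) from W0.map_add _ _,
        hw0sumcor]
    have h4 : ∀ δ ∈ Δ.erase α, w0 (coroot δ) = -(coroot (-(w0 δ))) := by
      intro δ _
      rw [S5.coroot_neg, neg_neg, hw0cor]
    have h5 : ∑ δ ∈ Δ.erase α, (m₁ δ : ℝ) • w0 (coroot δ)
        = -(∑ δ ∈ Δ.erase α, (m₁ δ : ℝ) • coroot (-(w0 δ))) := by
      rw [← Finset.sum_neg_distrib]
      apply Finset.sum_congr rfl
      intro δ hδ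
      rw [h4 δ hδ, smul_neg]
    rw [h1, h2, h5] at h3
    rw [h3]
    abel
  have hzero : ∑ δ ∈ Δ, (d2 δ : ℝ) • coroot δ
      + ∑ δ ∈ Δ.erase α, (m₁ δ : ℝ) • coroot (-(w0 δ)) = 0 := by
    rw [← hd2, happ]
    simp
  have hd20 : ∀ δ ∈ Δ, (d2 δ : ℝ) = 0 :=
    S5.key0' hR hΔ cf hcf _ (fun δ _ => Nat.cast_nonneg _) (Δ.erase α)
      (fun δ => -(w0 δ))
      (fun δ hδ =>
        (hw0Δ δ (Finset.mem_of_mem_erase hδ) (Finset.ne_of_mem_erase hδ)).1)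
      _ (fun δ _ => Nat.cast_nonneg _) hzero
  have hii : lam1v = coroot lam1 := by
    have h2 : lam1v - coroot lam1 = 0 := by
      rw [hd2]
      apply Finset.sum_eq_zero
      intro δ hδ
      rw [hd20 δ hδ, zero_smul]
    exact sub_eq_zero.mp h2
  -- ===== part (iii) =====
  have hlkm := Finset.mem_filter.mp hlamk
  have hkpos : (0:ℝ) < (k:ℝ) := by exact_mod_cast hk
  obtain ⟨ck, hck⟩ := S5.pos_of_level_pos hΔ hα hϖv hlkm.1 (by rw [hlkm.2]; exact hkpos)
  have hckα : (ck α : ℝ) = (k:ℝ) := by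
    have h2 : ⟪lamk, ϖv⟫ = (ck α : ℝ) := by rw [hck]; exact S5.sum_level hα hϖv _
    exact h2.symm.trans hlkm.2
  have hμ : lamk = (k:ℝ) • α + ∑ δ ∈ Δ.erase α, (ck δ : ℝ) • δ := by
    rw [hck, ← Finset.add_sum_erase Δ (fun δ => (ck δ : ℝ) • δ) hα, hckα]
  have hτμ : τ lamk = (k:ℝ) • α - w0 (∑ δ ∈ Δ.erase α, (ck δ : ℝ) • δ) := by
    rw [hμ, map_add, map_smul, hτα, hτsumid, hw0sumid, sub_eq_add_neg,
      ← Finset.sum_neg_distrib]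
    congr 1
    apply Finset.sum_congr rfl
    intro δ hδ
    rw [hτ δ (Finset.mem_of_mem_erase hδ) (Finset.ne_of_mem_erase hδ), smul_neg]
  have hσval : σk = (k:ℝ) • lam1 + w0 (∑ δ ∈ Δ.erase α, (ck δ : ℝ) • δ) := by
    have h1 : w0 lamk = (k:ℝ) • w0 α + w0 (∑ δ ∈ Δ.erase α, (ck δ : ℝ) • δ) := by
      rw [hμ]
      show W0 _ = (k:ℝ) • W0 α + W0 _
      rw [map_add, map_smul]
    rw [← hσw, h1, hwα]
  have hiiiA : σk = (k : ℝ) • lam1 - τ lamk + (k : ℝ) • α := by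
    rw [hσval, hτμ]
    abel
  -- dual part
  obtain ⟨ckv, hckv, hckvα⟩ := hk'
  have hcorμ : coroot lamk = (k':ℝ) • coroot α + ∑ δ ∈ Δ.erase α, (ckv δ : ℝ) • coroot δ := by
    rw [hckv, ← Finset.add_sum_erase Δ (fun δ => (ckv δ : ℝ) • coroot δ) hα, hckvα]
  have hτcor : τ (coroot lamk)
      = (k':ℝ) • coroot α - w0 (∑ δ ∈ Δ.erase α, (ckv δ : ℝ) • coroot δ) := by
    have hτcorα : τ (coroot α) = coroot α := by rw [coroot, map_smul, hτα]
    have hτδcor : ∀ δ ∈ Δ.erase α, τ (coroot δ) = -(w0 (coroot δ)) := by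
      intro δ hδ
      rw [coroot, map_smul, hτ δ (Finset.mem_of_mem_erase hδ) (Finset.ne_of_mem_erase hδ),
        smul_neg,
        show w0 ((2 / ⟪δ, δ⟫) • δ) = (2 / ⟪δ, δ⟫) • w0 δ from W0.map_smul _ _]
    rw [hcorμ, map_add, map_smul, hτcorα, hτsumcor, hw0sumcor, sub_eq_add_neg,
      ← Finset.sum_neg_distrib]
    congr 1
    apply Finset.sum_congr rfl
    intro δ hδ
    rw [hτδcor δ hδ, smul_neg]
  have hcorσ : coroot σk
      = (k':ℝ) • lam1v + w0 (∑ δ ∈ Δ.erase α, (ckv δ : ℝ) • coroot δ) := by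
    have h1 : coroot σk = w0 (coroot lamk) := by rw [← hσw, hw0cor]
    have h2 : w0 (coroot lamk) = (k':ℝ) • w0 (coroot α)
        + w0 (∑ δ ∈ Δ.erase α, (ckv δ : ℝ) • coroot δ) := by
      rw [hcorμ]
      show W0 _ = (k':ℝ) • W0 (coroot α) + W0 _
      rw [map_add, map_smul]
    have h3 : w0 (coroot α) = lam1v := by rw [← hw0cor, hwα, ← hii]
    rw [h1, h2, h3]
  refine ⟨hi, hii, hiiiA, ?_⟩
  rw [hcorσ, hτcor]
  abel
end
end

section
/- For every simple root α ∈ Δ: Σ_{β ∈ R, ⟨β,ϖ_α∨⟩ > 0} ⟨β, α∨⟩ = d_1(α), where d_1(α) = 2⟨ρ, ϖ_α∨⟩ / ⟨ϖ_α, ϖ_α∨⟩. (Here ⟨β,α∨⟩ is the Cartan integer n(β,α).) -/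
open scoped RealInnerProductSpace

attribute [local instance] Classical.propDecidable

noncomputable section

/-!
Let `T` be the set of roots pairing positively with `ϖ_α∨`. For a simple root `δ ≠ α` the
reflection `s_δ` fixes `ϖ_α∨`, hence permutes `T` while negating `⟨·, δ∨⟩`; so the sum `σ` of
the roots in `T` is orthogonal to every `δ∨` with `δ ≠ α`, i.e. `σ = k • ϖ_α` with
`k = ⟨σ, α∨⟩`, the left-hand side. Pairing with `ϖ_α∨` gives
`k ⟨ϖ_α, ϖ_α∨⟩ = ⟨σ, ϖ_α∨⟩ = Σ_{R⁺} ⟨β, ϖ_α∨⟩ = 2⟨ρ, ϖ_α∨⟩`, and `⟨σ, ϖ_α∨⟩ > 0` since `α ∈ T`.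
-/

section Coroot

variable {V : Type*} [NormedAddCommGroup V] [InnerProductSpace ℝ V]

theorem inner_coroot_self {α : V} (hα : α ≠ 0) : ⟪α, coroot α⟫ = 2 := by
  rw [coroot, real_inner_smul_right, div_mul_cancel₀ _ (inner_self_ne_zero.mpr hα)]

theorem inner_coroot_eq_zero_iff {α : V} (hα : α ≠ 0) (v : V) :
    ⟪v, coroot α⟫ = 0 ↔ ⟪α, v⟫ = 0 := by
  rw [coroot, real_inner_smul_right, mul_eq_zero,
    or_iff_right (div_ne_zero two_ne_zero (inner_self_ne_zero.mpr hα)), real_inner_comm]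

def rootReflection (α β : V) : V :=
  β - ⟪β, coroot α⟫ • α

theorem inner_rootReflection_coroot {α : V} (hα : α ≠ 0) (β : V) :
    ⟪rootReflection α β, coroot α⟫ = -⟪β, coroot α⟫ := by
  rw [rootReflection, inner_sub_left, real_inner_smul_left, inner_coroot_self hα]
  ring

theorem rootReflection_rootReflection {α : V} (hα : α ≠ 0) (β : V) :
    rootReflection α (rootReflection α β) = β := by
  rw [rootReflection, inner_rootReflection_coroot hα, rootReflection, neg_smul,
    sub_neg_eq_add, sub_add_cancel]

theorem inner_rootReflection_of_inner_eq_zero {α w : V} (h : ⟪α, w⟫ = 0) (β : V) :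
    ⟪rootReflection α β, w⟫ = ⟪β, w⟫ := by
  rw [rootReflection, inner_sub_left, real_inner_smul_left, h, mul_zero, sub_zero]

theorem sum_inner_coroot_eq_zero_of_mapsTo {α : V} (hα : α ≠ 0) {T : Finset V}
    (hT : Set.MapsTo (rootReflection α) T T) : ∑ β ∈ T, ⟪β, coroot α⟫ = 0 :=
  Finset.sum_involution (fun β _ => rootReflection α β)
    (fun β _ => by rw [inner_rootReflection_coroot hα, add_neg_cancel])
    (fun β _ hne hfix => hne <|
      (smul_eq_zero.mp (sub_eq_self.mp hfix)).resolve_right hα)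
    (fun _ hβ => hT hβ)
    (fun β _ => rootReflection_rootReflection hα β)

theorem eq_smul_of_inner_coroot_eq_zero {Δ : Set V} (hspan : Submodule.span ℝ Δ = ⊤)
    (hΔ0 : (0 : V) ∉ Δ) {α ϖ v : V}
    (hϖ : ∀ β ∈ Δ, ⟪ϖ, coroot β⟫ = if β = α then 1 else 0)
    (hv : ∀ β ∈ Δ, β ≠ α → ⟪v, coroot β⟫ = 0) :
    v = ⟪v, coroot α⟫ • ϖ := by
  rw [← sub_eq_zero]
  have horth : ∀ β ∈ Δ, ⟪β, v - ⟪v, coroot α⟫ • ϖ⟫ = 0 := fun β hβ => by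
    rw [← inner_coroot_eq_zero_iff (ne_of_mem_of_not_mem hβ hΔ0), inner_sub_left,
      real_inner_smul_left, hϖ β hβ]
    by_cases hβα : β = α
    · rw [hβα, if_pos rfl, mul_one, sub_self]
    · rw [hv β hβ hβα, if_neg hβα, mul_zero, sub_zero]
  have := (Submodule.isOrtho_span (s := Δ) (t := {v - ⟪v, coroot α⟫ • ϖ})).mpr
    (by simpa using horth)
  rwa [hspan, Submodule.isOrtho_top_left, Submodule.span_singleton_eq_bot] at this

theorem inner_sum_smul_eq_of_inner_eq_ite {Δ : Finset V} {α w : V} (hα : α ∈ Δ)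
    (hw : ∀ β ∈ Δ, ⟪β, w⟫ = if β = α then 1 else 0) (c : V → ℝ) :
    ⟪∑ δ ∈ Δ, c δ • δ, w⟫ = c α := by
  rw [sum_inner, Finset.sum_congr rfl fun δ hδ => by rw [real_inner_smul_left, hw δ hδ]]
  simp [mul_ite, hα]

end Coroot

section RootSystem

variable {V : Type*} [NormedAddCommGroup V] [InnerProductSpace ℝ V] {R Δ : Finset V}

theorem IsBase.zero_notMem (hR : IsRootSystem R) (hΔ : IsBase R Δ) : (0 : V) ∉ Δ :=
  fun h => hR.zero_not_mem (hΔ.subset h)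

theorem IsBase.span_eq_top (hR : IsRootSystem R) (hΔ : IsBase R Δ) :
    Submodule.span ℝ (Δ : Set V) = ⊤ := by
  have hcomb : ∀ c : V → ℕ, ∑ δ ∈ Δ, (c δ : ℝ) • δ ∈ Submodule.span ℝ (Δ : Set V) :=
    fun c => Submodule.sum_mem _ fun δ hδ => Submodule.smul_mem _ _ (Submodule.subset_span hδ)
  rw [eq_top_iff, ← hR.span_eq_top, Submodule.span_le]
  intro β hβ
  rcases hΔ.expand β hβ with ⟨c, rfl⟩ | ⟨c, rfl⟩
  · exact hcomb c
  · exact neg_mem (hcomb c)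

theorem IsRootSystem.mapsTo_rootReflection_filter (hR : IsRootSystem R) {δ w : V} (hδ : δ ∈ R)
    (hδw : ⟪δ, w⟫ = 0) :
    Set.MapsTo (rootReflection δ) ↑(R.filter fun β => 0 < ⟪β, w⟫)
      ↑(R.filter fun β => 0 < ⟪β, w⟫) := by
  intro β hβ
  simp only [Finset.coe_filter, Set.mem_ofPred_eq] at hβ ⊢
  exact ⟨hR.reflect_mem δ hδ β hβ.1, by rw [inner_rootReflection_of_inner_eq_zero hδw]; exact hβ.2⟩

/-- Roots pairing positively with `ϖv` are positive, and positive roots pair nonnegatively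
with it. -/
theorem IsBase.sum_filter_inner_pos_eq_sum (hΔ : IsBase R Δ) {Rp : Finset V}
    (hRp : ∀ β, β ∈ Rp ↔ β ∈ R ∧ ∃ c : V → ℕ, β = ∑ δ ∈ Δ, (c δ : ℝ) • δ)
    {α ϖv : V} (hα : α ∈ Δ) (hϖv : ∀ β ∈ Δ, ⟪β, ϖv⟫ = if β = α then 1 else 0) :
    ∑ β ∈ R.filter (fun β => 0 < ⟪β, ϖv⟫), ⟪β, ϖv⟫ = ∑ β ∈ Rp, ⟪β, ϖv⟫ := by
  have hcoeff (c : V → ℕ) : ⟪∑ δ ∈ Δ, (c δ : ℝ) • δ, ϖv⟫ = c α :=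
    inner_sum_smul_eq_of_inner_eq_ite hα hϖv fun δ => (c δ : ℝ)
  have hfilter : R.filter (fun β => 0 < ⟪β, ϖv⟫) = Rp.filter (fun β => 0 < ⟪β, ϖv⟫) := by
    ext β
    simp only [Finset.mem_filter, hRp, and_congr_left_iff, iff_self_and]
    intro hpos hβR
    refine (hΔ.expand β hβR).resolve_right fun ⟨c, hc⟩ => ?_
    rw [hc, inner_neg_left, hcoeff] at hpos
    exact (Nat.cast_nonneg (c α)).not_gt (neg_pos.mp hpos)
  rw [hfilter]
  refine Finset.sum_filter_of_ne fun β hβ hne => hne.symm.lt_of_le ?_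
  obtain ⟨-, c, rfl⟩ := (hRp β).mp hβ
  rw [hcoeff]
  exact Nat.cast_nonneg _

end RootSystem

theorem statement_6_general {V : Type*} [NormedAddCommGroup V] [InnerProductSpace ℝ V]
    (R Δ : Finset V) (hR : IsRootSystem R) (hΔ : IsBase R Δ)
    -- `Rp = R⁺` is the set of positive roots
    (Rp : Finset V)
    (hRp : ∀ β, β ∈ Rp ↔ β ∈ R ∧ ∃ c : V → ℕ, β = ∑ δ ∈ Δ, (c δ : ℝ) • δ)
    -- `ρ` is half the sum of the positive roots
    (ρ : V) (hρ : ρ = (2⁻¹ : ℝ) • ∑ β ∈ Rp, β)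
    (α : V) (hα : α ∈ Δ)
    -- the fundamental weight `ϖ = ϖ_α` and fundamental coweight `ϖv = ϖ_α∨`
    (ϖ : V) (hϖ : ∀ β ∈ Δ, ⟪ϖ, coroot β⟫ = if β = α then 1 else 0)
    (ϖv : V) (hϖv : ∀ β ∈ Δ, ⟪β, ϖv⟫ = if β = α then 1 else 0) :
    ∑ β ∈ R.filter (fun β => 0 < ⟪β, ϖv⟫), ⟪β, coroot α⟫ =
      2 * ⟪ρ, ϖv⟫ / ⟪ϖ, ϖv⟫ := by
  set T := R.filter (fun β => 0 < ⟪β, ϖv⟫)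
  have hΔ0 := hΔ.zero_notMem hR
  have hσ : ∑ β ∈ T, β = (∑ β ∈ T, ⟪β, coroot α⟫) • ϖ := by
    rw [← sum_inner]
    refine eq_smul_of_inner_coroot_eq_zero (hΔ.span_eq_top hR) hΔ0 hϖ fun δ hδ hδα => ?_
    rw [sum_inner]
    refine sum_inner_coroot_eq_zero_of_mapsTo (ne_of_mem_of_not_mem hδ hΔ0) ?_
    exact hR.mapsTo_rootReflection_filter (hΔ.subset hδ) (by rw [hϖv δ hδ, if_neg hδα])
  have hσv : ⟪∑ β ∈ T, β, ϖv⟫ = 2 * ⟪ρ, ϖv⟫ := by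
    rw [sum_inner, hΔ.sum_filter_inner_pos_eq_sum hRp hα hϖv, hρ, real_inner_smul_left, sum_inner]
    ring
  have hσpos : 0 < ⟪∑ β ∈ T, β, ϖv⟫ := by
    rw [sum_inner]
    refine Finset.sum_pos (fun β hβ => (Finset.mem_filter.mp hβ).2) ⟨α, ?_⟩
    exact Finset.mem_filter.mpr ⟨hΔ.subset hα, by rw [hϖv α hα, if_pos rfl]; exact one_pos⟩
  rw [hσ, real_inner_smul_left] at hσv hσpos
  rw [← hσv, mul_div_cancel_right₀ _ (right_ne_zero_of_mul hσpos.ne')]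

/-- `Σ_{β∈R, ⟨β,ϖ_α∨⟩>0} ⟨β,α∨⟩ = d_1(α) = 2⟨ρ,ϖ_α∨⟩/⟨ϖ_α,ϖ_α∨⟩`. -/
theorem statement_6 {V : Type*} [NormedAddCommGroup V] [InnerProductSpace ℝ V]
    [FiniteDimensional ℝ V]
    (R Δ : Finset V) (hR : IsRootSystem R) (hΔ : IsBase R Δ)
    -- `Rp = R⁺` is the set of positive roots
    (Rp : Finset V)
    (hRp : ∀ β, β ∈ Rp ↔ β ∈ R ∧ ∃ c : V → ℕ, β = ∑ δ ∈ Δ, (c δ : ℝ) • δ)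
    -- `ρ` is half the sum of the positive roots
    (ρ : V) (hρ : ρ = (2⁻¹ : ℝ) • ∑ β ∈ Rp, β)
    (α : V) (hα : α ∈ Δ)
    -- the fundamental weight `ϖ = ϖ_α` and fundamental coweight `ϖv = ϖ_α∨`
    (ϖ : V) (hϖ : ∀ β ∈ Δ, ⟪ϖ, coroot β⟫ = if β = α then 1 else 0)
    (ϖv : V) (hϖv : ∀ β ∈ Δ, ⟪β, ϖv⟫ = if β = α then 1 else 0) :
    ∑ β ∈ R.filter (fun β => 0 < ⟪β, ϖv⟫), ⟪β, coroot α⟫ =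
      2 * ⟪ρ, ϖv⟫ / ⟪ϖ, ϖv⟫ :=
  statement_6_general R Δ hR hΔ Rp hRp ρ hρ α hα ϖ hϖ ϖv hϖv
end
end

section
/- For every simple root α ∈ Δ: d_1(α) = ⟨ρ, λ_1(α∨)⟩ + 1, where d_1(α) = 2⟨ρ, ϖ_α∨⟩ / ⟨ϖ_α, ϖ_α∨⟩ and λ_1(α∨) is the highest coroot whose coefficient of α∨ in the simple-coroot expansion equals 1. -/
open scoped RealInnerProductSpace

attribute [local instance] Classical.propDecidable

noncomputable section

namespace RS9

variable {V : Type*} [NormedAddCommGroup V] [InnerProductSpace ℝ V]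

/-- The reflection in `v`. -/
def rf (v x : V) : V := x - ⟪x, coroot v⟫ • v

lemma coroot_zero : coroot (0 : V) = 0 := by simp [coroot]

lemma coroot_neg (v : V) : coroot (-v) = - coroot v := by
  simp [coroot, smul_neg]


lemma inner_coroot_self (v : V) (hv : v ≠ 0) : ⟪v, coroot v⟫ = 2 := by
  have h : ⟪v, v⟫ ≠ 0 := inner_self_ne_zero.mpr hv
  simp [coroot, real_inner_smul_right]
  field_simp

lemma rf_add (v x y : V) : rf v (x + y) = rf v x + rf v y := by
  simp only [rf, inner_add_left, add_smul]; abel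

lemma rf_smul (v : V) (c : ℝ) (x : V) : rf v (c • x) = c • rf v x := by
  simp only [rf, real_inner_smul_left, smul_sub, smul_smul]

lemma rf_neg (v x : V) : rf v (-x) = - rf v x := by
  have := rf_smul v (-1) x; simpa using this

lemma rf_zero (v : V) : rf v (0 : V) = 0 := by simp [rf]

lemma rf_self (v : V) (hv : v ≠ 0) : rf v v = -v := by
  rw [rf, inner_coroot_self v hv]; module

lemma inner_rf_rf (v x y : V) : ⟪rf v x, rf v y⟫ = ⟪x, y⟫ := by
  by_cases hv : v = 0
  · simp [rf, hv, coroot_zero]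
  · have hq : ⟪v, v⟫ ≠ 0 := inner_self_ne_zero.mpr hv
    simp only [rf, coroot, real_inner_smul_right, inner_sub_left, inner_sub_right,
      real_inner_smul_left, real_inner_smul_right]
    rw [real_inner_comm v x, real_inner_comm v y]
    field_simp
    ring

lemma rf_rf (v x : V) : rf v (rf v x) = x := by
  by_cases hv : v = 0
  · simp [rf, hv, coroot_zero]
  · have h2 : ⟪v, coroot v⟫ = 2 := inner_coroot_self v hv
    rw [rf, rf, inner_sub_left, real_inner_smul_left, h2]
    module

lemma rf_injective (v : V) : Function.Injective (rf v) := by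
  intro a b h
  rw [← rf_rf v a, h, rf_rf]

lemma coroot_rf (v x : V) : coroot (rf v x) = rf v (coroot x) := by
  have h : ⟪rf v x, rf v x⟫ = ⟪x, x⟫ := inner_rf_rf v x x
  rw [coroot, coroot, h, rf_smul]

/-- Action of a word (list) of reflections. -/
def act (l : List V) (x : V) : V := l.foldr rf x

@[simp] lemma act_nil (x : V) : act ([] : List V) x = x := rfl

@[simp] lemma act_cons (v : V) (l : List V) (x : V) :
    act (v :: l) x = rf v (act l x) := rfl

lemma act_add (l : List V) (x y : V) : act l (x + y) = act l x + act l y := by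
  induction l with
  | nil => rfl
  | cons v t ih => simp [ih, rf_add]

lemma act_smul (l : List V) (c : ℝ) (x : V) : act l (c • x) = c • act l x := by
  induction l with
  | nil => rfl
  | cons v t ih => simp [ih, rf_smul]

lemma act_neg (l : List V) (x : V) : act l (-x) = - act l x := by
  have := act_smul l (-1) x; simpa using this

lemma act_zero (l : List V) : act l (0 : V) = 0 := by
  have := act_smul l 0 0; simpa using this

lemma act_inner (l : List V) (x y : V) : ⟪act l x, act l y⟫ = ⟪x, y⟫ := by
  induction l with
  | nil => rfl
  | cons v t ih => simp [inner_rf_rf, ih]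

lemma act_coroot (l : List V) (x : V) : coroot (act l x) = act l (coroot x) := by
  induction l with
  | nil => rfl
  | cons v t ih => simp [coroot_rf, ih]

lemma act_append (l l' : List V) (x : V) : act (l ++ l') x = act l (act l' x) := by
  simp [act, List.foldr_append]

lemma act_reverse_act (l : List V) (x : V) : act l.reverse (act l x) = x := by
  induction l generalizing x with
  | nil => rfl
  | cons v t ih =>
    simp only [List.reverse_cons, act_cons, act_append]
    simp only [act_cons, act_nil, rf_rf]
    exact ih x

lemma act_act_reverse (l : List V) (x : V) : act l (act l.reverse x) = x := by
  have := act_reverse_act l.reverse x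
  rwa [List.reverse_reverse] at this

lemma act_adjoint (l : List V) (x y : V) : ⟪act l x, y⟫ = ⟪x, act l.reverse y⟫ := by
  conv_lhs => rw [← act_act_reverse l y]
  exact act_inner l x (act l.reverse y)

lemma act_sum {ι : Type*} (l : List V) (s : Finset ι) (f : ι → V) :
    act l (∑ i ∈ s, f i) = ∑ i ∈ s, act l (f i) := by
  classical
  induction s using Finset.induction_on with
  | empty => simp [act_zero]
  | insert _ _ h ih => simp [Finset.sum_insert h, act_add, ih]

end RS9
namespace RS9

variable {V : Type*} [NormedAddCommGroup V] [InnerProductSpace ℝ V]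

section RootFacts

variable (R Δ Rp : Finset V)

lemma root_ne_zero (hR : IsRootSystem R) {β : V} (hβ : β ∈ R) : β ≠ 0 := by
  intro h; rw [h] at hβ; exact hR.zero_not_mem hβ

lemma neg_mem (hR : IsRootSystem R) {β : V} (hβ : β ∈ R) : -β ∈ R := by
  have h := hR.reflect_mem β hβ β hβ
  have h2 : ⟪β, coroot β⟫ = 2 := inner_coroot_self β (root_ne_zero R hR hβ)
  rw [h2] at h
  have : β - (2:ℝ) • β = -β := by module
  rwa [this] at h

lemma rf_mem (hR : IsRootSystem R) {v β : V} (hv : v ∈ R) (hβ : β ∈ R) :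
    rf v β ∈ R := hR.reflect_mem v hv β hβ

lemma act_mem (hR : IsRootSystem R) {l : List V} (hl : ∀ v ∈ l, v ∈ R) {β : V}
    (hβ : β ∈ R) : act l β ∈ R := by
  induction l with
  | nil => simpa
  | cons v t ih =>
    have := rf_mem R hR (hl v (by simp)) (ih (fun u hu => hl u (by simp [hu])))
    simpa using this

/-- Uniqueness of coefficients in expansions over the base. -/
lemma unique (hΔ : IsBase R Δ) (c d : V → ℝ)
    (h : ∑ δ ∈ Δ, c δ • δ = ∑ δ ∈ Δ, d δ • δ) : ∀ γ ∈ Δ, c γ = d γ := by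
  intro γ hγ
  have h0 : ∑ i : Δ, (c (i : V) - d (i : V)) • (i : V) = 0 := by
    rw [Finset.sum_coe_sort Δ (fun δ => (c δ - d δ) • δ)]
    simp only [sub_smul, Finset.sum_sub_distrib, h, sub_self]
  have := Fintype.linearIndependent_iff.mp hΔ.indep
    (fun i : Δ => c (i : V) - d (i : V)) h0 ⟨γ, hγ⟩
  linarith [this]

lemma pos_or_neg (hR : IsRootSystem R) (hΔ : IsBase R Δ)
    (hRp : ∀ β, β ∈ Rp ↔ β ∈ R ∧ ∃ c : V → ℕ, β = ∑ δ ∈ Δ, (c δ : ℝ) • δ)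
    {β : V} (hβ : β ∈ R) : β ∈ Rp ∨ -β ∈ Rp := by
  rcases hΔ.expand β hβ with ⟨c, hc⟩ | ⟨c, hc⟩
  · exact Or.inl ((hRp β).mpr ⟨hβ, c, hc⟩)
  · refine Or.inr ((hRp (-β)).mpr ⟨neg_mem R hR hβ, c, ?_⟩)
    rw [hc, neg_neg]

lemma not_both (hR : IsRootSystem R) (hΔ : IsBase R Δ)
    (hRp : ∀ β, β ∈ Rp ↔ β ∈ R ∧ ∃ c : V → ℕ, β = ∑ δ ∈ Δ, (c δ : ℝ) • δ)
    {β : V} (h1 : β ∈ Rp) (h2 : -β ∈ Rp) : False := by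
  obtain ⟨hβR, c, hc⟩ := (hRp β).mp h1
  obtain ⟨hβR', d, hd⟩ := (hRp (-β)).mp h2
  have hsum : ∑ δ ∈ Δ, ((c δ : ℝ) + (d δ : ℝ)) • δ = ∑ δ ∈ Δ, (0:ℝ) • δ := by
    simp only [add_smul, Finset.sum_add_distrib, ← hc, ← hd]
    simp
  have hz : ∀ γ ∈ Δ, (c γ : ℝ) + (d γ : ℝ) = 0 :=
    unique R Δ hΔ _ _ hsum
  have hβ0 : β = 0 := by
    rw [hc]
    apply Finset.sum_eq_zero
    intro δ hδ
    have := hz δ hδ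
    have h1 : (0:ℝ) ≤ (c δ : ℝ) := Nat.cast_nonneg _
    have h2 : (0:ℝ) ≤ (d δ : ℝ) := Nat.cast_nonneg _
    have hc0 : (c δ : ℝ) = 0 := by linarith
    rw [hc0, zero_smul]
  rw [hβ0] at hβR
  exact hR.zero_not_mem hβR

end RootFacts

end RS9
namespace RS9

variable {V : Type*} [NormedAddCommGroup V] [InnerProductSpace ℝ V]

lemma inner_self_pos' {β : V} (h : β ≠ 0) : (0:ℝ) < ⟪β, β⟫ :=
  lt_of_le_of_ne real_inner_self_nonneg (Ne.symm (inner_self_ne_zero.mpr h))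

section RootFacts2

variable (R Δ Rp : Finset V)

lemma simple_mem_Rp (hΔ : IsBase R Δ)
    (hRp : ∀ β, β ∈ Rp ↔ β ∈ R ∧ ∃ c : V → ℕ, β = ∑ δ ∈ Δ, (c δ : ℝ) • δ)
    {δ : V} (hδ : δ ∈ Δ) : δ ∈ Rp := by
  refine (hRp δ).mpr ⟨hΔ.subset hδ, fun x => if x = δ then 1 else 0, ?_⟩
  rw [Finset.sum_eq_single δ]
  · simp
  · intro b hb hbne
    simp [hbne]
  · intro h; exact absurd hδ h

/-- Expansion of the coroot of a positive root over the simple coroots,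
with nonnegative coefficients. -/
lemma coroot_exp (hR : IsRootSystem R) (hΔ : IsBase R Δ)
    (hRp : ∀ β, β ∈ Rp ↔ β ∈ R ∧ ∃ c : V → ℕ, β = ∑ δ ∈ Δ, (c δ : ℝ) • δ)
    {β : V} (hβ : β ∈ Rp) :
    ∃ r : V → ℝ, (∀ d, 0 ≤ r d) ∧ coroot β = ∑ δ ∈ Δ, r δ • coroot δ := by
  obtain ⟨hβR, n, hn⟩ := (hRp β).mp hβ
  have hβ0 : β ≠ 0 := root_ne_zero R hR hβR
  obtain ⟨Q, hQ⟩ : ∃ Q : ℝ, ⟪β, β⟫ = Q := ⟨_, rfl⟩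
  have hq : (0:ℝ) < Q := hQ ▸ inner_self_pos' hβ0
  refine ⟨fun d => (n d : ℝ) * ⟪d, d⟫ / Q, ?_, ?_⟩
  · intro d
    have h1 : (0:ℝ) ≤ (n d : ℝ) := Nat.cast_nonneg _
    have h2 : (0:ℝ) ≤ ⟪d, d⟫ := real_inner_self_nonneg
    positivity
  · have e1 : coroot β = ∑ δ ∈ Δ, ((2 / Q) * (n δ : ℝ)) • δ := by
      rw [coroot, hQ, hn, Finset.smul_sum]
      simp [smul_smul]
    rw [e1]
    apply Finset.sum_congr rfl
    intro δ hδ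
    have hδ0 : δ ≠ 0 := root_ne_zero R hR (hΔ.subset hδ)
    have hqδ : ⟪δ, δ⟫ ≠ 0 := inner_self_ne_zero.mpr hδ0
    rw [coroot, smul_smul]
    congr 1
    field_simp

/-- `rf δ` permutes the positive roots other than `δ`. -/
lemma rf_perm (hR : IsRootSystem R) (hΔ : IsBase R Δ)
    (hRp : ∀ β, β ∈ Rp ↔ β ∈ R ∧ ∃ c : V → ℕ, β = ∑ δ ∈ Δ, (c δ : ℝ) • δ)
    {δ : V} (hδ : δ ∈ Δ) {β : V} (hβ : β ∈ Rp) (hne : β ≠ δ) :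
    rf δ β ∈ Rp ∧ rf δ β ≠ δ := by
  have hδR : δ ∈ R := hΔ.subset hδ
  have hδ0 : δ ≠ 0 := root_ne_zero R hR hδR
  obtain ⟨hβR, n, hn⟩ := (hRp β).mp hβ
  have hmem : rf δ β ∈ R := rf_mem R hR hδR hβR
  -- find γ0 ∈ Δ, γ0 ≠ δ, with n γ0 ≠ 0
  have hγ0 : ∃ γ0 ∈ Δ, γ0 ≠ δ ∧ n γ0 ≠ 0 := by
    by_contra hall
    push_neg at hall
    have hβδ : β = (n δ : ℝ) • δ := by
      rw [hn, Finset.sum_eq_single δ]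
      · intro b hb hbne
        simp [hall b hb hbne]
      · intro h; exact absurd hδ h
    rcases hR.reduced δ hδR (n δ : ℝ) (by rw [← hβδ]; exact hβR) with h1 | h1
    · rw [h1, one_smul] at hβδ; exact hne hβδ
    · have : (0:ℝ) ≤ (n δ : ℝ) := Nat.cast_nonneg _
      rw [h1] at this; linarith
  obtain ⟨γ0, hγ0Δ, hγ0ne, hγ0n⟩ := hγ0
  constructor
  · rcases pos_or_neg R Δ Rp hR hΔ hRp hmem with h | h
    · exact h
    · exfalso
      obtain ⟨hmR, m, hm⟩ := (hRp (-(rf δ β))).mp h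
      set k : ℝ := ⟪β, coroot δ⟫ with hk
      have hrfeq : rf δ β = ∑ γ ∈ Δ, ((n γ : ℝ) - (if γ = δ then k else 0)) • γ := by
        simp only [sub_smul, Finset.sum_sub_distrib, ← hn, ite_smul, zero_smul]
        rw [Finset.sum_ite_eq' Δ δ (fun γ => k • γ), if_pos hδ]
        rfl
      have hzero : ∑ γ ∈ Δ, (((n γ : ℝ) - (if γ = δ then k else 0)) + (m γ : ℝ)) • γ
          = ∑ γ ∈ Δ, (0:ℝ) • γ := by
        simp only [add_smul, Finset.sum_add_distrib, ← hrfeq, ← hm]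
        simp
      have := unique R Δ hΔ _ _ hzero γ0 hγ0Δ
      rw [if_neg hγ0ne] at this
      have h1 : (0:ℝ) ≤ (m γ0 : ℝ) := Nat.cast_nonneg _
      have h2 : (1:ℝ) ≤ (n γ0 : ℝ) := by
        have : 1 ≤ n γ0 := Nat.one_le_iff_ne_zero.mpr hγ0n
        exact_mod_cast this
      linarith
  · intro hcontra
    have hβeq : β = -δ := by
      have := congrArg (rf δ) hcontra
      rw [rf_rf, rf_self δ hδ0] at this
      exact this
    have hδRp : δ ∈ Rp := simple_mem_Rp R Δ Rp hΔ hRp hδ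
    rw [hβeq] at hβ
    exact not_both R Δ Rp hR hΔ hRp hδRp hβ

/-- Pairing of the sum of a reflection-stable set with a simple coroot. -/
lemma half_sum (hR : IsRootSystem R) (S : Finset V) {δ : V} (hδR : δ ∈ R)
    (hδS : δ ∈ S) (hnd : -δ ∉ S)
    (hperm : ∀ β ∈ S, β ≠ δ → rf δ β ∈ S ∧ rf δ β ≠ δ) :
    ⟪∑ β ∈ S, β, coroot δ⟫ = 2 := by
  have hδ0 : δ ≠ 0 := root_ne_zero R hR hδR
  have himg : S.image (rf δ) = insert (-δ) (S.erase δ) := by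
    ext γ
    simp only [Finset.mem_image, Finset.mem_insert, Finset.mem_erase]
    constructor
    · rintro ⟨β, hβ, rfl⟩
      by_cases hβδ : β = δ
      · rw [hβδ]; exact Or.inl (rf_self δ hδ0)
      · obtain ⟨h1, h2⟩ := hperm β hβ hβδ
        exact Or.inr ⟨h2, h1⟩
    · rintro (rfl | ⟨hne, hγ⟩)
      · exact ⟨δ, hδS, rf_self δ hδ0⟩
      · obtain ⟨h1, h2⟩ := hperm γ hγ hne
        exact ⟨rf δ γ, h1, rf_rf δ γ⟩
  have hinj : ∀ x ∈ S, ∀ y ∈ S, rf δ x = rf δ y → x = y :=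
    fun x _ y _ h => rf_injective δ h
  have hsum1 : ∑ γ ∈ S.image (rf δ), γ = ∑ β ∈ S, rf δ β :=
    Finset.sum_image hinj
  have hnd' : -δ ∉ S.erase δ := fun h => hnd (Finset.mem_of_mem_erase h)
  have hsum2 : ∑ γ ∈ S.image (rf δ), γ = -δ + (∑ β ∈ S, β - δ) := by
    rw [himg, Finset.sum_insert hnd', Finset.sum_erase_eq_sub hδS]
  have hsum3 : ∑ β ∈ S, rf δ β = ∑ β ∈ S, β - ⟪∑ β ∈ S, β, coroot δ⟫ • δ := by
    simp only [rf, Finset.sum_sub_distrib, ← Finset.sum_smul, sum_inner]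
  have heq : ∑ β ∈ S, β - ⟪∑ β ∈ S, β, coroot δ⟫ • δ
      = ∑ β ∈ S, β - ((2:ℝ) • δ) := by
    rw [← hsum3, ← hsum1, hsum2]
    have : (2:ℝ) • δ = δ + δ := by module
    rw [this]; abel
  have key : ⟪∑ β ∈ S, β, coroot δ⟫ • δ = (2:ℝ) • δ := by
    rwa [sub_right_inj] at heq
  exact smul_left_injective ℝ hδ0 key

end RootFacts2

end RS9
namespace RS9

variable {V : Type*} [NormedAddCommGroup V] [InnerProductSpace ℝ V]

section PhiFacts

variable (R Δ Rp : Finset V) (α ϖ : V)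

lemma phi_of_coroot (v x : V) : ⟪x, coroot v⟫ = (2 / ⟪v, v⟫) * ⟪x, v⟫ := by
  rw [coroot, real_inner_smul_right]

lemma phi_simple_ne (hR : IsRootSystem R) (hΔ : IsBase R Δ)
    (hϖ : ∀ β ∈ Δ, ⟪ϖ, coroot β⟫ = if β = α then 1 else 0)
    {δ : V} (hδ : δ ∈ Δ) (hne : δ ≠ α) : ⟪ϖ, δ⟫ = 0 := by
  have h := hϖ δ hδ
  rw [if_neg hne, phi_of_coroot] at h
  have hδ0 : δ ≠ 0 := root_ne_zero R hR (hΔ.subset hδ)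
  have hq : ⟪δ, δ⟫ ≠ 0 := inner_self_ne_zero.mpr hδ0
  have h2 : (2:ℝ) / ⟪δ, δ⟫ ≠ 0 := div_ne_zero two_ne_zero hq
  exact (mul_eq_zero.mp h).resolve_left h2

lemma phi_alpha (hR : IsRootSystem R) (hΔ : IsBase R Δ) (hα : α ∈ Δ)
    (hϖ : ∀ β ∈ Δ, ⟪ϖ, coroot β⟫ = if β = α then 1 else 0) :
    ⟪ϖ, α⟫ = ⟪α, α⟫ / 2 := by
  have h := hϖ α hα
  rw [if_pos rfl, phi_of_coroot] at h
  have hα0 : α ≠ 0 := root_ne_zero R hR (hΔ.subset hα)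
  have hq : ⟪α, α⟫ ≠ 0 := inner_self_ne_zero.mpr hα0
  field_simp at h ⊢
  linarith

lemma act_phi (hR : IsRootSystem R) (hΔ : IsBase R Δ)
    (hϖ : ∀ β ∈ Δ, ⟪ϖ, coroot β⟫ = if β = α then 1 else 0)
    {l : List V} (hl : ∀ v ∈ l, v ∈ Δ ∧ v ≠ α) (x : V) :
    ⟪ϖ, act l x⟫ = ⟪ϖ, x⟫ := by
  induction l with
  | nil => rfl
  | cons v t ih =>
    have hv := hl v (by simp)
    have h0 : ⟪ϖ, v⟫ = 0 := phi_simple_ne R Δ α ϖ hR hΔ hϖ hv.1 hv.2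
    have ih' := ih (fun u hu => hl u (by simp [hu]))
    simp only [act_cons, rf, inner_sub_right, real_inner_smul_right, h0, mul_zero,
      sub_zero, ih']

lemma phi_sum_coroot (hα : α ∈ Δ)
    (hϖ : ∀ β ∈ Δ, ⟪ϖ, coroot β⟫ = if β = α then 1 else 0)
    (r : V → ℝ) : ⟪ϖ, ∑ δ ∈ Δ, r δ • coroot δ⟫ = r α := by
  rw [inner_sum]
  rw [Finset.sum_eq_single α]
  · rw [real_inner_smul_right, hϖ α hα, if_pos rfl, mul_one]
  · intro b hb hbne
    rw [real_inner_smul_right, hϖ b hb, if_neg hbne, mul_zero]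
  · intro h; exact absurd hα h

lemma level_pos_mem (hR : IsRootSystem R) (hΔ : IsBase R Δ)
    (hRp : ∀ β, β ∈ Rp ↔ β ∈ R ∧ ∃ c : V → ℕ, β = ∑ δ ∈ Δ, (c δ : ℝ) • δ)
    (hα : α ∈ Δ) (hϖ : ∀ β ∈ Δ, ⟪ϖ, coroot β⟫ = if β = α then 1 else 0)
    {β : V} (hβ : β ∈ R) (hpos : 0 < ⟪ϖ, coroot β⟫) : β ∈ Rp := by
  rcases pos_or_neg R Δ Rp hR hΔ hRp hβ with h | h
  · exact h
  · exfalso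
    obtain ⟨r, hr0, hr⟩ := coroot_exp R Δ Rp hR hΔ hRp h
    have h1 : ⟪ϖ, coroot (-β)⟫ = r α := by rw [hr]; exact phi_sum_coroot Δ α ϖ hα hϖ r
    rw [coroot_neg, inner_neg_right] at h1
    have := hr0 α
    linarith

lemma level_zero_exp (hR : IsRootSystem R) (hΔ : IsBase R Δ)
    (hRp : ∀ β, β ∈ Rp ↔ β ∈ R ∧ ∃ c : V → ℕ, β = ∑ δ ∈ Δ, (c δ : ℝ) • δ)
    (hα : α ∈ Δ) (hϖ : ∀ β ∈ Δ, ⟪ϖ, coroot β⟫ = if β = α then 1 else 0)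
    {β : V} (hβ : β ∈ Rp) (hlev : ⟪ϖ, coroot β⟫ = 0) :
    ∃ n : V → ℕ, β = ∑ δ ∈ Δ, (n δ : ℝ) • δ ∧ n α = 0 := by
  obtain ⟨hβR, n, hn⟩ := (hRp β).mp hβ
  refine ⟨n, hn, ?_⟩
  have hβ0 : β ≠ 0 := root_ne_zero R hR hβR
  have hQ : ⟪β, β⟫ ≠ 0 := inner_self_ne_zero.mpr hβ0
  have hα0 : α ≠ 0 := root_ne_zero R hR (hΔ.subset hα)
  have hqα : ⟪α, α⟫ ≠ 0 := inner_self_ne_zero.mpr hα0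
  have hϖβ : ⟪ϖ, β⟫ = (n α : ℝ) * (⟪α, α⟫ / 2) := by
    rw [hn, inner_sum, Finset.sum_eq_single α]
    · rw [real_inner_smul_right, phi_alpha R Δ α ϖ hR hΔ hα hϖ]
    · intro b hb hbne
      rw [real_inner_smul_right, phi_simple_ne R Δ α ϖ hR hΔ hϖ hb hbne, mul_zero]
    · intro h; exact absurd hα h
  rw [phi_of_coroot, hϖβ] at hlev
  have h2 : (2:ℝ) / ⟪β, β⟫ ≠ 0 := by simp [hQ, hβ0]
  have hna : (n α : ℝ) = 0 := by
    rcases mul_eq_zero.mp hlev with h | h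
    · exact absurd h h2
    · rcases mul_eq_zero.mp h with h' | h'
      · exact h'
      · exfalso; exact hqα (by linarith)
  exact_mod_cast hna

/-- Integrality: a word of simple reflections applied to `coroot α` has integer
coefficients over the simple coroots. -/
lemma act_coroot_int (hR : IsRootSystem R) (hΔ : IsBase R Δ) (hα : α ∈ Δ)
    (t : List V) (ht : ∀ v ∈ t, v ∈ Δ) :
    ∃ cz : V → ℤ, act t (coroot α) = ∑ δ ∈ Δ, (cz δ : ℝ) • coroot δ := by
  induction t with
  | nil =>
    refine ⟨fun x => if x = α then 1 else 0, ?_⟩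
    rw [act_nil, Finset.sum_eq_single α]
    · simp
    · intro b hb hbne; simp [hbne]
    · intro h; exact absurd hα h
  | cons v t' ih =>
    obtain ⟨cz, hcz⟩ := ih (fun u hu => ht u (by simp [hu]))
    have hvΔ : v ∈ Δ := ht v (by simp)
    have hvR : v ∈ R := hΔ.subset hvΔ
    have htR : ∀ u ∈ t', u ∈ R := fun u hu => hΔ.subset (ht u (by simp [hu]))
    have hroot : act t' α ∈ R := act_mem R hR htR (hΔ.subset hα)
    obtain ⟨nz, hnz⟩ := hR.crystallographic (act t' α) hroot v hvR
    have hx : act t' (coroot α) = coroot (act t' α) := (act_coroot t' α).symm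
    have hsub : ⟪act t' (coroot α), coroot v⟫ • v = (nz : ℝ) • coroot v := by
      rw [hx, phi_of_coroot, real_inner_comm v (coroot (act t' α)), hnz, coroot,
        smul_smul]
      congr 1
      ring
    have hsum : ∑ x ∈ Δ, (if x = v then (nz : ℝ) else 0) • coroot x
        = (nz : ℝ) • coroot v := by
      rw [Finset.sum_eq_single v]
      · rw [if_pos rfl]
      · intro b hb hbne; rw [if_neg hbne, zero_smul]
      · intro h; exact absurd hvΔ h
    refine ⟨fun x => cz x - (if x = v then nz else 0), ?_⟩
    rw [act_cons, rf, hsub, hcz]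
    simp only [Int.cast_sub, Int.cast_ite, Int.cast_zero, sub_smul,
      Finset.sum_sub_distrib, hsum]

end PhiFacts

end RS9
namespace RS9

variable {V : Type*} [NormedAddCommGroup V] [InnerProductSpace ℝ V]

section W0

variable (R Δ Rp : Finset V) (α ϖ : V)

/-- Level (⟪ϖ, coroot ·⟫) is preserved by reflections in simple roots ≠ α. -/
lemma level_rf (hR : IsRootSystem R) (hΔ : IsBase R Δ)
    (hϖ : ∀ β ∈ Δ, ⟪ϖ, coroot β⟫ = if β = α then 1 else 0)
    {δ : V} (hδ : δ ∈ Δ) (hne : δ ≠ α) (x : V) :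
    ⟪ϖ, coroot (rf δ x)⟫ = ⟪ϖ, coroot x⟫ := by
  rw [coroot_rf]
  have h0 : ⟪ϖ, δ⟫ = 0 := phi_simple_ne R Δ α ϖ hR hΔ hϖ hδ hne
  simp only [rf, inner_sub_right, real_inner_smul_right, h0, mul_zero, sub_zero]

lemma level_act (hR : IsRootSystem R) (hΔ : IsBase R Δ)
    (hϖ : ∀ β ∈ Δ, ⟪ϖ, coroot β⟫ = if β = α then 1 else 0)
    {l : List V} (hl : ∀ v ∈ l, v ∈ Δ ∧ v ≠ α) (x : V) :
    ⟪ϖ, coroot (act l x)⟫ = ⟪ϖ, coroot x⟫ := by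
  rw [act_coroot]
  exact act_phi R Δ α ϖ hR hΔ hϖ hl (coroot x)

lemma simple_mem_RJp (hΔ : IsBase R Δ)
    (hRp : ∀ β, β ∈ Rp ↔ β ∈ R ∧ ∃ c : V → ℕ, β = ∑ δ ∈ Δ, (c δ : ℝ) • δ)
    (hϖ : ∀ β ∈ Δ, ⟪ϖ, coroot β⟫ = if β = α then 1 else 0)
    {δ : V} (hδ : δ ∈ Δ) (hne : δ ≠ α) :
    δ ∈ Rp.filter (fun β => ⟪ϖ, coroot β⟫ = 0) := by
  rw [Finset.mem_filter]
  exact ⟨simple_mem_Rp R Δ Rp hΔ hRp hδ, by rw [hϖ δ hδ, if_neg hne]⟩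

lemma rf_perm_RJp (hR : IsRootSystem R) (hΔ : IsBase R Δ)
    (hRp : ∀ β, β ∈ Rp ↔ β ∈ R ∧ ∃ c : V → ℕ, β = ∑ δ ∈ Δ, (c δ : ℝ) • δ)
    (hϖ : ∀ β ∈ Δ, ⟪ϖ, coroot β⟫ = if β = α then 1 else 0)
    {δ : V} (hδ : δ ∈ Δ) (hne : δ ≠ α)
    {β : V} (hβ : β ∈ Rp.filter (fun β => ⟪ϖ, coroot β⟫ = 0)) (hβδ : β ≠ δ) :
    rf δ β ∈ Rp.filter (fun β => ⟪ϖ, coroot β⟫ = 0) ∧ rf δ β ≠ δ := by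
  rw [Finset.mem_filter] at hβ
  obtain ⟨h1, h2⟩ := rf_perm R Δ Rp hR hΔ hRp hδ hβ.1 hβδ
  refine ⟨Finset.mem_filter.mpr ⟨h1, ?_⟩, h2⟩
  rw [level_rf R Δ α ϖ hR hΔ hϖ hδ hne, hβ.2]

/-- Existence of a `W_J`-word sending all positive `J`-roots to negatives. -/
lemma exists_w0 (hR : IsRootSystem R) (hΔ : IsBase R Δ)
    (hRp : ∀ β, β ∈ Rp ↔ β ∈ R ∧ ∃ c : V → ℕ, β = ∑ δ ∈ Δ, (c δ : ℝ) • δ)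
    (hα : α ∈ Δ) (hϖ : ∀ β ∈ Δ, ⟪ϖ, coroot β⟫ = if β = α then 1 else 0) :
    ∃ l : List V, (∀ v ∈ l, v ∈ Δ ∧ v ≠ α) ∧
      ∀ β ∈ Rp.filter (fun β => ⟪ϖ, coroot β⟫ = 0),
        -(act l β) ∈ Rp.filter (fun β => ⟪ϖ, coroot β⟫ = 0) := by
  classical
  set RJp := Rp.filter (fun β => ⟪ϖ, coroot β⟫ = 0) with hRJp
  -- entries of a J-word are roots
  have hwR : ∀ (l : List V), (∀ v ∈ l, v ∈ Δ ∧ v ≠ α) → ∀ v ∈ l, v ∈ R :=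
    fun l hl v hv => hΔ.subset (hl v hv).1
  -- if a J-word doesn't send everything negative, some simple J-root stays positive
  have hfind : ∀ (l : List V), (∀ v ∈ l, v ∈ Δ ∧ v ≠ α) →
      (¬ ∀ β ∈ RJp, -(act l β) ∈ RJp) →
      ∃ δ, (δ ∈ Δ ∧ δ ≠ α) ∧ δ ∈ RJp ∧ act l δ ∈ Rp := by
    intro l hl hndone
    by_contra hno
    push_neg at hno
    apply hndone
    intro β hβ
    have hβ' := Finset.mem_filter.mp hβ
    have hβR : β ∈ R := ((hRp β).mp hβ'.1).1
    -- coefficients of β, supported away from α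
    obtain ⟨n, hn, hnα⟩ := level_zero_exp R Δ Rp α ϖ hR hΔ hRp hα hϖ hβ'.1 hβ'.2
    -- each simple J-root is sent to a negative root by `act l`
    have hmδ : ∀ δ : V, ∃ mδ : V → ℕ, (δ ∈ Δ ∧ δ ≠ α) →
        -(act l δ) = ∑ δ' ∈ Δ, (mδ δ' : ℝ) • δ' := by
      intro δ
      by_cases hδ : δ ∈ Δ ∧ δ ≠ α
      · have hδRJp : δ ∈ RJp := simple_mem_RJp R Δ Rp α ϖ hΔ hRp hϖ hδ.1 hδ.2
        have hnot : act l δ ∉ Rp := hno δ hδ hδRJp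
        have hroot : act l δ ∈ R := act_mem R hR (hwR l hl) (hΔ.subset hδ.1)
        have hneg : -(act l δ) ∈ Rp :=
          (pos_or_neg R Δ Rp hR hΔ hRp hroot).resolve_left hnot
        obtain ⟨_, m, hm⟩ := (hRp _).mp hneg
        exact ⟨m, fun _ => hm⟩
      · exact ⟨0, fun h => absurd h hδ⟩
    choose m hm using hmδ
    -- expansion of -(act l β) with natural coefficients
    have hexp : -(act l β) = ∑ δ' ∈ Δ,
        ((∑ δ ∈ Δ.erase α, n δ * m δ δ' : ℕ) : ℝ) • δ' := by
      have e1 : act l β = ∑ δ ∈ Δ, (n δ : ℝ) • act l δ := by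
        rw [hn, act_sum]
        exact Finset.sum_congr rfl fun δ _ => act_smul l _ δ
      have e2 : ∑ δ ∈ Δ, (n δ : ℝ) • act l δ = ∑ δ ∈ Δ.erase α, (n δ : ℝ) • act l δ := by
        rw [← Finset.sum_erase_add Δ _ hα, hnα]
        simp
      have e3 : ∀ δ ∈ Δ.erase α, (n δ : ℝ) • act l δ
          = -(∑ δ' ∈ Δ, ((n δ * m δ δ' : ℕ) : ℝ) • δ') := by
        intro δ hδe
        have hδΔ : δ ∈ Δ := Finset.mem_of_mem_erase hδe
        have hδα : δ ≠ α := Finset.ne_of_mem_erase hδe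
        have := hm δ ⟨hδΔ, hδα⟩
        have hald : act l δ = -(∑ δ' ∈ Δ, (m δ δ' : ℝ) • δ') := by
          rw [← this, neg_neg]
        rw [hald, smul_neg, Finset.smul_sum]
        congr 1
        apply Finset.sum_congr rfl
        intro δ' _
        rw [smul_smul]
        push_cast
        ring_nf
      rw [e1, e2, Finset.sum_congr rfl e3, ← Finset.sum_neg_distrib]
      simp only [neg_neg]
      rw [Finset.sum_comm]
      apply Finset.sum_congr rfl
      intro δ' _
      rw [← Finset.sum_smul]
      congr 1
      push_cast
      rfl
    have hmemR : -(act l β) ∈ R := neg_mem R hR (act_mem R hR (hwR l hl) hβR)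
    have hmemRp : -(act l β) ∈ Rp := (hRp _).mpr ⟨hmemR, _, hexp⟩
    refine Finset.mem_filter.mpr ⟨hmemRp, ?_⟩
    rw [coroot_neg, inner_neg_right, level_act R Δ α ϖ hR hΔ hϖ hl, hβ'.2, neg_zero]
  -- main induction on the number of positive J-roots kept positive
  have key : ∀ n : ℕ, ∀ l : List V, (∀ v ∈ l, v ∈ Δ ∧ v ≠ α) →
      (RJp.filter (fun β => act l β ∈ Rp)).card ≤ n →
      ∃ l' : List V, (∀ v ∈ l', v ∈ Δ ∧ v ≠ α) ∧ ∀ β ∈ RJp, -(act l' β) ∈ RJp := by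
    intro n
    induction n with
    | zero =>
      intro l hl hcard
      by_cases hdone : ∀ β ∈ RJp, -(act l β) ∈ RJp
      · exact ⟨l, hl, hdone⟩
      · exfalso
        obtain ⟨δ, hδJ, hδRJp, hδpos⟩ := hfind l hl hdone
        have : δ ∈ RJp.filter (fun β => act l β ∈ Rp) :=
          Finset.mem_filter.mpr ⟨hδRJp, hδpos⟩
        have := Finset.card_pos.mpr ⟨δ, this⟩
        omega
    | succ n ih =>
      intro l hl hcard
      by_cases hdone : ∀ β ∈ RJp, -(act l β) ∈ RJp
      · exact ⟨l, hl, hdone⟩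
      · obtain ⟨δ, hδJ, hδRJp, hδpos⟩ := hfind l hl hdone
        have hδS : δ ∈ RJp.filter (fun β => act l β ∈ Rp) :=
          Finset.mem_filter.mpr ⟨hδRJp, hδpos⟩
        set l'' : List V := l ++ [δ] with hl''def
        have hl'' : ∀ v ∈ l'', v ∈ Δ ∧ v ≠ α := by
          intro v hv
          rw [hl''def, List.mem_append] at hv
          rcases hv with hv | hv
          · exact hl v hv
          · rw [List.mem_singleton] at hv
            rw [hv]; exact hδJ
        have hact'' : ∀ x, act l'' x = act l (rf δ x) := by
          intro x
          rw [hl''def, act_append]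
          simp
        have himg : RJp.filter (fun β => act l'' β ∈ Rp)
            = ((RJp.filter (fun β => act l β ∈ Rp)).erase δ).image (rf δ) := by
          ext β
          simp only [Finset.mem_filter, Finset.mem_image, Finset.mem_erase]
          constructor
          · rintro ⟨hβRJp, hβpos⟩
            rw [hact''] at hβpos
            have hβδ : β ≠ δ := by
              intro h
              rw [h, rf_self δ (root_ne_zero R hR (hΔ.subset hδJ.1)), act_neg] at hβpos
              exact not_both R Δ Rp hR hΔ hRp hδpos hβpos
            obtain ⟨hγ1, hγ2⟩ := rf_perm_RJp R Δ Rp α ϖ hR hΔ hRp hϖ hδJ.1 hδJ.2 hβRJp hβδ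
            exact ⟨rf δ β, ⟨hγ2, hγ1, hβpos⟩, rf_rf δ β⟩
          · rintro ⟨γ, ⟨hγδ, hγRJp, hγpos⟩, rfl⟩
            obtain ⟨hγ1, _⟩ := rf_perm_RJp R Δ Rp α ϖ hR hΔ hRp hϖ hδJ.1 hδJ.2 hγRJp hγδ
            refine ⟨hγ1, ?_⟩
            rw [hact'', rf_rf]
            exact hγpos
        have hcard'' : (RJp.filter (fun β => act l'' β ∈ Rp)).card ≤ n := by
          rw [himg, Finset.card_image_of_injective _ (rf_injective δ),
            Finset.card_erase_of_mem hδS]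
          omega
        exact ih l'' hl'' hcard''
  obtain ⟨l', hl', hneg⟩ := key (RJp.filter (fun β => act ([] : List V) β ∈ Rp)).card
    [] (by simp) le_rfl
  exact ⟨l', hl', hneg⟩

end W0

end RS9
open RS9 in
/-- `d_1(α) = ⟨ρ, λ_1(α∨)⟩ + 1`, where
`d_1(α) = 2⟨ρ,ϖ_α∨⟩/⟨ϖ_α,ϖ_α∨⟩`. -/
theorem statement_9 {V : Type*} [NormedAddCommGroup V] [InnerProductSpace ℝ V]
    [FiniteDimensional ℝ V]
    (R Δ : Finset V) (hR : IsRootSystem R) (hΔ : IsBase R Δ)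
    -- `Rp = R⁺` is the set of positive roots
    (Rp : Finset V)
    (hRp : ∀ β, β ∈ Rp ↔ β ∈ R ∧ ∃ c : V → ℕ, β = ∑ δ ∈ Δ, (c δ : ℝ) • δ)
    -- `ρ` is half the sum of the positive roots
    (ρ : V) (hρ : ρ = (2⁻¹ : ℝ) • ∑ β ∈ Rp, β)
    (α : V) (hα : α ∈ Δ)
    -- the fundamental weight `ϖ = ϖ_α` and fundamental coweight `ϖv = ϖ_α∨`
    (ϖ : V) (hϖ : ∀ β ∈ Δ, ⟪ϖ, coroot β⟫ = if β = α then 1 else 0)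
    (ϖv : V) (hϖv : ∀ β ∈ Δ, ⟪β, ϖv⟫ = if β = α then 1 else 0)
    -- `lam1v = λ_1(α∨)` is the highest coroot whose `α∨`-coefficient is `1`
    (lam1v : V) (hl1vmem : ∃ γ ∈ R, coroot γ = lam1v)
    (hl1vcoef : ∃ c : V → ℕ, lam1v = ∑ δ ∈ Δ, (c δ : ℝ) • coroot δ ∧ c α = 1)
    (hl1vhigh : ∀ γ ∈ R, ∀ c : V → ℕ,
      coroot γ = ∑ δ ∈ Δ, (c δ : ℝ) • coroot δ → c α = 1 →
      ∃ d : V → ℕ, lam1v - coroot γ = ∑ δ ∈ Δ, (d δ : ℝ) • coroot δ) :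
    2 * ⟪ρ, ϖv⟫ / ⟪ϖ, ϖv⟫ = ⟪ρ, lam1v⟫ + 1 := by
  have hαR : α ∈ R := hΔ.subset hα
  have hα0 : α ≠ 0 := root_ne_zero R hR hαR
  -- Step 1: ⟪ρ, coroot δ⟫ = 1 for all simple δ
  have hρ1 : ∀ δ ∈ Δ, ⟪ρ, coroot δ⟫ = 1 := by
    intro δ hδ
    have hδR : δ ∈ R := hΔ.subset hδ
    have hδRp : δ ∈ Rp := simple_mem_Rp R Δ Rp hΔ hRp hδ
    have hnd : -δ ∉ Rp := fun h => not_both R Δ Rp hR hΔ hRp hδRp h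
    have hperm : ∀ β ∈ Rp, β ≠ δ → rf δ β ∈ Rp ∧ rf δ β ≠ δ :=
      fun β hβ hne => rf_perm R Δ Rp hR hΔ hRp hδ hβ hne
    have h2 := half_sum R hR Rp hδR hδRp hnd hperm
    rw [hρ, real_inner_smul_left, h2]
    norm_num
  -- the J-positive roots and their half sum
  set RJp : Finset V := Rp.filter (fun β => ⟪ϖ, coroot β⟫ = 0) with hRJpdef
  set ρJ : V := (2⁻¹ : ℝ) • ∑ β ∈ RJp, β with hρJdef
  have hρJ1 : ∀ δ ∈ Δ, δ ≠ α → ⟪ρJ, coroot δ⟫ = 1 := by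
    intro δ hδ hne
    have hδR : δ ∈ R := hΔ.subset hδ
    have hδRJp : δ ∈ RJp := simple_mem_RJp R Δ Rp α ϖ hΔ hRp hϖ hδ hne
    have hnd : -δ ∉ RJp := by
      intro h
      have := (Finset.mem_filter.mp h).1
      exact not_both R Δ Rp hR hΔ hRp (simple_mem_Rp R Δ Rp hΔ hRp hδ) this
    have hperm : ∀ β ∈ RJp, β ≠ δ → rf δ β ∈ RJp ∧ rf δ β ≠ δ :=
      fun β hβ hβδ => rf_perm_RJp R Δ Rp α ϖ hR hΔ hRp hϖ hδ hne hβ hβδ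
    have h2 := half_sum R hR RJp hδR hδRJp hnd hperm
    rw [hρJdef, real_inner_smul_left, h2]
    norm_num
  -- ρ - ρJ kills coroots of J-positive roots
  have orth2 : ∀ β ∈ RJp, ⟪ρ - ρJ, coroot β⟫ = 0 := by
    intro β hβ
    obtain ⟨hβRp, hβlev⟩ := Finset.mem_filter.mp hβ
    obtain ⟨r, hr0, hr⟩ := coroot_exp R Δ Rp hR hΔ hRp hβRp
    have hrα : r α = 0 := by
      rw [← phi_sum_coroot Δ α ϖ hα hϖ r, ← hr]
      exact hβlev
    rw [hr, inner_sum]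
    apply Finset.sum_eq_zero
    intro δ hδ
    rw [real_inner_smul_right]
    by_cases h : δ = α
    · rw [h, hrα, zero_mul]
    · rw [inner_sub_left, hρ1 δ hδ, hρJ1 δ hδ h, sub_self, mul_zero]
  -- the longest element of W_J as a word l0
  obtain ⟨l0, hl0J, hl0neg⟩ := exists_w0 R Δ Rp α ϖ hR hΔ hRp hα hϖ
  have hl0J' : ∀ v ∈ l0.reverse, v ∈ Δ ∧ v ≠ α := by
    intro v hv
    exact hl0J v (List.mem_reverse.mp hv)
  have hl0R : ∀ v ∈ l0, v ∈ R := fun v hv => hΔ.subset (hl0J v hv).1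
  have hl0R' : ∀ v ∈ l0.reverse, v ∈ R := fun v hv => hΔ.subset (hl0J' v hv).1
  -- the reverse word also maps RJp to -RJp
  have hW'RJp : ∀ β ∈ RJp, -(act l0.reverse β) ∈ RJp := by
    intro β hβ
    obtain ⟨hβRp, hβlev⟩ := Finset.mem_filter.mp hβ
    have hβR : β ∈ R := ((hRp β).mp hβRp).1
    have hroot : act l0.reverse β ∈ R := act_mem R hR hl0R' hβR
    have hlev' : ⟪ϖ, coroot (act l0.reverse β)⟫ = 0 := by
      rw [level_act R Δ α ϖ hR hΔ hϖ hl0J']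
      exact hβlev
    rcases pos_or_neg R Δ Rp hR hΔ hRp hroot with h | h
    · exfalso
      have hmem : act l0.reverse β ∈ RJp := Finset.mem_filter.mpr ⟨h, hlev'⟩
      have h2 := hl0neg _ hmem
      rw [act_act_reverse] at h2
      exact not_both R Δ Rp hR hΔ hRp hβRp (Finset.mem_filter.mp h2).1
    · refine Finset.mem_filter.mpr ⟨h, ?_⟩
      rw [coroot_neg, inner_neg_right, hlev', neg_zero]
  -- the reverse word sends ρJ to -ρJ
  have hW'ρJ : act l0.reverse ρJ = -ρJ := by
    have hinj : Function.Injective (fun β : V => -(act l0.reverse β)) := by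
      intro a b h
      simp only [neg_inj] at h
      have := congrArg (act l0) h
      rwa [act_act_reverse, act_act_reverse] at this
    have himg : RJp.image (fun β => -(act l0.reverse β)) = RJp := by
      apply Finset.eq_of_subset_of_card_le
      · intro γ hγ
        obtain ⟨β, hβ, rfl⟩ := Finset.mem_image.mp hγ
        exact hW'RJp β hβ
      · rw [Finset.card_image_of_injective _ hinj]
    have hsum : ∑ β ∈ RJp, act l0.reverse β = -∑ β ∈ RJp, β := by
      have h1 : ∑ γ ∈ RJp.image (fun β => -(act l0.reverse β)), γ
          = ∑ β ∈ RJp, -(act l0.reverse β) :=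
        Finset.sum_image (fun x hx y hy h => hinj h)
      rw [himg] at h1
      have h2 : ∑ β ∈ RJp, -(act l0.reverse β) = -∑ β ∈ RJp, act l0.reverse β := by
        rw [← Finset.sum_neg_distrib]
      rw [h2] at h1
      have h3 := congrArg Neg.neg h1
      rw [neg_neg] at h3
      exact h3.symm
    rw [hρJdef, act_smul, act_sum, hsum]
    simp
  -- pairing of ρ with the image of simple J-coroots under the word l0
  have hWcδ : ∀ δ ∈ Δ, δ ≠ α → ⟪ρ, act l0 (coroot δ)⟫ = -1 := by
    intro δ hδ hne
    have hδRJp : δ ∈ RJp := simple_mem_RJp R Δ Rp α ϖ hΔ hRp hϖ hδ hne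
    have hβ' : -(act l0 δ) ∈ RJp := hl0neg δ hδRJp
    have h1 : ⟪ρJ, act l0 (coroot δ)⟫ = -1 := by
      have hadj := act_adjoint l0 (coroot δ) ρJ
      rw [hW'ρJ, inner_neg_right] at hadj
      rw [real_inner_comm (act l0 (coroot δ)) ρJ, hadj,
        real_inner_comm ρJ (coroot δ), hρJ1 δ hδ hne]
    have h2 : ⟪ρ - ρJ, act l0 (coroot δ)⟫ = 0 := by
      have hco : act l0 (coroot δ) = -(coroot (-(act l0 δ))) := by
        rw [coroot_neg, neg_neg, act_coroot]
      rw [hco, inner_neg_right, orth2 _ hβ', neg_zero]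
    rw [inner_sub_left] at h2
    linarith
  -- the vector e' = ρ + w0⁻¹ ρ
  set e' : V := ρ + act l0.reverse ρ with he'def
  have he'cδ : ∀ δ ∈ Δ, δ ≠ α → ⟪e', coroot δ⟫ = 0 := by
    intro δ hδ hne
    rw [he'def, inner_add_left]
    have hadj := act_adjoint l0.reverse ρ (coroot δ)
    rw [List.reverse_reverse] at hadj
    rw [hadj, hWcδ δ hδ hne, hρ1 δ hδ]
    ring
  -- coordinates of arbitrary vectors over Δ
  have hspan : Submodule.span ℝ (↑Δ : Set V) = ⊤ := by
    rw [eq_top_iff, ← hR.span_eq_top]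
    apply Submodule.span_le.mpr
    intro β hβ
    rcases hΔ.expand β (Finset.mem_coe.mp hβ) with ⟨c, hc⟩ | ⟨c, hc⟩
    · rw [hc]
      exact Submodule.sum_mem _ (fun δ hδ =>
        Submodule.smul_mem _ _ (Submodule.subset_span (Finset.mem_coe.mpr hδ)))
    · rw [hc]
      exact Submodule.neg_mem _ (Submodule.sum_mem _ (fun δ hδ =>
        Submodule.smul_mem _ _ (Submodule.subset_span (Finset.mem_coe.mpr hδ))))
  have hcoords : ∀ x : V, ∃ c : V → ℝ, x = ∑ δ ∈ Δ, c δ • δ := by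
    intro x
    let b : Module.Basis (↥Δ) ℝ V := Module.Basis.mk hΔ.indep
      (by simpa using hspan.ge)
    refine ⟨fun v => if h : v ∈ Δ then b.repr x ⟨v, h⟩ else 0, ?_⟩
    have h2 : ∑ δ ∈ Δ, (if h : δ ∈ Δ then b.repr x ⟨δ, h⟩ else 0) • δ
        = ∑ i : ↥Δ, b.repr x i • (i : V) := by
      rw [← Finset.sum_coe_sort Δ
        (fun δ => (if h : δ ∈ Δ then b.repr x ⟨δ, h⟩ else 0) • δ)]
      apply Finset.sum_congr rfl
      intro i _
      rw [dif_pos i.2]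
    rw [h2]
    conv_lhs => rw [← b.sum_repr x]
    apply Finset.sum_congr rfl
    intro i _
    congr 1
    exact Module.Basis.mk_apply _ _ _
  -- nondegeneracy of ⟪ϖ, ϖv⟫
  have hϖϖv : ⟪ϖ, ϖv⟫ ≠ 0 := by
    obtain ⟨c, hc⟩ := hcoords ϖ
    have h1 : ⟪ϖ, ϖv⟫ = c α := by
      conv_lhs => rw [hc]
      rw [sum_inner, Finset.sum_eq_single α]
      · rw [real_inner_smul_left, hϖv α hα, if_pos rfl, mul_one]
      · intro b hb hbne
        rw [real_inner_smul_left, hϖv b hb, if_neg hbne, mul_zero]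
      · intro h; exact absurd hα h
    intro h0
    have hcα : c α = 0 := by rw [← h1]; exact h0
    have h2 : ⟪ϖ, ϖ⟫ = 0 := by
      nth_rewrite 2 [hc]
      rw [inner_sum]
      apply Finset.sum_eq_zero
      intro δ hδ
      rw [real_inner_smul_right]
      by_cases h : δ = α
      · rw [h, hcα, zero_mul]
      · rw [phi_simple_ne R Δ α ϖ hR hΔ hϖ hδ h, mul_zero]
    have hϖ0 : ϖ = 0 := inner_self_eq_zero.mp h2
    have := hϖ α hα
    rw [hϖ0, if_pos rfl, inner_zero_left] at this
    exact zero_ne_one this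
  -- the normalized coweight μ
  set μ : V := ⟪ϖ, ϖv⟫⁻¹ • ϖv with hμdef
  have hφμ : ⟪ϖ, μ⟫ = 1 := by
    rw [hμdef, real_inner_smul_right, inv_mul_cancel₀ hϖϖv]
  -- e' is orthogonal to the kernel of ⟪ϖ, ·⟫
  have hϖα : ⟪ϖ, α⟫ = ⟪α, α⟫ / 2 := phi_alpha R Δ α ϖ hR hΔ hα hϖ
  have hϖαne : ⟪ϖ, α⟫ ≠ 0 := by
    rw [hϖα]
    exact div_ne_zero (inner_self_ne_zero.mpr hα0) two_ne_zero
  have he'δ : ∀ δ ∈ Δ, δ ≠ α → ⟪e', δ⟫ = 0 := by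
    intro δ hδ hne
    have h := he'cδ δ hδ hne
    rw [phi_of_coroot] at h
    have h2q : (2:ℝ) / ⟪δ, δ⟫ ≠ 0 :=
      div_ne_zero two_ne_zero (inner_self_ne_zero.mpr (root_ne_zero R hR (hΔ.subset hδ)))
    exact (mul_eq_zero.mp h).resolve_left h2q
  have hD : ∀ x : V, ⟪ϖ, x⟫ = 0 → ⟪e', x⟫ = 0 := by
    intro x hx
    obtain ⟨c, hc⟩ := hcoords x
    have hφx : ⟪ϖ, x⟫ = c α * ⟪ϖ, α⟫ := by
      conv_lhs => rw [hc]
      rw [inner_sum, Finset.sum_eq_single α]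
      · rw [real_inner_smul_right]
      · intro b hb hbne
        rw [real_inner_smul_right, phi_simple_ne R Δ α ϖ hR hΔ hϖ hb hbne, mul_zero]
      · intro h; exact absurd hα h
    have hcα : c α = 0 := by
      rw [hφx] at hx
      exact (mul_eq_zero.mp hx).resolve_right hϖαne
    conv_lhs => rw [hc]
    rw [inner_sum]
    apply Finset.sum_eq_zero
    intro δ hδ
    rw [real_inner_smul_right]
    by_cases h : δ = α
    · rw [h, hcα, zero_mul]
    · rw [he'δ δ hδ h, mul_zero]
  -- the coroot m = w0⁻¹ (coroot α)
  set m : V := act l0.reverse (coroot α) with hmdef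
  set γm : V := act l0.reverse α with hγmdef
  have hmγ : m = coroot γm := by rw [hmdef, hγmdef, act_coroot]
  have hγmR : γm ∈ R := act_mem R hR hl0R' hαR
  have hφm : ⟪ϖ, m⟫ = 1 := by
    rw [hmγ, hγmdef, level_act R Δ α ϖ hR hΔ hϖ hl0J', hϖ α hα, if_pos rfl]
  have hγmRp : γm ∈ Rp := by
    apply level_pos_mem R Δ Rp α ϖ hR hΔ hRp hα hϖ hγmR
    rw [← hmγ, hφm]
    norm_num
  -- fix of ϖv and μ under J-words
  have hfixgen : ∀ t : List V, (∀ v ∈ t, v ∈ Δ ∧ v ≠ α) → act t ϖv = ϖv := by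
    intro t
    induction t with
    | nil => intro _; rfl
    | cons v t' ih =>
      intro ht
      have hv := ht v (by simp)
      have h0 : ⟪ϖv, coroot v⟫ = 0 := by
        rw [phi_of_coroot, real_inner_comm v ϖv, hϖv v hv.1, if_neg hv.2, mul_zero]
      rw [act_cons, ih (fun u hu => ht u (by simp [hu]))]
      rw [rf, h0, zero_smul, sub_zero]
  have hμfix : act l0.reverse μ = μ := by
    rw [hμdef, act_smul, hfixgen l0.reverse hl0J']
  -- the constancy identities
  have hKm : ⟪e', m⟫ = ⟪e', μ⟫ := by
    have h := hD (m - μ) (by rw [inner_sub_right, hφm, hφμ, sub_self])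
    rw [inner_sub_right] at h
    linarith
  have hphilam : ⟪ϖ, lam1v⟫ = 1 := by
    obtain ⟨clam, hclam, hclamα⟩ := hl1vcoef
    rw [hclam, phi_sum_coroot Δ α ϖ hα hϖ (fun δ => (clam δ : ℝ)), hclamα]
    norm_num
  have hKlam : ⟪e', lam1v⟫ = ⟪e', μ⟫ := by
    have h := hD (lam1v - μ) (by rw [inner_sub_right, hphilam, hφμ, sub_self])
    rw [inner_sub_right] at h
    linarith
  -- evaluations of e'
  have he'm : ⟪e', m⟫ = ⟪ρ, m⟫ + 1 := by
    rw [he'def, inner_add_left, hmdef, act_inner, hρ1 α hα]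
  have he'μ : ⟪e', μ⟫ = 2 * ⟪ρ, μ⟫ := by
    have hsecond : ⟪act l0.reverse ρ, μ⟫ = ⟪ρ, μ⟫ := by
      conv_lhs => rw [← hμfix]
      rw [act_inner]
    rw [he'def, inner_add_left, hsecond]
    ring
  have he'lam : ⟪e', lam1v⟫ = ⟪ρ, lam1v⟫ + ⟪ρ, act l0 lam1v⟫ := by
    rw [he'def, inner_add_left]
    have hadj := act_adjoint l0.reverse ρ lam1v
    rw [List.reverse_reverse] at hadj
    rw [hadj]
  -- ⟪ρ, act l0 lam1v⟫ ≥ 1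
  obtain ⟨gamlam, hgamlamR, hgamlamco⟩ := hl1vmem
  have hwlam : act l0 lam1v = coroot (act l0 gamlam) := by rw [← hgamlamco, act_coroot]
  have hlevlam : ⟪ϖ, coroot (act l0 gamlam)⟫ = 1 := by
    rw [level_act R Δ α ϖ hR hΔ hϖ hl0J, hgamlamco, hphilam]
  have hposlam : act l0 gamlam ∈ Rp := by
    apply level_pos_mem R Δ Rp α ϖ hR hΔ hRp hα hϖ (act_mem R hR hl0R hgamlamR)
    rw [hlevlam]; norm_num
  have hwlamge : 1 ≤ ⟪ρ, act l0 lam1v⟫ := by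
    obtain ⟨r, hr0, hr⟩ := coroot_exp R Δ Rp hR hΔ hRp hposlam
    have hrα : r α = 1 := by
      rw [← phi_sum_coroot Δ α ϖ hα hϖ r, ← hr, hlevlam]
    have hsum : ⟪ρ, coroot (act l0 gamlam)⟫ = ∑ δ ∈ Δ, r δ := by
      rw [hr, inner_sum]
      apply Finset.sum_congr rfl
      intro δ hδ
      rw [real_inner_smul_right, hρ1 δ hδ, mul_one]
    have hle := Finset.single_le_sum (fun d _ => hr0 d) hα
    rw [hwlam, hsum]
    rw [hrα] at hle
    exact hle
  -- ⟪ρ, m⟫ ≤ ⟪ρ, lam1v⟫ via integrality and the highest-coroot property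
  have hmle : ⟪ρ, m⟫ ≤ ⟪ρ, lam1v⟫ := by
    obtain ⟨cz, hcz⟩ := act_coroot_int R Δ α hR hΔ hα l0.reverse
      (fun v hv => (hl0J' v hv).1)
    obtain ⟨r, hr0, hrm⟩ := coroot_exp R Δ Rp hR hΔ hRp hγmRp
    have heq2 : ∑ δ ∈ Δ, (cz δ : ℝ) • coroot δ = ∑ δ ∈ Δ, r δ • coroot δ := by
      rw [← hcz, ← hrm, ← hmdef, hmγ]
    have hconv : ∀ (f : V → ℝ), ∑ δ ∈ Δ, f δ • coroot δ
        = ∑ δ ∈ Δ, (f δ * (2 / ⟪δ, δ⟫)) • δ := by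
      intro f
      apply Finset.sum_congr rfl
      intro δ _
      rw [coroot, smul_smul]
    have huniq := unique R Δ hΔ (fun δ => (cz δ : ℝ) * (2 / ⟪δ, δ⟫))
      (fun δ => r δ * (2 / ⟪δ, δ⟫)) (by rw [← hconv, ← hconv, heq2])
    have hceq : ∀ δ ∈ Δ, (cz δ : ℝ) = r δ := by
      intro δ hδ
      have h2q : (2:ℝ) / ⟪δ, δ⟫ ≠ 0 :=
        div_ne_zero two_ne_zero (inner_self_ne_zero.mpr (root_ne_zero R hR (hΔ.subset hδ)))
      exact mul_right_cancel₀ h2q (huniq δ hδ)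
    have hcnΔ : ∀ δ ∈ Δ, (((cz δ).toNat : ℕ) : ℝ) = (cz δ : ℝ) := by
      intro δ hδ
      have h0 : (0:ℝ) ≤ (cz δ : ℝ) := by rw [hceq δ hδ]; exact hr0 δ
      have h0' : 0 ≤ cz δ := by exact_mod_cast h0
      exact_mod_cast Int.toNat_of_nonneg h0'
    have hexp : coroot γm = ∑ δ ∈ Δ, (((cz δ).toNat : ℕ) : ℝ) • coroot δ := by
      rw [← hmγ, hmdef, hcz]
      apply Finset.sum_congr rfl
      intro δ hδ
      rw [hcnΔ δ hδ]
    have hrα : r α = 1 := by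
      rw [← phi_sum_coroot Δ α ϖ hα hϖ r, ← hrm, ← hmγ, hφm]
    have hcnα : (cz α).toNat = 1 := by
      have h1 : (((cz α).toNat : ℕ) : ℝ) = 1 := by
        rw [hcnΔ α hα, hceq α hα, hrα]
      exact_mod_cast h1
    obtain ⟨d, hd⟩ := hl1vhigh γm hγmR (fun δ => (cz δ).toNat) hexp hcnα
    have hsumd : ⟪ρ, lam1v - coroot γm⟫ = ∑ δ ∈ Δ, (d δ : ℝ) := by
      rw [hd, inner_sum]
      apply Finset.sum_congr rfl
      intro δ hδ
      rw [real_inner_smul_right, hρ1 δ hδ, mul_one]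
    have hdpos : (0:ℝ) ≤ ∑ δ ∈ Δ, (d δ : ℝ) :=
      Finset.sum_nonneg (fun δ _ => Nat.cast_nonneg _)
    rw [inner_sub_right] at hsumd
    rw [hmγ]
    linarith
  -- assemble
  have E1 : ⟪e', μ⟫ = ⟪ρ, m⟫ + 1 := by rw [← hKm, he'm]
  have E2 : ⟪e', μ⟫ = ⟪ρ, lam1v⟫ + ⟪ρ, act l0 lam1v⟫ := by rw [← hKlam, he'lam]
  have hmlam : ⟪ρ, m⟫ = ⟪ρ, lam1v⟫ := by linarith
  have hρμ : ⟪ρ, μ⟫ = ⟪ϖ, ϖv⟫⁻¹ * ⟪ρ, ϖv⟫ := by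
    rw [hμdef, real_inner_smul_right]
  have hfin : 2 * ⟪ρ, μ⟫ = ⟪ρ, lam1v⟫ + 1 := by
    rw [← he'μ, E1, hmlam]
  rw [← hfin, hρμ, div_eq_mul_inv]
  ring
end
end
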